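/- arXiv:1602.05843 — 8 statements merged into one kernel-verified Lean document; each statement's English description precedes it below -/
import Mathlib

section
/- Let R = k[x^a, x^{p_1}y^{q_1}, ..., x^{p_t}y^{q_t}, y^b] and let H be the subgroup of (ℤ/aℤ) ⊕ (ℤ/bℤ) generated by the classes of (p_1,q_1),...,(p_t,q_t). Then the multiplicity of the ideal (x^a, y^b) in R equals |H|. -/
/-!
Both `R` and the powers of `I = (xᵃ, yᵇ)` are spanned by monomials, so `dim R/Iⁿ` counts the
exponents in the monoid `M ⊆ ℕ²` generated by `(a, 0), (0, b), (pᵢ, qᵢ)` that are not in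
`M + n • {(a, 0), (0, b)}`. Sorting `M` by residues modulo `(a, b)` and dividing by `(a, b)`, each
class `h ∈ H` becomes a nonempty upper set `W ⊆ ℕ²` on which the two steps act as unit steps. The
layer `(W + n • E) \ (W + (n + 1) • E)`, `E = {(1, 0), (0, 1)}`, has at most one point in each
column and exactly one in each column `x₀ ≤ x ≤ x₀ + n` (`x₀` the leftmost column of `W`); to the
right of `x₀ + n` it is, once `n` is large, the previous layer shifted one column to the right.
So it has `n + 1 + C` points, and summing over the `|H|` classes gives `|H| (n + 1) + C`.
-/

open MvPolynomial Pointwise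

def axisSteps (a b : ℕ) : Set (ℕ × ℕ) := {(a, 0), (0, b)}

def layer (s W : Set (ℕ × ℕ)) (n : ℕ) : Set (ℕ × ℕ) :=
  (W + n • s) \ (W + (n + 1) • s)

theorem mem_nsmul_axisSteps_one_one {n : ℕ} {d : ℕ × ℕ} :
    d ∈ n • axisSteps 1 1 ↔ d.1 + d.2 = n := by
  induction n generalizing d with
  | zero => simp [Prod.ext_iff]
  | succ n ih =>
    simp only [succ_nsmul, Set.mem_add, ih]
    constructor
    · rintro ⟨e, he, s, rfl | rfl, rfl⟩ <;> simp only [Prod.fst_add, Prod.snd_add] <;> omega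
    · intro hd
      rcases Nat.eq_zero_or_pos d.1 with h | h
      · exact ⟨(d.1, d.2 - 1), by simp only; omega, (0, 1), Or.inr rfl,
          by ext <;> simp only [Prod.fst_add, Prod.snd_add] <;> omega⟩
      · exact ⟨(d.1 - 1, d.2), by simp only; omega, (1, 0), Or.inl rfl,
          by ext <;> simp only [Prod.fst_add, Prod.snd_add] <;> omega⟩

section UpperSet

variable {W : Set (ℕ × ℕ)} {x₀ y₀ X : ℕ}

theorem IsUpperSet.mem_add_nsmul_axisSteps_one_one (hW : IsUpperSet W) {n : ℕ} {p : ℕ × ℕ} :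
    p ∈ W + n • axisSteps 1 1 ↔ ∃ w ∈ W, w ≤ p ∧ w.1 + w.2 + n ≤ p.1 + p.2 := by
  simp only [Set.mem_add, mem_nsmul_axisSteps_one_one]
  constructor
  · rintro ⟨w, hw, d, hd, rfl⟩
    exact ⟨w, hw, le_self_add, by simp only [Prod.fst_add, Prod.snd_add]; omega⟩
  · rintro ⟨w, hw, hwp, hn⟩
    have := Prod.le_def.mp hwp
    obtain ⟨i, j, hi, hj, rfl⟩ : ∃ i j, w.1 + i ≤ p.1 ∧ w.2 + j ≤ p.2 ∧ i + j = n :=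
      ⟨min n (p.1 - w.1), n - min n (p.1 - w.1), by omega, by omega, by omega⟩
    refine ⟨(p.1 - i, p.2 - j), hW (Prod.mk_le_mk.mpr ⟨by omega, by omega⟩) hw, (i, j), rfl, ?_⟩
    ext <;> simp only [Prod.fst_add, Prod.snd_add] <;> omega

theorem IsUpperSet.add_nsmul_axisSteps_one_one_subset (hW : IsUpperSet W) (n : ℕ) :
    W + n • axisSteps 1 1 ⊆ W := fun _ hp ↦
  let ⟨_, hw, hwp, _⟩ := hW.mem_add_nsmul_axisSteps_one_one.mp hp
  hW hwp hw

theorem IsUpperSet.layer_subset (hW : IsUpperSet W) (n : ℕ) :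
    layer (axisSteps 1 1) W n ⊆ W \ (W + (n + 1) • axisSteps 1 1) :=
  fun _ hp ↦ ⟨hW.add_nsmul_axisSteps_one_one_subset n hp.1, hp.2⟩

theorem IsUpperSet.eq_of_mem_layer_of_fst_eq (hW : IsUpperSet W) {n : ℕ} {p q : ℕ × ℕ}
    (hp : p ∈ layer (axisSteps 1 1) W n) (hq : q ∈ layer (axisSteps 1 1) W n)
    (h : p.1 = q.1) : p = q := by
  wlog hpq : p.2 ≤ q.2 generalizing p q
  · exact (this hq hp h.symm (by omega)).symm
  refine Prod.ext h (hpq.antisymm (not_lt.mp fun hlt ↦ hq.2 ?_))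
  obtain ⟨w, hw, hwp, hn⟩ := hW.mem_add_nsmul_axisSteps_one_one.mp hp.1
  exact hW.mem_add_nsmul_axisSteps_one_one.mpr
    ⟨w, hw, hwp.trans (Prod.mk_le_mk.mpr ⟨h.le, hpq⟩), by omega⟩

theorem IsUpperSet.mem_add_nsmul_of_mem_add_succ_nsmul (hW : IsUpperSet W)
    (hx₀ : ∀ w ∈ W, x₀ ≤ w.1) {n x y : ℕ} (hx : x ≤ x₀ + n)
    (h : (x, y) ∈ W + (n + 1) • axisSteps 1 1) :
    0 < y ∧ (x, y - 1) ∈ W + n • axisSteps 1 1 := by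
  obtain ⟨w, hw, hwp, hn⟩ := hW.mem_add_nsmul_axisSteps_one_one.mp h
  have := hx₀ w hw
  have := Prod.mk_le_mk.mp hwp
  exact ⟨by omega, hW.mem_add_nsmul_axisSteps_one_one.mpr
    ⟨w, hw, Prod.mk_le_mk.mpr ⟨by omega, by omega⟩, by omega⟩⟩

theorem IsUpperSet.succ_mem_add_succ_nsmul_iff (hW : IsUpperSet W)
    (hX : ∀ w ∈ W, (X, w.2) ∈ W) {n x y : ℕ} (hx : X ≤ x) :
    (x + 1, y) ∈ W + (n + 1) • axisSteps 1 1 ↔ (x, y) ∈ W + n • axisSteps 1 1 := by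
  simp only [hW.mem_add_nsmul_axisSteps_one_one]
  constructor
  · rintro ⟨w, hw, hwp, hn⟩
    have := Prod.mk_le_mk.mp hwp
    rcases le_or_gt w.1 x with h | h
    · exact ⟨w, hw, Prod.mk_le_mk.mpr ⟨h, this.2⟩, by omega⟩
    · exact ⟨(x, w.2), hW (Prod.mk_le_mk.mpr ⟨hx, le_rfl⟩) (hX w hw),
        Prod.mk_le_mk.mpr ⟨le_rfl, this.2⟩, by simp only; omega⟩
  · rintro ⟨w, hw, hwp, hn⟩
    exact ⟨w, hw, hwp.trans (Prod.mk_le_mk.mpr ⟨Nat.le_succ x, le_rfl⟩), by omega⟩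

theorem IsUpperSet.succ_mem_layer_succ_iff (hW : IsUpperSet W)
    (hX : ∀ w ∈ W, (X, w.2) ∈ W) {n x y : ℕ} (hx : X ≤ x) :
    (x + 1, y) ∈ layer (axisSteps 1 1) W (n + 1) ↔ (x, y) ∈ layer (axisSteps 1 1) W n := by
  simp only [layer, Set.mem_sdiff, hW.succ_mem_add_succ_nsmul_iff hX hx]

theorem IsUpperSet.sdiff_add_nsmul_subset (hW : IsUpperSet W) (h₀ : (x₀, y₀) ∈ W)
    (hx₀ : ∀ w ∈ W, x₀ ≤ w.1) (hX : ∀ w ∈ W, (X, w.2) ∈ W) (n : ℕ) :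
    W \ (W + n • axisSteps 1 1) ⊆ Set.Iio (X + n) ×ˢ Set.Iio (y₀ + n) := by
  rintro ⟨x, y⟩ ⟨hp, hpn⟩
  rw [hW.mem_add_nsmul_axisSteps_one_one] at hpn
  have := hx₀ _ hp
  refine Set.mk_mem_prod (Set.mem_Iio.mpr (not_le.mp fun hx ↦ hpn ⟨(x - n, y), ?_, ?_, ?_⟩))
    (Set.mem_Iio.mpr (not_le.mp fun hy ↦ hpn ⟨_, h₀, ?_, ?_⟩))
  · exact hW (Prod.mk_le_mk.mpr ⟨by omega, le_rfl⟩) (hX _ hp)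
  · exact Prod.mk_le_mk.mpr ⟨Nat.sub_le x n, le_rfl⟩
  · simp only; omega
  · exact Prod.mk_le_mk.mpr ⟨this, by omega⟩
  · simp only at this ⊢; omega

theorem IsUpperSet.fst_image_layer_inter_Iic (hW : IsUpperSet W) (h₀ : (x₀, y₀) ∈ W)
    (hx₀ : ∀ w ∈ W, x₀ ≤ w.1) (n : ℕ) :
    Prod.fst '' layer (axisSteps 1 1) W n ∩ Set.Iic (x₀ + n) = Set.Icc x₀ (x₀ + n) := by
  classical
  ext x
  refine ⟨fun ⟨⟨p, hp, hpx⟩, hxn⟩ ↦ ⟨hpx ▸ hx₀ p (hW.layer_subset n hp).1, hxn⟩, fun hx ↦ ?_⟩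
  have hcol : ∃ y, (x, y) ∈ W + n • axisSteps 1 1 :=
    ⟨y₀ + n, hW.mem_add_nsmul_axisSteps_one_one.mpr
      ⟨_, h₀, Prod.mk_le_mk.mpr ⟨hx.1, by omega⟩, by have := hx.1; simp only; omega⟩⟩
  refine ⟨⟨(x, Nat.find hcol), ⟨Nat.find_spec hcol, fun h ↦ ?_⟩, rfl⟩, hx.2⟩
  obtain ⟨hpos, hmem⟩ := hW.mem_add_nsmul_of_mem_add_succ_nsmul hx₀ hx.2 h
  exact Nat.find_min hcol (by omega) hmem

theorem IsUpperSet.fst_image_layer_succ_sdiff_Iic (hW : IsUpperSet W)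
    (hX : ∀ w ∈ W, (X, w.2) ∈ W) {n : ℕ} (hn : X ≤ x₀ + n) :
    Prod.fst '' layer (axisSteps 1 1) W (n + 1) \ Set.Iic (x₀ + (n + 1)) =
      (· + 1) '' (Prod.fst '' layer (axisSteps 1 1) W n \ Set.Iic (x₀ + n)) := by
  ext x
  simp only [Set.mem_sdiff, Set.mem_image, Set.mem_Iic, not_le, Prod.exists, exists_and_right,
    exists_eq_right]
  constructor
  · rintro ⟨⟨y, hy⟩, hx⟩
    obtain ⟨x, rfl⟩ : ∃ x', x = x' + 1 := ⟨x - 1, by omega⟩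
    exact ⟨x, ⟨⟨y, (hW.succ_mem_layer_succ_iff hX (by omega)).mp hy⟩, by omega⟩, rfl⟩
  · rintro ⟨x, ⟨⟨y, hy⟩, hx⟩, rfl⟩
    exact ⟨⟨y, (hW.succ_mem_layer_succ_iff hX (by omega)).mpr hy⟩, by omega⟩

/-- `X` is the column of a point of least height. -/
theorem IsUpperSet.exists_staircase (hW : IsUpperSet W) (hne : W.Nonempty) :
    ∃ x₀ y₀ X, (x₀, y₀) ∈ W ∧ (∀ w ∈ W, x₀ ≤ w.1) ∧ ∀ w ∈ W, (X, w.2) ∈ W := by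
  classical
  obtain ⟨p, hp⟩ := hne
  have hx : ∃ x y, (x, y) ∈ W := ⟨p.1, p.2, hp⟩
  have hy : ∃ y x, (x, y) ∈ W := ⟨p.2, p.1, hp⟩
  obtain ⟨y₀, hy₀⟩ := Nat.find_spec hx
  obtain ⟨X, hX⟩ := Nat.find_spec hy
  exact ⟨_, y₀, X, hy₀, fun w hw ↦ Nat.find_min' hx ⟨w.2, hw⟩,
    fun w hw ↦ hW (Prod.mk_le_mk.mpr ⟨le_rfl, Nat.find_min' hy ⟨w.1, hw⟩⟩) hX⟩

theorem IsUpperSet.finite_sdiff_add_nsmul (hW : IsUpperSet W) (n : ℕ) :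
    (W \ (W + n • axisSteps 1 1)).Finite := by
  rcases W.eq_empty_or_nonempty with rfl | hne
  · simp
  obtain ⟨x₀, y₀, X, h₀, hx₀, hX⟩ := hW.exists_staircase hne
  exact ((Set.finite_Iio _).prod (Set.finite_Iio _)).subset
    (hW.sdiff_add_nsmul_subset h₀ hx₀ hX n)

theorem IsUpperSet.exists_ncard_layer_eq (hW : IsUpperSet W) (hne : W.Nonempty) :
    ∃ C N : ℕ, ∀ n ≥ N, (layer (axisSteps 1 1) W n).ncard = n + 1 + C := by
  obtain ⟨x₀, y₀, X, h₀, hx₀, hX⟩ := hW.exists_staircase hne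
  obtain ⟨Q, hQ⟩ : ∃ Q : ℕ → Set ℕ,
      ∀ n, Q n = Prod.fst '' layer (axisSteps 1 1) W n \ Set.Iic (x₀ + n) :=
    ⟨_, fun _ ↦ rfl⟩
  have hcard (n : ℕ) : (layer (axisSteps 1 1) W n).ncard = n + 1 + (Q n).ncard := by
    have hfin : (Prod.fst '' layer (axisSteps 1 1) W n).Finite :=
      ((hW.finite_sdiff_add_nsmul (n + 1)).subset (hW.layer_subset n)).image _
    rw [← Set.InjOn.ncard_image fun p hp q hq ↦ hW.eq_of_mem_layer_of_fst_eq hp hq,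
      ← Set.ncard_inter_add_ncard_sdiff_eq_ncard _ (Set.Iic (x₀ + n)) hfin,
      hW.fst_image_layer_inter_Iic h₀ hx₀, Set.ncard_Icc_nat, hQ]
    omega
  have hQ_succ (n : ℕ) (hn : X ≤ n) : (Q (n + 1)).ncard = (Q n).ncard := by
    rw [hQ, hQ, hW.fst_image_layer_succ_sdiff_Iic hX (by omega),
      Set.ncard_image_of_injective _ (add_left_injective 1)]
  refine ⟨(Q X).ncard, X, fun n hn ↦ ?_⟩
  rw [hcard]
  induction n, hn using Nat.le_induction with
  | base => rfl
  | succ n hn ih => rw [hQ_succ n hn]; omega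

end UpperSet

theorem add_image_inter_preimage_singleton {A B Γ : Type*} [AddCommMonoid A] [AddCommMonoid B]
    [AddMonoid Γ] (σ : A →+ B) (π : B →+ Γ) (hσ : ∀ d, π (σ d) = 0) (x₀ : B)
    (hx₀ : ∀ x, π x = π x₀ → ∃ w, x₀ + σ w = x) (M : Set B) (D : Set A) :
    (M + σ '' D) ∩ π ⁻¹' {π x₀} = (x₀ + σ ·) '' ((x₀ + σ ·) ⁻¹' M + D) := by
  ext x
  constructor
  · rintro ⟨⟨s, hs, _, ⟨d, hd, rfl⟩, rfl⟩, hx⟩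
    obtain ⟨w, rfl⟩ := hx₀ s (by simpa [hσ] using hx)
    exact ⟨w + d, ⟨w, hs, d, hd, rfl⟩, by simp only [map_add, add_assoc]⟩
  · rintro ⟨_, ⟨w, hw, d, hd, rfl⟩, rfl⟩
    exact ⟨⟨_, hw, _, ⟨d, hd, rfl⟩, by simp only [map_add, add_assoc]⟩, by simp [hσ]⟩

theorem Set.Finite.ncard_eq_sum_ncard_inter_preimage {α β : Type*} {S : Set α}
    (hS : S.Finite) (π : α → β) {F : Finset β} (hπ : Set.MapsTo π S F) :
    S.ncard = ∑ h ∈ F, (S ∩ π ⁻¹' {h}).ncard := by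
  classical
  rw [Set.ncard_eq_toFinset_card _ hS, Finset.card_eq_sum_card_fiberwise (f := π)
    fun x hx ↦ hπ (hS.mem_toFinset.mp hx)]
  refine Finset.sum_congr rfl fun h _ ↦ ?_
  rw [← Set.ncard_coe_finset]
  congr 1
  ext x
  simp

theorem Finset.exists_sum_eq_card_mul_add {ι : Type*} (F : Finset ι) (f : ι → ℕ → ℕ)
    (hf : ∀ i ∈ F, ∃ C N, ∀ n ≥ N, f i n = n + 1 + C) :
    ∃ C N, ∀ n ≥ N, ∑ i ∈ F, f i n = F.card * (n + 1) + C := by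
  classical
  induction F using Finset.induction_on with
  | empty => exact ⟨0, 0, by simp⟩
  | insert i F hi ih =>
    obtain ⟨C, N, hCN⟩ := hf i (mem_insert_self i F)
    obtain ⟨C', N', hCN'⟩ := ih fun j hj ↦ hf j (mem_insert_of_mem hj)
    refine ⟨C + C', max N N', fun n hn ↦ ?_⟩
    rw [sum_insert hi, card_insert_of_notMem hi, hCN n (le_of_max_le_left hn),
      hCN' n (le_of_max_le_right hn)]
    ring

section Residue

variable (a b : ℕ)

def residue : ℕ × ℕ →+ ZMod a × ZMod b :=
  (Nat.castAddMonoidHom _).prodMap (Nat.castAddMonoidHom _)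

def scale : ℕ × ℕ →+ ℕ × ℕ :=
  (AddMonoidHom.mulLeft a).prodMap (AddMonoidHom.mulLeft b)

/-- The point of `ℕ × ℕ` whose remainders and quotients on division by `(a, b)` are `h` and
`w`. -/
def ofResidue (h : ZMod a × ZMod b) (w : ℕ × ℕ) : ℕ × ℕ :=
  (h.1.val, h.2.val) + scale a b w

variable {a b}

theorem residue_scale (d : ℕ × ℕ) : residue a b (scale a b d) = 0 := by
  ext <;> simp [residue, scale]

theorem residue_val [NeZero a] [NeZero b] (h : ZMod a × ZMod b) :
    residue a b (h.1.val, h.2.val) = h := by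
  simp [residue]

theorem exists_ofResidue_eq {h : ZMod a × ZMod b} {x : ℕ × ℕ} (hx : residue a b x = h) :
    ∃ w, ofResidue a b h w = x := by
  subst hx
  refine ⟨(x.1 / a, x.2 / b), Prod.ext ?_ ?_⟩ <;>
    simp [ofResidue, residue, scale, ZMod.val_natCast, Nat.mod_add_div]

theorem ofResidue_injective [NeZero a] [NeZero b] (h : ZMod a × ZMod b) :
    Function.Injective (ofResidue a b h) := by
  intro w w' hw
  simpa [ofResidue, scale, Prod.ext_iff, NeZero.ne] using hw

theorem add_nsmul_axisSteps_inter_preimage_residue [NeZero a] [NeZero b] (M : Set (ℕ × ℕ))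
    (n : ℕ) (h : ZMod a × ZMod b) :
    (M + n • axisSteps a b) ∩ residue a b ⁻¹' {h} =
      ofResidue a b h '' (ofResidue a b h ⁻¹' M + n • axisSteps 1 1) := by
  have hsteps : n • axisSteps a b = scale a b '' (n • axisSteps 1 1) := by
    rw [Set.image_nsmul, axisSteps, axisSteps, Set.image_pair]
    simp [scale]
  conv_lhs => rw [hsteps, ← residue_val h]
  exact add_image_inter_preimage_singleton _ _ residue_scale _
    (fun x hx ↦ exists_ofResidue_eq (hx.trans (residue_val h))) M _

theorem sdiff_add_nsmul_inter_preimage_residue [NeZero a] [NeZero b] (M : Set (ℕ × ℕ))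
    (n : ℕ) (h : ZMod a × ZMod b) :
    (M \ (M + n • axisSteps a b)) ∩ residue a b ⁻¹' {h} =
      ofResidue a b h '' (ofResidue a b h ⁻¹' M \ (ofResidue a b h ⁻¹' M + n • axisSteps 1 1)) := by
  have hM := add_nsmul_axisSteps_inter_preimage_residue M 0 h
  simp only [zero_nsmul, add_zero] at hM
  rw [Set.inter_sdiff_distrib_right, hM, add_nsmul_axisSteps_inter_preimage_residue,
    Set.image_sdiff (ofResidue_injective h)]

theorem layer_inter_preimage_residue [NeZero a] [NeZero b] (M : Set (ℕ × ℕ)) (n : ℕ)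
    (h : ZMod a × ZMod b) :
    layer (axisSteps a b) M n ∩ residue a b ⁻¹' {h} =
      ofResidue a b h '' layer (axisSteps 1 1) (ofResidue a b h ⁻¹' M) n := by
  rw [layer, Set.inter_sdiff_distrib_right, add_nsmul_axisSteps_inter_preimage_residue,
    add_nsmul_axisSteps_inter_preimage_residue, layer, Set.image_sdiff (ofResidue_injective h)]

theorem residue_image_closure [NeZero a] [NeZero b] (S : Set (ℕ × ℕ)) :
    residue a b '' AddSubmonoid.closure (axisSteps a b ∪ S) =
      AddSubgroup.closure (residue a b '' S) := by
  have hsteps : residue a b '' axisSteps a b = {0} := by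
    ext; simp [axisSteps, residue, eq_comm, Prod.mk_zero_zero]
  rw [← AddSubmonoid.coe_map, AddMonoidHom.map_mclosure, Set.image_union, hsteps,
    Set.singleton_union, AddSubmonoid.closure_insert_zero,
    ← AddSubgroup.closure_toAddSubmonoid_of_finite]
  rfl

end Residue

namespace AddSubmonoid

variable {a b : ℕ} {M : AddSubmonoid (ℕ × ℕ)}

theorem isUpperSet_preimage_ofResidue (hM : axisSteps a b ⊆ M) (h : ZMod a × ZMod b) :
    IsUpperSet (ofResidue a b h ⁻¹' M) := by
  intro w w' hle hw
  obtain ⟨d, rfl⟩ := exists_add_of_le hle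
  have hd : scale a b d = d.1 • (a, 0) + d.2 • (0, b) := by ext <;> simp [scale, mul_comm]
  have : ofResidue a b h (w + d) = ofResidue a b h w + scale a b d := by
    simp only [ofResidue, map_add, add_assoc]
  simp only [Set.mem_preimage, this, hd]
  exact add_mem hw (add_mem (nsmul_mem (hM (Or.inl rfl)) _) (nsmul_mem (hM (Or.inr rfl)) _))

theorem add_nsmul_subset (hM : axisSteps a b ⊆ M) (n : ℕ) :
    (M : Set (ℕ × ℕ)) + n • axisSteps a b ⊆ M :=
  AddSubmonoid.add_subset subset_rfl (AddSubmonoid.nsmul_subset hM)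

theorem add_succ_nsmul_subset (hM : axisSteps a b ⊆ M) (n : ℕ) :
    (M : Set (ℕ × ℕ)) + (n + 1) • axisSteps a b ⊆ M + n • axisSteps a b := by
  rw [succ_nsmul', ← add_assoc]
  exact Set.add_subset_add_right (by simpa using add_nsmul_subset hM 1)

theorem finite_sdiff_add_nsmul [NeZero a] [NeZero b] (hM : axisSteps a b ⊆ M) (n : ℕ) :
    ((M : Set (ℕ × ℕ)) \ (M + n • axisSteps a b)).Finite := by
  refine (Set.finite_iUnion fun h ↦ ((isUpperSet_preimage_ofResidue hM h).finite_sdiff_add_nsmul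
    n).image (ofResidue a b h)).subset fun x hx ↦ Set.mem_iUnion.mpr ⟨residue a b x, ?_⟩
  rw [← sdiff_add_nsmul_inter_preimage_residue]
  exact ⟨hx, rfl⟩

theorem ncard_sdiff_add_succ_nsmul [NeZero a] [NeZero b] (hM : axisSteps a b ⊆ M) (n : ℕ) :
    ((M : Set (ℕ × ℕ)) \ (M + (n + 1) • axisSteps a b)).ncard =
      ((M : Set (ℕ × ℕ)) \ (M + n • axisSteps a b)).ncard +
        (layer (axisSteps a b) M n).ncard := by
  have hfin := finite_sdiff_add_nsmul hM (n + 1)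
  rw [← Set.sdiff_union_sdiff_cancel (add_nsmul_subset hM n) (add_succ_nsmul_subset hM n)]
    at hfin ⊢
  exact Set.ncard_union_eq (Set.disjoint_sdiff_left.mono_right Set.sdiff_subset)
    (hfin.subset Set.subset_union_left) (hfin.subset Set.subset_union_right)

theorem exists_ncard_layer_eq [NeZero a] [NeZero b] (hM : axisSteps a b ⊆ M) :
    ∃ C N : ℕ, ∀ n ≥ N,
      (layer (axisSteps a b) M n).ncard = (residue a b '' M).ncard * (n + 1) + C := by
  classical
  set F := (Set.toFinite (residue a b '' M)).toFinset
  have hfib (n : ℕ) : (layer (axisSteps a b) M n).ncard =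
      ∑ h ∈ F, (layer (axisSteps 1 1) (ofResidue a b h ⁻¹' M) n).ncard := by
    have hsub : layer (axisSteps a b) M n ⊆ (M : Set (ℕ × ℕ)) \ (M + (n + 1) • axisSteps a b) :=
      Set.sdiff_subset_sdiff_left (add_nsmul_subset hM n)
    rw [((finite_sdiff_add_nsmul hM (n + 1)).subset hsub).ncard_eq_sum_ncard_inter_preimage
      (residue a b) fun x hx ↦
        (Set.toFinite _).mem_toFinset.mpr (Set.mem_image_of_mem _ (hsub hx).1)]
    refine Finset.sum_congr rfl fun h _ ↦ ?_
    rw [layer_inter_preimage_residue, Set.ncard_image_of_injective _ (ofResidue_injective h)]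
  obtain ⟨C, N, hCN⟩ := F.exists_sum_eq_card_mul_add _ fun h hh ↦
    (isUpperSet_preimage_ofResidue hM h).exists_ncard_layer_eq (by
      obtain ⟨x, hx, rfl⟩ := (Set.toFinite _).mem_toFinset.mp hh
      obtain ⟨w, hw⟩ := exists_ofResidue_eq (rfl : residue a b x = _)
      exact ⟨w, by rwa [Set.mem_preimage, hw]⟩)
  exact ⟨C, N, fun n hn ↦ by rw [hfib, hCN n hn, Set.ncard_eq_toFinset_card _ (Set.toFinite _)]⟩

end AddSubmonoid

theorem Subalgebra.map_restrictScalars_span {k A : Type*} [CommRing k] [CommRing A] [Algebra k A]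
    (R : Subalgebra k A) (t : Set R) :
    ((Ideal.span t).restrictScalars k).map R.val.toLinearMap =
      Subalgebra.toSubmodule R * Submodule.span k (R.val '' t) := by
  rw [Ideal.span, ← Submodule.span_smul_of_span_eq_top (R := k) (s := Set.univ) Submodule.span_univ,
    Submodule.map_span, ← Submodule.span_eq (Subalgebra.toSubmodule R), Submodule.span_mul_span]
  congr 1
  ext x
  constructor
  · rintro ⟨_, ⟨r, -, s, hs, rfl⟩, rfl⟩
    exact ⟨r, r.2, s, ⟨s, hs, rfl⟩, rfl⟩
  · rintro ⟨r, hr, _, ⟨s, hs, rfl⟩, rfl⟩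
    exact ⟨_, ⟨⟨r, hr⟩, trivial, s, hs, rfl⟩, rfl⟩

section MonomialSubalgebra

variable {σ k : Type*} [Field k]

theorem toSubmodule_adjoin_monomial (G : Set (σ →₀ ℕ)) :
    Subalgebra.toSubmodule (Algebra.adjoin k ((monomial · (1 : k)) '' G)) =
      restrictSupport k (AddSubmonoid.closure G) := by
  rw [Algebra.adjoin_eq_span, restrictSupport_eq_span]
  have hG : (monomial · (1 : k)) '' G = monomialOneHom k σ '' (Multiplicative.toAdd ⁻¹' G) := rfl
  rw [hG, ← MonoidHom.map_mclosure, ← AddSubmonoid.toSubmonoid_closure]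
  rfl

theorem map_pow_span_monomial {R : Subalgebra k (MvPolynomial σ k)} {S D : Set (σ →₀ ℕ)}
    (hR : Subalgebra.toSubmodule R = restrictSupport k S) {t : Set R}
    (ht : R.val '' t = (monomial · (1 : k)) '' D) (n : ℕ) :
    ((Ideal.span t ^ n).restrictScalars k).map R.val.toLinearMap =
      restrictSupport k (S + n • D) := by
  rw [Submodule.span_pow, R.map_restrictScalars_span, Set.image_pow, ht, ← Submodule.span_pow,
    ← restrictSupport_eq_span, hR, restrictSupport_add, restrictSupport_nsmul]

theorem finrank_quotient_eq_ncard (R : Subalgebra k (MvPolynomial σ k)) (J : Ideal R)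
    {S T : Set (σ →₀ ℕ)} (hR : Subalgebra.toSubmodule R = restrictSupport k S)
    (hJ : (J.restrictScalars k).map R.val.toLinearMap = restrictSupport k T) :
    Module.finrank k (R ⧸ J) = (S \ T).ncard := by
  classical
  let θ : R →ₗ[k] ↥(S \ T) →₀ k := Finsupp.lsubtypeDomain (S \ T) ∘ₗ
    (AddMonoidAlgebra.coeffLinearEquiv k).toLinearMap ∘ₗ R.val.toLinearMap
  have hθ (x : R) (d : ↥(S \ T)) : θ x d = coeff (d : σ →₀ ℕ) (x : MvPolynomial σ k) := rfl
  have hker : LinearMap.ker θ = J.restrictScalars k := by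
    ext x
    have hS : ↑(x : MvPolynomial σ k).support ⊆ S :=
      (mem_restrictSupport_iff k).mp (hR ▸ x.2 : (x : MvPolynomial σ k) ∈ restrictSupport k S)
    have hJx : x ∈ J ↔ ↑(x : MvPolynomial σ k).support ⊆ T := by
      rw [← mem_restrictSupport_iff k, ← hJ]
      exact ⟨fun hx ↦ Submodule.mem_map_of_mem (p := J.restrictScalars k) hx,
        fun ⟨y, hy, hyx⟩ ↦ Subtype.ext hyx ▸ hy⟩
    rw [LinearMap.mem_ker, Submodule.restrictScalars_mem, hJx, Finsupp.ext_iff]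
    simp only [hθ, Finsupp.coe_zero, Pi.zero_apply, Subtype.forall, Set.mem_sdiff]
    exact ⟨fun h d hd ↦ by_contra fun hT ↦ mem_support_iff.mp hd (h d ⟨hS hd, hT⟩),
      fun h d ⟨_, hT⟩ ↦ by_contra fun hd ↦ hT (h (mem_support_iff.mpr hd))⟩
  have hsurj : Function.Surjective θ := by
    intro f
    obtain ⟨g, hg⟩ := (Finsupp.restrictSupportEquiv (S \ T) k).surjective f
    have hgR : (AddMonoidAlgebra.ofCoeff g.1 : MvPolynomial σ k) ∈ Subalgebra.toSubmodule R :=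
      hR ▸ (mem_restrictSupport_iff k).mpr (g.2.trans Set.sdiff_subset)
    exact ⟨⟨_, hgR⟩, hg⟩
  rw [← (Submodule.Quotient.restrictScalarsEquiv k J).finrank_eq, ← hker,
    (θ.quotKerEquivOfSurjective hsurj).finrank_eq, Module.finrank, rank_finsupp_self,
    Cardinal.toNat_lift]
  exact Nat.card_coe_set_eq _

theorem finrank_quotient_pow_span_monomial {R : Subalgebra k (MvPolynomial σ k)}
    {S D : Set (σ →₀ ℕ)} (hR : Subalgebra.toSubmodule R = restrictSupport k S) {t : Set R}
    (ht : R.val '' t = (monomial · (1 : k)) '' D) (n : ℕ) :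
    Module.finrank k (R ⧸ Ideal.span t ^ n) = (S \ (S + n • D)).ncard :=
  finrank_quotient_eq_ncard R _ hR (map_pow_span_monomial hR ht n)

end MonomialSubalgebra

noncomputable def pairExponent : ℕ × ℕ →+ (Fin 2 →₀ ℕ) :=
  (Finsupp.singleAddHom 0).coprod (Finsupp.singleAddHom 1)

theorem pairExponent_injective : Function.Injective pairExponent := fun d d' h ↦
  Prod.ext (by simpa [pairExponent] using DFunLike.congr_fun h 0)
    (by simpa [pairExponent] using DFunLike.congr_fun h 1)

theorem monomial_pairExponent {k : Type*} [Field k] (d : ℕ × ℕ) :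
    monomial (pairExponent d) (1 : k) = X 0 ^ d.1 * X 1 ^ d.2 := by
  simp [pairExponent, X_pow_eq_monomial, monomial_mul]

/-- For `R = k[xᵃ, x^{p₁}y^{q₁}, …, x^{p_t}y^{q_t}, yᵇ]`, the Hilbert–Samuel multiplicity of
the parameter ideal `(xᵃ, yᵇ)` equals `|H|`, where `H ≤ (ℤ/a) ⊕ (ℤ/b)` is generated by the
classes of the `(pᵢ, qᵢ)`.  The multiplicity is expressed via the associated graded Hilbert
function: eventually `λ(R/I^{n+1}) - λ(R/I^n) = |H|·(n+1) + C` for some constant `C`. -/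
theorem stmt_3 (k : Type*) [Field k] (a b t : ℕ) (ha : 0 < a) (hb : 0 < b)
    (p q : Fin t → ℕ)
    (R : Subalgebra k (MvPolynomial (Fin 2) k))
    (hR : R = Algebra.adjoin k
      (({X 0 ^ a, X 1 ^ b} ∪ Set.range fun i => X 0 ^ (p i) * X 1 ^ (q i)) :
        Set (MvPolynomial (Fin 2) k)))
    (xa yb : R)
    (hxa : (xa : MvPolynomial (Fin 2) k) = X 0 ^ a)
    (hyb : (yb : MvPolynomial (Fin 2) k) = X 1 ^ b)
    (H : AddSubgroup (ZMod a × ZMod b))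
    (hH : H = AddSubgroup.closure (Set.range fun i => ((p i : ZMod a), (q i : ZMod b)))) :
    ∃ (C : ℤ) (N : ℕ), ∀ n ≥ N,
      (Module.finrank k (R ⧸ (Ideal.span {xa, yb} : Ideal R) ^ (n + 1)) : ℤ)
        = (Module.finrank k (R ⧸ (Ideal.span {xa, yb} : Ideal R) ^ n) : ℤ)
          + (Nat.card H : ℤ) * ((n : ℤ) + 1) + C := by
  have : NeZero a := ⟨ha.ne'⟩
  have : NeZero b := ⟨hb.ne'⟩
  set M := AddSubmonoid.closure (axisSteps a b ∪ Set.range fun i ↦ (p i, q i))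
  have hM : axisSteps a b ⊆ M := Set.subset_union_left.trans AddSubmonoid.subset_closure
  have hR' : Subalgebra.toSubmodule R = restrictSupport k (pairExponent '' M) := by
    rw [← AddSubmonoid.coe_map, AddMonoidHom.map_mclosure, ← toSubmodule_adjoin_monomial, hR,
      ← Set.image_comp]
    congr 2
    simp [axisSteps, Set.image_union, Set.image_pair, ← Set.range_comp, Function.comp_def,
      monomial_pairExponent]
  have hdim (n : ℕ) : Module.finrank k (R ⧸ (Ideal.span {xa, yb} : Ideal R) ^ n) =
      ((M : Set (ℕ × ℕ)) \ (M + n • axisSteps a b)).ncard := by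
    rw [finrank_quotient_pow_span_monomial hR' (D := pairExponent '' axisSteps a b)
        (by simp [axisSteps, Set.image_pair, hxa, hyb, monomial_pairExponent]),
      ← Set.image_nsmul, ← Set.image_add, ← Set.image_sdiff pairExponent_injective,
      Set.ncard_image_of_injective _ pairExponent_injective]
  have hH' : residue a b '' M = H := by
    rw [residue_image_closure, hH, ← Set.range_comp]
    rfl
  obtain ⟨C, N, hCN⟩ := AddSubmonoid.exists_ncard_layer_eq hM
  refine ⟨C, N, fun n hn ↦ ?_⟩
  rw [hdim, hdim, AddSubmonoid.ncard_sdiff_add_succ_nsmul hM, hCN n hn, hH', ← SetLike.coe_sort_coe,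
    Nat.card_coe_set_eq]
  push_cast
  ring
end

section
/- Let R = k[x^a, x^{p_1}y^{q_1}, ..., x^{p_t}y^{q_t}, y^b], a 2-dimensional local (after localizing at the homogeneous maximal ideal) ring in which (x^a,y^b) is a system of parameters. Then R is Cohen–Macaulay if and only if λ(R/(x^a,y^b)) = |H|, where H is the subgroup of (ℤ/aℤ) ⊕ (ℤ/bℤ) generated by the (p_i,q_i). -/
/-!
`R` is the semigroup ring `k[S]` of the submonoid `S ⊆ ℕ²` generated by `(a, 0)`, `(0, b)` and the
`(pᵢ, qᵢ)`: its monomials form a `k`-basis indexed by `S`, and multiplication by `xᵃ`, `yᵇ` shifts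
this basis. Hence `(xᵃ, yᵇ)` is spanned by the monomials in `((a, 0) + S) ∪ ((0, b) + S)`, the
length `λ(R/(xᵃ, yᵇ))` is the size of the Apéry set `Ap` of the remaining elements of `S`, and
`xᵃ, yᵇ` is a regular sequence iff `s + (0, b) ∈ (a, 0) + S` forces `s ∈ (a, 0) + S`.

Reduction modulo `(a, b)` maps `S` onto `H`, and every element of `S` is an element of `Ap` plus
multiples of `(a, 0)` and `(0, b)`, so it maps `Ap` onto `H`. Two elements of `S` have the same
residue iff they become equal after adding such multiples, and the regularity condition is exactly
what makes this reduction injective on `Ap`.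
-/

open MvPolynomial

section Apery

def aperySet {M : Type*} [Add M] (u v : M) : Set M := (Set.range (u + ·) ∪ Set.range (v + ·))ᶜ

/-- In the monoid algebra `k[M]` this says that `v` is a nonzerodivisor modulo `u`. -/
def IsRegularMod {M : Type*} [Add M] (u v : M) : Prop :=
  ∀ m, v + m ∈ Set.range (u + ·) → m ∈ Set.range (u + ·)

variable {M : Type*} [AddCommMonoid M] {u v : M}

theorem mem_aperySet {m : M} :
    m ∈ aperySet u v ↔ m ∉ Set.range (u + ·) ∧ m ∉ Set.range (v + ·) := by
  simp only [aperySet, Set.mem_compl_iff, Set.mem_union, not_or]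

theorem zero_mem_aperySet (size : M →+ ℕ) (hu : 0 < size u) (hv : 0 < size v) :
    0 ∈ aperySet u v :=
  mem_aperySet.2 ⟨fun ⟨w, h⟩ => by simpa [hu.ne'] using congrArg size h,
    fun ⟨w, h⟩ => by simpa [hv.ne'] using congrArg size h⟩

theorem exists_mem_aperySet_add_nsmul (size : M →+ ℕ) (hu : 0 < size u) (hv : 0 < size v)
    (m : M) : ∃ c ∈ aperySet u v, ∃ i j : ℕ, m = c + i • u + j • v := by
  induction hm : size m using Nat.strong_induction_on generalizing m with
  | _ n ih =>
  by_cases hc : m ∈ aperySet u v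
  · exact ⟨m, hc, 0, 0, by simp⟩
  simp only [mem_aperySet, not_and_or, not_not, Set.mem_range] at hc
  rcases hc with ⟨w, rfl⟩ | ⟨w, rfl⟩
  · obtain ⟨c, hc, i, j, rfl⟩ := ih (size w) (by simp [← hm, hu]) w rfl
    exact ⟨c, hc, i + 1, j, by rw [succ_nsmul]; abel⟩
  · obtain ⟨c, hc, i, j, rfl⟩ := ih (size w) (by simp [← hm, hv]) w rfl
    exact ⟨c, hc, i, j + 1, by rw [succ_nsmul]; abel⟩

theorem IsRegularMod.mem_range_of_nsmul_add_mem (hreg : IsRegularMod u v) (n : ℕ) {m : M}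
    (h : n • v + m ∈ Set.range (u + ·)) : m ∈ Set.range (u + ·) := by
  induction n generalizing m with
  | zero => simpa using h
  | succ n ih => exact hreg m (ih (by rwa [succ_nsmul, add_assoc] at h))

theorem eq_of_add_nsmul_eq_add_nsmul [IsCancelAdd M] {w c c' : M} (hc : c ∉ Set.range (w + ·))
    (hc' : c' ∉ Set.range (w + ·)) {j j' : ℕ} (h : c + j • w = c' + j' • w) : c = c' := by
  wlog hj : j ≤ j' generalizing c c' j j'
  · exact (this hc' hc h.symm (le_of_not_ge hj)).symm
  obtain ⟨d, rfl⟩ := Nat.exists_eq_add_of_le hj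
  rw [add_nsmul, ← add_assoc, add_right_comm, add_left_inj] at h
  cases d with
  | zero => simpa using h
  | succ d => exact absurd ⟨c' + d • w, show w + (c' + d • w) = c by rw [h, succ_nsmul]; abel⟩ hc

theorem IsRegularMod.eq_of_mem_aperySet [IsCancelAdd M] (hreg : IsRegularMod u v) {c c' : M}
    (hc : c ∈ aperySet u v) (hc' : c' ∈ aperySet u v) {i j i' j' : ℕ}
    (h : c + i • u + j • v = c' + i' • u + j' • v) : c = c' := by
  wlog hi : i ≤ i' generalizing c c' i j i' j'
  · exact (this hc' hc h.symm (le_of_not_ge hi)).symm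
  obtain ⟨d, rfl⟩ := Nat.exists_eq_add_of_le hi
  have h' : c + j • v = c' + d • u + j' • v := by
    refine add_right_cancel (b := i • u) ?_
    calc c + j • v + i • u = c + i • u + j • v := by abel
      _ = c' + (i + d) • u + j' • v := h
      _ = c' + d • u + j' • v + i • u := by rw [add_nsmul]; abel
  cases d with
  | zero =>
    rw [zero_nsmul, add_zero] at h'
    exact eq_of_add_nsmul_eq_add_nsmul (mem_aperySet.1 hc).2 (mem_aperySet.1 hc').2 h'
  | succ d =>
    refine absurd (hreg.mem_range_of_nsmul_add_mem j (m := c) ⟨c' + d • u + j' • v, ?_⟩)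
      (mem_aperySet.1 hc).1
    show u + (c' + d • u + j' • v) = j • v + c
    rw [add_comm (j • v), h', succ_nsmul]
    abel

theorem isRegularMod_of_injOn {G : Type*} [AddCommMonoid G] (π : M →+ G) (hπu : π u = 0)
    (hπv : π v = 0) (size : M →+ ℕ) (hsu : 0 < size u) (hsv : 0 < size v)
    (φ : M →+ ℕ) (hφu : 0 < φ u) (hφv : φ v = 0) (hinj : Set.InjOn π (aperySet u v)) :
    IsRegularMod u v := by
  rintro m ⟨w, hw⟩
  by_contra hm
  obtain ⟨c, hc, i, j, rfl⟩ := exists_mem_aperySet_add_nsmul size hsu hsv m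
  obtain ⟨c', hc', i', j', rfl⟩ := exists_mem_aperySet_add_nsmul size hsu hsv w
  cases i with
  | succ i => exact hm ⟨c + i • u + j • v, show u + _ = _ by rw [succ_nsmul]; abel⟩
  | zero =>
    obtain rfl : c = c' := hinj hc hc' (by simpa [hπu, hπv] using congrArg π hw.symm)
    have hφ := congrArg φ hw
    simp only [map_add, map_nsmul, hφv, smul_eq_mul] at hφ
    omega

theorem Set.injOn_iff_nat_card_eq {α β : Type*} {f : α → β} {s : Set α}
    (hs : (f '' s).Finite) : Set.InjOn f s ↔ Nat.card s = Nat.card (f '' s) := by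
  refine ⟨fun h => (Nat.card_image_of_injOn h).symm, fun h => ?_⟩
  obtain hfin | hinf := s.finite_or_infinite
  · exact (Set.ncard_image_iff hfin).1 h.symm
  · rw [Nat.card_coe_set_eq, Nat.card_coe_set_eq, hinf.ncard, eq_comm,
      Set.ncard_eq_zero hs, Set.image_eq_empty] at h
    exact absurd h hinf.nonempty.ne_empty

/-- `hπ` says that the fibres of `π` are the classes modulo `u` and `v`; `size` makes the descent
to the Apéry set terminate, and `φ` keeps multiples of `u` apart from multiples of `v`. -/
theorem isRegularMod_iff_card_aperySet_eq [IsCancelAdd M] {G : Type*} [AddCommMonoid G]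
    [Finite G] (π : M →+ G) (hπu : π u = 0) (hπv : π v = 0)
    (hπ : ∀ m m', π m = π m' → ∃ i j i' j' : ℕ, m + i • u + j • v = m' + i' • u + j' • v)
    (size : M →+ ℕ) (hsu : 0 < size u) (hsv : 0 < size v)
    (φ : M →+ ℕ) (hφu : 0 < φ u) (hφv : φ v = 0) :
    IsRegularMod u v ↔ Nat.card (aperySet u v) = Nat.card (Set.range π) := by
  have himage : π '' aperySet u v = Set.range π := by
    refine (Set.image_subset_range _ _).antisymm ?_
    rintro _ ⟨m, rfl⟩
    obtain ⟨c, hc, i, j, rfl⟩ := exists_mem_aperySet_add_nsmul size hsu hsv m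
    exact ⟨c, hc, by simp [hπu, hπv]⟩
  rw [← himage, ← Set.injOn_iff_nat_card_eq (Set.toFinite _)]
  refine ⟨fun hreg c hc c' hc' h => ?_, isRegularMod_of_injOn π hπu hπv size hsu hsv φ hφu hφv⟩
  obtain ⟨i, j, i', j', h⟩ := hπ c c' h
  exact hreg.eq_of_mem_aperySet hc hc' h

end Apery

namespace Module.Basis

open Submodule Pointwise

theorem finrank_quotient_span_image {k V ι : Type*} [Ring k] [StrongRankCondition k]
    [AddCommGroup V] [Module k V] (b : Basis ι k V) (s : Set ι) :
    finrank k (V ⧸ span k (b '' s)) = Nat.card ↥sᶜ := by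
  have hcompl : IsCompl (span k (b '' s)) (span k (b '' sᶜ)) := by
    refine ⟨disjoint_def.2 fun x hs hsc => ?_, codisjoint_iff.2 ?_⟩
    · rw [b.mem_span_image] at hs hsc
      simpa using Set.subset_inter hs hsc
    · rw [← span_union, ← Set.image_union, Set.union_compl_self, Set.image_univ, b.span_eq]
  have hli : LinearIndependent k (b ∘ Subtype.val : ↥sᶜ → V) :=
    b.linearIndependent.comp _ Subtype.val_injective
  rw [(quotientEquivOfIsCompl _ _ hcompl).finrank_eq, Set.image_eq_range]
  exact finrank_eq_nat_card_basis (Basis.span hli)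

variable {k A M : Type*} [CommRing k] [CommRing A] [Algebra k A] [AddCommMonoid M]

theorem repr_mul_of_map_add (b : Basis M k A) (hb : ∀ m n, b (m + n) = b m * b n)
    (u : M) (z : A) : b.repr (b u * z) = (b.repr z).mapDomain (u + ·) := by
  have h : b.repr.toLinearMap ∘ₗ LinearMap.mulLeft k (b u) =
      Finsupp.lmapDomain k k (u + ·) ∘ₗ b.repr.toLinearMap :=
    b.ext fun m => by simp [← hb]
  exact LinearMap.congr_fun h z

theorem isSMulRegular_of_map_add [IsLeftCancelAdd M] (b : Basis M k A)
    (hb : ∀ m n, b (m + n) = b m * b n) (u : M) : IsSMulRegular A (b u) := fun z w h =>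
  b.repr.injective <| Finsupp.mapDomain_injective (add_right_injective u) <| by
    rw [← b.repr_mul_of_map_add hb, ← b.repr_mul_of_map_add hb]
    exact congrArg b.repr h

theorem range_mulLeft_of_map_add (b : Basis M k A) (hb : ∀ m n, b (m + n) = b m * b n) (u : M) :
    LinearMap.range (LinearMap.mulLeft k (b u)) = span k (b '' Set.range (u + ·)) := by
  rw [LinearMap.range_eq_map, ← b.span_eq, map_span, ← Set.range_comp, ← Set.range_comp]
  simp only [Function.comp_def, LinearMap.mulLeft_apply, hb]

theorem mem_smul_top_iff_of_map_add (b : Basis M k A) (hb : ∀ m n, b (m + n) = b m * b n)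
    (u : M) (x : A) :
    x ∈ (b u • ⊤ : Submodule A A) ↔ x ∈ span k (b '' Set.range (u + ·)) := by
  simp [← b.range_mulLeft_of_map_add hb, mem_smul_pointwise_iff_exists]

theorem restrictScalars_span_pair_of_map_add (b : Basis M k A)
    (hb : ∀ m n, b (m + n) = b m * b n) (u v : M) :
    (Ideal.span {b u, b v}).restrictScalars k =
      span k (b '' (Set.range (u + ·) ∪ Set.range (v + ·))) := by
  have hsingle (w : M) :
      (Ideal.span {b w}).restrictScalars k = span k (b '' Set.range (w + ·)) := by
    ext x
    simp [← b.range_mulLeft_of_map_add hb, Ideal.mem_span_singleton', mul_comm]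
  rw [Ideal.span_insert, restrictScalars_sup, hsingle, hsingle, Set.image_union, span_union]

theorem isSMulRegular_quotSMulTop_iff_of_map_add [Nontrivial k] [IsLeftCancelAdd M]
    (b : Basis M k A) (hb : ∀ m n, b (m + n) = b m * b n) (u v : M) :
    IsSMulRegular (QuotSMulTop (b u) A) (b v) ↔ IsRegularMod u v := by
  classical
  simp only [isSMulRegular_quotient_iff_mem_of_smul_mem, smul_eq_mul,
    b.mem_smul_top_iff_of_map_add hb, b.mem_span_image, b.repr_mul_of_map_add hb,
    Finsupp.mapDomain_support_of_injective (add_right_injective v), Finset.coe_image,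
    Set.image_subset_iff]
  refine ⟨fun h m hm => ?_, fun h x hx m hm => h m (hx hm)⟩
  simpa using h (b m) (by simpa using hm)

theorem isRegular_pair_iff_of_map_add [Nontrivial k] [IsLeftCancelAdd M] (b : Basis M k A)
    (hb : ∀ m n, b (m + n) = b m * b n) {u v : M} (h0 : 0 ∈ aperySet u v) :
    RingTheory.Sequence.IsRegular A [b u, b v] ↔ IsRegularMod u v := by
  have hne : (⊤ : Submodule A A) ≠ Ideal.ofList [b u, b v] • ⊤ := by
    rw [Ideal.ofList_cons, Ideal.ofList_cons, Ideal.ofList_nil, sup_bot_eq, ← Ideal.span_insert,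
      smul_eq_mul, Ideal.mul_top]
    intro htop
    have h0mem : b 0 ∈ (Ideal.span {b u, b v}).restrictScalars k := by
      rw [restrictScalars_mem, ← htop]
      trivial
    rw [b.restrictScalars_span_pair_of_map_add hb, b.mem_span_image, b.repr_self,
      Finsupp.support_single _ one_ne_zero] at h0mem
    exact h0 (by simpa using h0mem)
  rw [RingTheory.Sequence.isRegular_iff, RingTheory.Sequence.isWeaklyRegular_cons_iff,
    RingTheory.Sequence.isWeaklyRegular_singleton_iff,
    b.isSMulRegular_quotSMulTop_iff_of_map_add hb]
  exact ⟨fun h => h.1.2, fun h => ⟨⟨b.isSMulRegular_of_map_add hb u, h⟩, hne⟩⟩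

theorem finrank_quotient_span_pair_of_map_add [StrongRankCondition k] (b : Basis M k A)
    (hb : ∀ m n, b (m + n) = b m * b n) (u v : M) :
    finrank k (A ⧸ Ideal.span {b u, b v}) = Nat.card (aperySet u v) := by
  rw [← (Quotient.restrictScalarsEquiv k _).finrank_eq, b.restrictScalars_span_pair_of_map_add hb,
    b.finrank_quotient_span_image]
  rfl

end Module.Basis

open Module Submodule Pointwise in
theorem Algebra.exists_basis_adjoin_image {k A M : Type*} [CommRing k] [CommRing A] [Algebra k A]
    [AddCommMonoid M] (f : M → A) (hf : ∀ m n, f (m + n) = f m * f n) (hf0 : f 0 = 1)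
    (hli : LinearIndependent k f) (G : Set M) :
    ∃ b : Basis (AddSubmonoid.closure G) k (adjoin k (f '' G)),
      (∀ s, (b s : A) = f s) ∧ ∀ s t, b (s + t) = b s * b t := by
  set T := AddSubmonoid.closure G
  have hmul : f '' T * f '' T ⊆ f '' T := by
    rintro _ ⟨_, ⟨s, hs, rfl⟩, _, ⟨t, ht, rfl⟩, rfl⟩
    exact ⟨s + t, add_mem hs ht, hf s t⟩
  -- `span k (f '' T)` is closed under multiplication, so it is a subalgebra containing `f '' G`.
  let W : Subalgebra k A := (span k (f '' T)).toSubalgebra (subset_span ⟨0, zero_mem T, hf0⟩)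
    fun x y hx hy => span_mono hmul (span_mul_span k (f '' T) (f '' T) ▸ mul_mem_mul hx hy)
  have hspan : span k (Set.range (f ∘ Subtype.val : T → A)) =
      Subalgebra.toSubmodule (adjoin k (f '' G)) := by
    rw [Set.range_comp, Subtype.range_coe]
    refine le_antisymm (span_le.2 ?_) (adjoin_le (S := W) ?_)
    · rintro _ ⟨s, hs, rfl⟩
      change f s ∈ adjoin k (f '' G)
      induction hs using AddSubmonoid.closure_induction with
      | mem s hs => exact subset_adjoin ⟨s, hs, rfl⟩
      | zero => simp [hf0]
      | add s t _ _ hs ht => simpa [hf] using mul_mem hs ht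
    · exact (Set.image_mono AddSubmonoid.subset_closure).trans subset_span
  let b := (Basis.span (hli.comp _ Subtype.val_injective)).map
    ((LinearEquiv.ofEq _ _ hspan).trans (Subalgebra.toSubmoduleEquiv _))
  have hb (s : T) : (b s : A) = f s := by
    simp only [b, Basis.map_apply, Basis.span_apply, Function.comp_apply, LinearEquiv.trans_apply]
    rfl
  exact ⟨b, hb, fun s t => Subtype.ext (by simp [hb, hf])⟩

theorem MvPolynomial.linearIndependent_X_zero_pow_mul_X_one_pow (k : Type*) [CommSemiring k] :
    LinearIndependent k fun s : ℕ × ℕ => (X 0 ^ s.1 * X 1 ^ s.2 : MvPolynomial (Fin 2) k) := by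
  have he : Function.Injective fun s : ℕ × ℕ =>
      Finsupp.single (0 : Fin 2) s.1 + Finsupp.single 1 s.2 := by
    intro s t h
    have h0 := DFunLike.congr_fun h 0
    have h1 := DFunLike.congr_fun h 1
    simp only [Finsupp.coe_add, Pi.add_apply, Finsupp.single_eq_same,
      Finsupp.single_eq_of_ne zero_ne_one, Finsupp.single_eq_of_ne one_ne_zero, add_zero,
      zero_add] at h0 h1
    exact Prod.ext h0 h1
  have hmon : (fun s : ℕ × ℕ => (X 0 ^ s.1 * X 1 ^ s.2 : MvPolynomial (Fin 2) k)) =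
      basisMonomials (Fin 2) k ∘ fun s => Finsupp.single 0 s.1 + Finsupp.single 1 s.2 := by
    funext s
    simp [X_pow_eq_monomial, monomial_mul]
  rw [hmon]
  exact (basisMonomials (Fin 2) k).linearIndependent.comp _ he

def reduceMod (a b : ℕ) : ℕ × ℕ →+ ZMod a × ZMod b :=
  (Nat.castAddMonoidHom (ZMod a)).prodMap (Nat.castAddMonoidHom (ZMod b))

@[simp]
theorem reduceMod_apply (a b : ℕ) (x : ℕ × ℕ) :
    reduceMod a b x = ((x.1 : ZMod a), (x.2 : ZMod b)) :=
  rfl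

theorem Nat.exists_add_mul_eq_add_mul_of_cast_eq {n x y : ℕ} (h : (x : ZMod n) = y) :
    ∃ i j : ℕ, x + i * n = y + j * n := by
  rw [ZMod.natCast_eq_natCast_iff'] at h
  refine ⟨y / n, x / n, ?_⟩
  have hx := Nat.div_add_mod' x n
  have hy := Nat.div_add_mod' y n
  omega

theorem exists_add_nsmul_eq_of_reduceMod_eq {a b : ℕ} {x y : ℕ × ℕ}
    (h : reduceMod a b x = reduceMod a b y) :
    ∃ i j i' j' : ℕ, x + i • (a, 0) + j • (0, b) = y + i' • (a, 0) + j' • (0, b) := by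
  simp only [reduceMod_apply, Prod.mk.injEq] at h
  obtain ⟨i, i', hi⟩ := Nat.exists_add_mul_eq_add_mul_of_cast_eq h.1
  obtain ⟨j, j', hj⟩ := Nat.exists_add_mul_eq_add_mul_of_cast_eq h.2
  exact ⟨i, j, i', j', Prod.ext (by simpa using hi) (by simpa using hj)⟩

theorem range_reduceMod_comp_closure_subtype {ι : Type*} {a b : ℕ} [NeZero a] [NeZero b]
    (p q : ι → ℕ) :
    Set.range ((reduceMod a b).comp
      (AddSubmonoid.closure ({(a, 0), (0, b)} ∪ Set.range fun i => (p i, q i))).subtype) =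
      AddSubgroup.closure (Set.range fun i => ((p i : ZMod a), (q i : ZMod b))) := by
  rw [← AddMonoidHom.coe_mrange, AddMonoidHom.mrange_comp, AddSubmonoid.mrange_subtype,
    AddMonoidHom.map_mclosure, ← AddSubgroup.closure_toAddSubmonoid_of_finite,
    Set.image_union, Set.image_pair, ← Set.range_comp]
  simp only [reduceMod_apply, ZMod.natCast_self, Nat.cast_zero, Set.pair_eq_singleton,
    Set.singleton_union, Function.comp_def, Prod.mk_zero_zero, AddSubgroup.closure_insert_zero,
    AddSubgroup.coe_toAddSubmonoid]

section SubmonoidOfNatProd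

variable {a b : ℕ} {S : AddSubmonoid (ℕ × ℕ)}

theorem zero_mem_aperySet_of_pos (ha : 0 < a) (hb : 0 < b) (hSa : (a, 0) ∈ S)
    (hSb : (0, b) ∈ S) : 0 ∈ aperySet (⟨(a, 0), hSa⟩ : S) ⟨(0, b), hSb⟩ :=
  zero_mem_aperySet ((AddMonoidHom.fst ℕ ℕ + AddMonoidHom.snd ℕ ℕ).comp S.subtype)
    (by simpa using ha) (by simpa using hb)

theorem isRegularMod_iff_card_aperySet_eq_card_range_reduceMod [NeZero a] [NeZero b]
    (hSa : (a, 0) ∈ S) (hSb : (0, b) ∈ S) :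
    IsRegularMod (⟨(a, 0), hSa⟩ : S) ⟨(0, b), hSb⟩ ↔
      Nat.card (aperySet (⟨(a, 0), hSa⟩ : S) ⟨(0, b), hSb⟩) =
        Nat.card (Set.range ((reduceMod a b).comp S.subtype)) := by
  have ha := Nat.pos_of_neZero a
  have hb := Nat.pos_of_neZero b
  refine isRegularMod_iff_card_aperySet_eq _ (by simp) (by simp) (fun m m' h => ?_)
    ((AddMonoidHom.fst ℕ ℕ + AddMonoidHom.snd ℕ ℕ).comp S.subtype) (by simpa using ha)
    (by simpa using hb) ((AddMonoidHom.fst ℕ ℕ).comp S.subtype) (by simpa using ha) (by simp)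
  obtain ⟨i, j, i', j', h⟩ := exists_add_nsmul_eq_of_reduceMod_eq h
  exact ⟨i, j, i', j', Subtype.ext (by simpa only [AddSubmonoid.coe_add,
    AddSubmonoidClass.coe_nsmul, AddSubmonoid.coe_subtype] using h)⟩

end SubmonoidOfNatProd

/-- Let `R = k[xᵃ, x^{p₁}y^{q₁}, …, x^{p_t}y^{q_t}, yᵇ]`, a 2-dimensional ring in which
`(xᵃ, yᵇ)` is a system of parameters.  Then `R` is Cohen–Macaulay (equivalently, `xᵃ, yᵇ`
is a regular sequence on `R`) if and only if `λ(R/(xᵃ,yᵇ)) = |H|`, where `H` is the subgroup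
of `(ℤ/a) ⊕ (ℤ/b)` generated by the `(pᵢ, qᵢ)`. -/
theorem stmt_5 (k : Type*) [Field k] (a b t : ℕ) (ha : 0 < a) (hb : 0 < b)
    (p q : Fin t → ℕ)
    (R : Subalgebra k (MvPolynomial (Fin 2) k))
    (hR : R = Algebra.adjoin k
      (({X 0 ^ a, X 1 ^ b} ∪ Set.range fun i => X 0 ^ (p i) * X 1 ^ (q i)) :
        Set (MvPolynomial (Fin 2) k)))
    (xa yb : R)
    (hxa : (xa : MvPolynomial (Fin 2) k) = X 0 ^ a)
    (hyb : (yb : MvPolynomial (Fin 2) k) = X 1 ^ b)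
    (H : AddSubgroup (ZMod a × ZMod b))
    (hH : H = AddSubgroup.closure (Set.range fun i => ((p i : ZMod a), (q i : ZMod b)))) :
    RingTheory.Sequence.IsRegular R [xa, yb] ↔
      Module.finrank k (R ⧸ (Ideal.span {xa, yb} : Ideal R)) = Nat.card H := by
  have : NeZero a := ⟨ha.ne'⟩
  have : NeZero b := ⟨hb.ne'⟩
  set G : Set (ℕ × ℕ) := {(a, 0), (0, b)} ∪ Set.range fun i => (p i, q i)
  have hSa : (a, 0) ∈ AddSubmonoid.closure G := AddSubmonoid.subset_closure (by simp [G])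
  have hSb : (0, b) ∈ AddSubmonoid.closure G := AddSubmonoid.subset_closure (by simp [G])
  set mono : ℕ × ℕ → MvPolynomial (Fin 2) k := fun s => X 0 ^ s.1 * X 1 ^ s.2
  obtain rfl : R = Algebra.adjoin k (mono '' G) := by
    rw [hR, Set.image_union, Set.image_pair, ← Set.range_comp]
    simp [mono, Function.comp_def]
  obtain ⟨B, hB, hB_add⟩ := Algebra.exists_basis_adjoin_image mono
    (fun s t => by simp only [mono, Prod.fst_add, Prod.snd_add, pow_add]; ring) (by simp [mono])
    (linearIndependent_X_zero_pow_mul_X_one_pow k) G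
  obtain rfl : xa = B ⟨(a, 0), hSa⟩ := Subtype.ext (by simp [hB, hxa, mono])
  obtain rfl : yb = B ⟨(0, b), hSb⟩ := Subtype.ext (by simp [hB, hyb, mono])
  rw [B.isRegular_pair_iff_of_map_add hB_add (zero_mem_aperySet_of_pos ha hb hSa hSb),
    B.finrank_quotient_span_pair_of_map_add hB_add,
    isRegularMod_iff_card_aperySet_eq_card_range_reduceMod, range_reduceMod_comp_closure_subtype,
    hH]
  rfl
end

section
/- With notation as in the four-generator setup: a_3 > a_2 and b_2 > b_3. -/
set_option maxHeartbeats 2000000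


/-- In the four-generator setup (with `d, n > 0`, `e, f, ℓ, m ≥ 0`, `(e,ℓ) ≠ (0,0)` and the
minimal relations defining `a₂, b₂, g₂, h₂` and `a₃, b₃, g₃, h₃`): `a₃ > a₂` and `b₂ > b₃`. -/
theorem stmt_6
    (d n e f l m : ℕ) (hd : 0 < d) (hn : 0 < n) (hel : (e, l) ≠ (0, 0))
    (a2 b2 a3 b3 : ℕ) (g2 h2 g3 h3 : ℤ)
    -- `b₂` is the smallest positive integer admitting a relation
    -- `-a₂(e,ℓ) + b₂(f,m) = (g₂,h₂) ∈ dℤ ⊕ nℤ` with `a₂ < ord((e,ℓ))` and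
    -- `g₂ > 0` or `h₂ > 0` or `(g₂,h₂) = (0,0)`.
    (hb2pos : 0 < b2)
    (ha2ord : a2 < addOrderOf (((e : ZMod d), (l : ZMod n)) : ZMod d × ZMod n))
    (hrel2x : -(a2 : ℤ) * e + b2 * f = g2) (hrel2y : -(a2 : ℤ) * l + b2 * m = h2)
    (hdvd2 : (d : ℤ) ∣ g2 ∧ (n : ℤ) ∣ h2)
    (hsign2 : 0 < g2 ∨ 0 < h2 ∨ (g2 = 0 ∧ h2 = 0))
    (hmin2 : ∀ b' : ℕ, 0 < b' →
      (∃ (a' : ℕ) (g h : ℤ), a' < addOrderOf (((e : ZMod d), (l : ZMod n)) : ZMod d × ZMod n) ∧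
        -(a' : ℤ) * e + b' * f = g ∧ -(a' : ℤ) * l + b' * m = h ∧
        (d : ℤ) ∣ g ∧ (n : ℤ) ∣ h ∧ (0 < g ∨ 0 < h ∨ (g = 0 ∧ h = 0))) → b2 ≤ b')
    -- `a₃` is the smallest positive integer admitting a relation
    -- `a₃(e,ℓ) - b₃(f,m) = (g₃,h₃) ∈ dℤ ⊕ nℤ` with `b₃ < ord((f,m))`,
    -- `g₃, h₃ ≥ 0` not both zero.
    (ha3pos : 0 < a3)
    (hb3ord : b3 < addOrderOf (((f : ZMod d), (m : ZMod n)) : ZMod d × ZMod n))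
    (hrel3x : (a3 : ℤ) * e - b3 * f = g3) (hrel3y : (a3 : ℤ) * l - b3 * m = h3)
    (hdvd3 : (d : ℤ) ∣ g3 ∧ (n : ℤ) ∣ h3)
    (hsign3 : 0 ≤ g3 ∧ 0 ≤ h3 ∧ ¬(g3 = 0 ∧ h3 = 0))
    (hmin3 : ∀ a' : ℕ, 0 < a' →
      (∃ (b' : ℕ) (g h : ℤ), b' < addOrderOf (((f : ZMod d), (m : ZMod n)) : ZMod d × ZMod n) ∧
        (a' : ℤ) * e - b' * f = g ∧ (a' : ℤ) * l - b' * m = h ∧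
        (d : ℤ) ∣ g ∧ (n : ℤ) ∣ h ∧ 0 ≤ g ∧ 0 ≤ h ∧ ¬(g = 0 ∧ h = 0)) → a3 ≤ a')
    :
    a2 < a3 ∧ b3 < b2 := by
  haveI : NeZero d := ⟨hd.ne'⟩
  haveI : NeZero n := ⟨hn.ne'⟩
  set oE := addOrderOf (((e : ZMod d), (l : ZMod n)) : ZMod d × ZMod n) with hoEdef
  set oF := addOrderOf (((f : ZMod d), (m : ZMod n)) : ZMod d × ZMod n) with hoFdef
  have hoE : 0 < oE := addOrderOf_pos _
  have hoF : 0 < oF := addOrderOf_pos _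
  have smulE : ∀ x : ℕ, x • (((e : ZMod d), (l : ZMod n)) : ZMod d × ZMod n)
      = (((x*e : ℕ) : ZMod d), ((x*l : ℕ) : ZMod n)) := by
    intro x
    rw [Prod.smul_mk]
    congr 1 <;> · push_cast [nsmul_eq_mul]; ring
  have smulF : ∀ x : ℕ, x • (((f : ZMod d), (m : ZMod n)) : ZMod d × ZMod n)
      = (((x*f : ℕ) : ZMod d), ((x*m : ℕ) : ZMod n)) := by
    intro x
    rw [Prod.smul_mk]
    congr 1 <;> · push_cast [nsmul_eq_mul]; ring
  have keyE : ∀ x : ℕ, d ∣ x * e → n ∣ x * l → oE ∣ x := by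
    intro x h1 h2
    apply addOrderOf_dvd_of_nsmul_eq_zero
    rw [smulE x, Prod.mk_eq_zero]
    exact ⟨(ZMod.natCast_eq_zero_iff _ _).mpr h1,
      (ZMod.natCast_eq_zero_iff _ _).mpr h2⟩
  have keyF : ∀ x : ℕ, d ∣ x * f → n ∣ x * m → oF ∣ x := by
    intro x h1 h2
    apply addOrderOf_dvd_of_nsmul_eq_zero
    rw [smulF x, Prod.mk_eq_zero]
    exact ⟨(ZMod.natCast_eq_zero_iff _ _).mpr h1,
      (ZMod.natCast_eq_zero_iff _ _).mpr h2⟩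
  have keyE' : d ∣ oE * e ∧ n ∣ oE * l := by
    have h0 := addOrderOf_nsmul_eq_zero (((e : ZMod d), (l : ZMod n)) : ZMod d × ZMod n)
    rw [smulE oE, Prod.mk_eq_zero] at h0
    exact ⟨(ZMod.natCast_eq_zero_iff _ _).mp h0.1,
      (ZMod.natCast_eq_zero_iff _ _).mp h0.2⟩
  -- a3 ≤ oE
  have ha3le : a3 ≤ oE := by
    apply hmin3 oE hoE
    refine ⟨0, ((oE * e : ℕ) : ℤ), ((oE * l : ℕ) : ℤ), hoF, by push_cast; ring,
      by push_cast; ring, Int.natCast_dvd_natCast.mpr keyE'.1,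
      Int.natCast_dvd_natCast.mpr keyE'.2, by positivity, by positivity, ?_⟩
    have hel' : 0 < e ∨ 0 < l := by
      by_contra hc
      push_neg at hc
      exact hel (by simp [Nat.le_zero.mp hc.1, Nat.le_zero.mp hc.2])
    rcases hel' with he | hl
    · intro hc
      have : (0:ℤ) < ((oE * e : ℕ) : ℤ) := by positivity
      omega
    · intro hc
      have : (0:ℤ) < ((oE * l : ℕ) : ℤ) := by positivity
      omega
  -- positive coordinate of v3 + k·v2 for k ≥ 1
  have hposcoord : ∀ k : ℤ, 1 ≤ k → 0 < g3 + k * g2 ∨ 0 < h3 + k * h2 := by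
    intro k hk
    obtain ⟨hg3, hh3, hne3⟩ := hsign3
    rcases hsign2 with hg2 | hh2 | ⟨hz1, hz2⟩
    · left
      have h1 : 1 * g2 ≤ k * g2 := mul_le_mul_of_nonneg_right hk hg2.le
      linarith
    · right
      have h1 : 1 * h2 ≤ k * h2 := mul_le_mul_of_nonneg_right hk hh2.le
      linarith
    · rw [hz1, hz2]
      simp only [mul_zero, add_zero]
      omega
  -- Goal A : a2 < a3
  have goalA : a2 < a3 := by
    by_contra hA
    push_neg at hA   -- a3 ≤ a2
    have hA' : (a3:ℤ) ≤ a2 := by exact_mod_cast hA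
    have hpos1 := hposcoord 1 le_rfl
    simp only [one_mul] at hpos1
    rcases le_or_gt b2 b3 with hB | hB
    · -- case IV : componentwise positivity contradiction
      have hB' : (b2:ℤ) ≤ b3 := by exact_mod_cast hB
      have e1 : ((a2:ℤ) - a3) * e + ((b3:ℤ) - b2) * f = -(g2 + g3) := by
        linear_combination -hrel2x - hrel3x
      have e2 : ((a2:ℤ) - a3) * l + ((b3:ℤ) - b2) * m = -(h2 + h3) := by
        linear_combination -hrel2y - hrel3y
      have p1 : (0:ℤ) ≤ ((a2:ℤ) - a3) * e := mul_nonneg (by linarith) (by positivity)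
      have p2 : (0:ℤ) ≤ ((b3:ℤ) - b2) * f := mul_nonneg (by linarith) (by positivity)
      have p3 : (0:ℤ) ≤ ((a2:ℤ) - a3) * l := mul_nonneg (by linarith) (by positivity)
      have p4 : (0:ℤ) ≤ ((b3:ℤ) - b2) * m := mul_nonneg (by linarith) (by positivity)
      rcases hpos1 with h | h <;> linarith
    · -- case II : contradict minimality of b2, unless b3 = 0
      have hex : ∃ (a' : ℕ) (g h : ℤ), a' < oE ∧
          -(a' : ℤ) * e + (b2 - b3 : ℕ) * f = g ∧ -(a' : ℤ) * l + (b2 - b3 : ℕ) * m = h ∧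
          (d : ℤ) ∣ g ∧ (n : ℤ) ∣ h ∧ (0 < g ∨ 0 < h ∨ (g = 0 ∧ h = 0)) := by
        refine ⟨a2 - a3, g2 + g3, h2 + h3, by omega, ?_, ?_,
          dvd_add hdvd2.1 hdvd3.1, dvd_add hdvd2.2 hdvd3.2, by omega⟩
        · push_cast [Nat.cast_sub hA, Nat.cast_sub hB.le]
          linear_combination hrel2x + hrel3x
        · push_cast [Nat.cast_sub hA, Nat.cast_sub hB.le]
          linear_combination hrel2y + hrel3y
      have hle := hmin2 (b2 - b3) (by omega) hex
      have hb30 : b3 = 0 := by omega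
      subst hb30
      have hge : g3 = (a3:ℤ) * e := by push_cast at hrel3x; linarith
      have hhe : h3 = (a3:ℤ) * l := by push_cast at hrel3y; linarith
      have hd3 : d ∣ a3 * e := by
        have := hdvd3.1
        rw [hge] at this
        exact_mod_cast Int.natCast_dvd_natCast.mp (by push_cast; exact this)
      have hn3 : n ∣ a3 * l := by
        have := hdvd3.2
        rw [hhe] at this
        exact_mod_cast Int.natCast_dvd_natCast.mp (by push_cast; exact this)
      have := keyE a3 hd3 hn3
      have : oE ≤ a3 := Nat.le_of_dvd ha3pos this
      omega
  -- Goal B : b3 < b2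
  have goalB : b3 < b2 := by
    by_contra hB
    push_neg at hB    -- b2 ≤ b3
    -- a3 < oE
    have ha3lt : a3 < oE := by
      rcases lt_or_eq_of_le ha3le with h | h
      · exact h
      · exfalso
        -- oE ∣ a3, so b3·F ∈ L, so oF ∣ b3, so b3 = 0, contradicting b2 ≤ b3, 0 < b2
        have hdE : (d:ℤ) ∣ (a3:ℤ) * e := by
          have := keyE'.1
          rw [← h] at this
          exact_mod_cast Int.natCast_dvd_natCast.mpr this
        have hnE : (n:ℤ) ∣ (a3:ℤ) * l := by
          have := keyE'.2
          rw [← h] at this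
          exact_mod_cast Int.natCast_dvd_natCast.mpr this
        have hdF : (d:ℤ) ∣ (b3:ℤ) * f := by
          have : (b3:ℤ) * f = (a3:ℤ) * e - g3 := by linarith
          rw [this]
          exact dvd_sub hdE hdvd3.1
        have hnF : (n:ℤ) ∣ (b3:ℤ) * m := by
          have : (b3:ℤ) * m = (a3:ℤ) * l - h3 := by linarith
          rw [this]
          exact dvd_sub hnE hdvd3.2
        have := keyF b3 (by exact_mod_cast hdF) (by exact_mod_cast hnF)
        have hb30 : b3 = 0 := by
          rcases Nat.eq_zero_or_pos b3 with h0 | h0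
          · exact h0
          · exact absurd (Nat.le_of_dvd h0 this) (by omega)
        omega
    -- descent step
    have main : ∀ k : ℕ, 0 < k → k * b2 ≤ b3 → (k + 1) * b2 ≤ b3 := by
      intro k hk hkb
      have hk1 : (1:ℤ) ≤ k := by exact_mod_cast hk
      have hkb' : (k:ℤ) * b2 ≤ b3 := by exact_mod_cast hkb
      set A : ℤ := (a3:ℤ) - k * a2 with hAdef
      set B : ℤ := (b3:ℤ) - k * b2 with hBdef
      set G : ℤ := g3 + k * g2 with hGdef
      set H : ℤ := h3 + k * h2 with hHdef
      have eG : A * e - B * f = G := by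
        rw [hAdef, hBdef, hGdef]; linear_combination hrel3x + (k:ℤ) * hrel2x
      have eH : A * l - B * m = H := by
        rw [hAdef, hBdef, hHdef]; linear_combination hrel3y + (k:ℤ) * hrel2y
      have hBnn : 0 ≤ B := by rw [hBdef]; linarith
      have hBle : B ≤ (b3:ℤ) := by
        have : (0:ℤ) ≤ k * b2 := mul_nonneg (by linarith) (Int.natCast_nonneg b2)
        rw [hBdef]; linarith
      have hGH : 0 < G ∨ 0 < H := hposcoord k hk1
      have hAle : A ≤ (a3:ℤ) := by
        have : (0:ℤ) ≤ k * a2 := mul_nonneg (by linarith) (Int.natCast_nonneg a2)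
        rw [hAdef]; linarith
      have hApos : 0 < A := by
        by_contra hc
        push_neg at hc
        have q1 : A * e ≤ 0 := mul_nonpos_of_nonpos_of_nonneg hc (by positivity)
        have q2 : 0 ≤ B * f := mul_nonneg hBnn (by positivity)
        have q3 : A * l ≤ 0 := mul_nonpos_of_nonpos_of_nonneg hc (by positivity)
        have q4 : 0 ≤ B * m := mul_nonneg hBnn (by positivity)
        rcases hGH with h | h <;> linarith
      have hdG : (d:ℤ) ∣ G := dvd_add hdvd3.1 (Dvd.dvd.mul_left hdvd2.1 k)
      have hnH : (n:ℤ) ∣ H := dvd_add hdvd3.2 (Dvd.dvd.mul_left hdvd2.2 k)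
      by_cases hP : 0 ≤ G ∧ 0 ≤ H
      · exfalso
        have hm : a3 ≤ A.toNat := by
          apply hmin3 A.toNat (by omega)
          refine ⟨B.toNat, G, H, by omega, ?_, ?_, hdG, hnH, hP.1, hP.2, by omega⟩
          · rw [Int.toNat_of_nonneg hApos.le, Int.toNat_of_nonneg hBnn]; exact eG
          · rw [Int.toNat_of_nonneg hApos.le, Int.toNat_of_nonneg hBnn]; exact eH
        -- a3 ≤ A.toNat = a3 - k*a2 ⇒ a2 = 0
        have ha2z : a2 = 0 := by
          have : (a3:ℤ) ≤ A := by
            rw [← Int.toNat_of_nonneg hApos.le]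
            exact_mod_cast hm
          rw [hAdef] at this
          have h2' : (a2:ℤ) ≤ (k:ℤ) * a2 := le_mul_of_one_le_left (Int.natCast_nonneg a2) hk1
          have : (a2:ℤ) ≤ 0 := by linarith
          omega
        -- then b2·F ∈ L ⇒ oF ∣ b2 ⇒ oF ≤ b2 ≤ k·b2 ≤ b3 < oF
        have hg2e : g2 = (b2:ℤ) * f := by rw [ha2z] at hrel2x; push_cast at hrel2x; linarith
        have hh2e : h2 = (b2:ℤ) * m := by rw [ha2z] at hrel2y; push_cast at hrel2y; linarith
        have hd2 : d ∣ b2 * f := by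
          have := hdvd2.1; rw [hg2e] at this
          exact_mod_cast Int.natCast_dvd_natCast.mp (by push_cast; exact this)
        have hn2 : n ∣ b2 * m := by
          have := hdvd2.2; rw [hh2e] at this
          exact_mod_cast Int.natCast_dvd_natCast.mp (by push_cast; exact this)
        have hdvF := keyF b2 hd2 hn2
        have h1 : oF ≤ b2 := Nat.le_of_dvd hb2pos hdvF
        have h2' : b2 ≤ k * b2 := Nat.le_mul_of_pos_left b2 hk
        omega
      · have hN : G < 0 ∨ H < 0 := by
          rcases not_and_or.mp hP with h | h
          · left; omega
          · right; omega
        have hBpos : 0 < B := by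
          rcases lt_or_eq_of_le hBnn with h | h
          · exact h
          · exfalso
            rw [← h] at eG eH
            have q1 : 0 ≤ A * e := mul_nonneg hApos.le (by positivity)
            have q2 : 0 ≤ A * l := mul_nonneg hApos.le (by positivity)
            rcases hN with hc | hc <;> linarith
        have hm : b2 ≤ B.toNat := by
          apply hmin2 B.toNat (by omega)
          refine ⟨A.toNat, -G, -H, by omega, ?_, ?_,
            (dvd_neg).mpr hdG, (dvd_neg).mpr hnH, by omega⟩
          · rw [Int.toNat_of_nonneg hApos.le, Int.toNat_of_nonneg hBnn]; linarith
          · rw [Int.toNat_of_nonneg hApos.le, Int.toNat_of_nonneg hBnn]; linarith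
        -- b2 ≤ B.toNat = b3 - k*b2
        have : (b2:ℤ) ≤ B := by
          rw [← Int.toNat_of_nonneg hBnn]
          exact_mod_cast hm
        rw [hBdef] at this
        have hfin : ((k:ℤ) + 1) * b2 ≤ b3 := by linarith
        have : (((k + 1) * b2 : ℕ) : ℤ) ≤ (b3 : ℤ) := by push_cast; linarith
        exact_mod_cast this
    have all : ∀ k : ℕ, 0 < k → k * b2 ≤ b3 := by
      intro k hk
      induction k with
      | zero => omega
      | succ k ih =>
        rcases Nat.eq_zero_or_pos k with h0 | h0
        · subst h0; simpa using hB
        · exact main k h0 (ih h0)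
    have hfin := all (b3 + 1) (by omega)
    have : b3 + 1 ≤ (b3 + 1) * b2 := Nat.le_mul_of_pos_right _ hb2pos
    omega
  exact ⟨goalA, goalB⟩
end

section
/- With notation as in the four-generator setup: if u,v ∈ ℤ satisfy a_3 > u ≥ 0, b_2 > v ≥ 0 and (u,v) ≠ (0,0), then u(e,ℓ) - v(f,m) ∉ dℤ ⊕ nℤ. -/
private lemma ord_dvd_aux (d n e l : ℕ) [NeZero d] [NeZero n] :
    (d : ℤ) ∣ (addOrderOf (((e : ZMod d), (l : ZMod n)) : ZMod d × ZMod n) : ℤ) * e ∧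
    (n : ℤ) ∣ (addOrderOf (((e : ZMod d), (l : ZMod n)) : ZMod d × ZMod n) : ℤ) * l := by
  have h := addOrderOf_nsmul_eq_zero (((e : ZMod d), (l : ZMod n)) : ZMod d × ZMod n)
  rw [Prod.ext_iff] at h
  obtain ⟨h1, h2⟩ := h
  simp only [Prod.fst, Prod.snd, nsmul_eq_mul, Prod.mk_zero_zero] at h1 h2
  constructor
  · have : ((addOrderOf (((e : ZMod d), (l : ZMod n)) : ZMod d × ZMod n) * e : ℕ) : ZMod d) = 0 := by
      push_cast; exact h1
    exact_mod_cast (ZMod.natCast_eq_zero_iff _ _).mp this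
  · have : ((addOrderOf (((e : ZMod d), (l : ZMod n)) : ZMod d × ZMod n) * l : ℕ) : ZMod n) = 0 := by
      push_cast; exact h2
    exact_mod_cast (ZMod.natCast_eq_zero_iff _ _).mp this
/-- Four-generator setup: if `u, v ∈ ℤ` with `a₃ > u ≥ 0`, `b₂ > v ≥ 0`, `(u,v) ≠ (0,0)`,
then `u(e,ℓ) - v(f,m) ∉ dℤ ⊕ nℤ`. -/
theorem stmt_7
    (d n e f l m : ℕ) (hd : 0 < d) (hn : 0 < n) (hel : (e, l) ≠ (0, 0))
    (a2 b2 a3 b3 : ℕ) (g2 h2 g3 h3 : ℤ)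
    -- `b₂` is the smallest positive integer admitting a relation
    -- `-a₂(e,ℓ) + b₂(f,m) = (g₂,h₂) ∈ dℤ ⊕ nℤ` with `a₂ < ord((e,ℓ))` and
    -- `g₂ > 0` or `h₂ > 0` or `(g₂,h₂) = (0,0)`.
    (hb2pos : 0 < b2)
    (ha2ord : a2 < addOrderOf (((e : ZMod d), (l : ZMod n)) : ZMod d × ZMod n))
    (hrel2x : -(a2 : ℤ) * e + b2 * f = g2) (hrel2y : -(a2 : ℤ) * l + b2 * m = h2)
    (hdvd2 : (d : ℤ) ∣ g2 ∧ (n : ℤ) ∣ h2)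
    (hsign2 : 0 < g2 ∨ 0 < h2 ∨ (g2 = 0 ∧ h2 = 0))
    (hmin2 : ∀ b' : ℕ, 0 < b' →
      (∃ (a' : ℕ) (g h : ℤ), a' < addOrderOf (((e : ZMod d), (l : ZMod n)) : ZMod d × ZMod n) ∧
        -(a' : ℤ) * e + b' * f = g ∧ -(a' : ℤ) * l + b' * m = h ∧
        (d : ℤ) ∣ g ∧ (n : ℤ) ∣ h ∧ (0 < g ∨ 0 < h ∨ (g = 0 ∧ h = 0))) → b2 ≤ b')
    -- `a₃` is the smallest positive integer admitting a relation
    -- `a₃(e,ℓ) - b₃(f,m) = (g₃,h₃) ∈ dℤ ⊕ nℤ` with `b₃ < ord((f,m))`,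
    -- `g₃, h₃ ≥ 0` not both zero.
    (ha3pos : 0 < a3)
    (hb3ord : b3 < addOrderOf (((f : ZMod d), (m : ZMod n)) : ZMod d × ZMod n))
    (hrel3x : (a3 : ℤ) * e - b3 * f = g3) (hrel3y : (a3 : ℤ) * l - b3 * m = h3)
    (hdvd3 : (d : ℤ) ∣ g3 ∧ (n : ℤ) ∣ h3)
    (hsign3 : 0 ≤ g3 ∧ 0 ≤ h3 ∧ ¬(g3 = 0 ∧ h3 = 0))
    (hmin3 : ∀ a' : ℕ, 0 < a' →
      (∃ (b' : ℕ) (g h : ℤ), b' < addOrderOf (((f : ZMod d), (m : ZMod n)) : ZMod d × ZMod n) ∧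
        (a' : ℤ) * e - b' * f = g ∧ (a' : ℤ) * l - b' * m = h ∧
        (d : ℤ) ∣ g ∧ (n : ℤ) ∣ h ∧ 0 ≤ g ∧ 0 ≤ h ∧ ¬(g = 0 ∧ h = 0)) → a3 ≤ a')
    :
    ∀ u v : ℤ, 0 ≤ u → u < (a3 : ℤ) → 0 ≤ v → v < (b2 : ℤ) → ¬(u = 0 ∧ v = 0) →
      ¬((d : ℤ) ∣ (u * e - v * f) ∧ (n : ℤ) ∣ (u * l - v * m)) := by
  haveI : NeZero d := ⟨hd.ne'⟩
  haveI : NeZero n := ⟨hn.ne'⟩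
  set ordE := addOrderOf (((e : ZMod d), (l : ZMod n)) : ZMod d × ZMod n) with hordE
  set ordF := addOrderOf (((f : ZMod d), (m : ZMod n)) : ZMod d × ZMod n) with hordF
  have hordEpos : 0 < ordE := addOrderOf_pos _
  have hordFpos : 0 < ordF := addOrderOf_pos _
  have hE := ord_dvd_aux d n e l
  have hF := ord_dvd_aux d n f m
  have helZ : ¬(e = 0 ∧ l = 0) := by
    intro ⟨h1, h2⟩; exact hel (by simp [h1, h2])
  -- a3 ≤ ordE
  have ha3E : a3 ≤ ordE := by
    apply hmin3 ordE hordEpos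
    refine ⟨0, (ordE : ℤ) * e, (ordE : ℤ) * l, hordFpos, by push_cast; ring,
      by push_cast; ring, hE.1, hE.2, by positivity, by positivity, ?_⟩
    rintro ⟨h1, h2⟩
    rcases mul_eq_zero.mp h1 with h | h
    · exact absurd h (by exact_mod_cast hordEpos.ne')
    rcases mul_eq_zero.mp h2 with h' | h'
    · exact absurd h' (by exact_mod_cast hordEpos.ne')
    exact helZ ⟨by exact_mod_cast h, by exact_mod_cast h'⟩
  -- b2 ≤ ordF
  have hb2F : b2 ≤ ordF := by
    apply hmin2 ordF hordFpos
    refine ⟨0, (ordF : ℤ) * f, (ordF : ℤ) * m, hordEpos, by push_cast; ring,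
      by push_cast; ring, hF.1, hF.2, ?_⟩
    have hg : (0:ℤ) ≤ (ordF : ℤ) * f := by positivity
    have hh : (0:ℤ) ≤ (ordF : ℤ) * m := by positivity
    rcases hg.lt_or_eq with h | h
    · exact Or.inl h
    rcases hh.lt_or_eq with h' | h'
    · exact Or.inr (Or.inl h')
    exact Or.inr (Or.inr ⟨h.symm, h'.symm⟩)
  intro u v hu0 hua3 hv0 hvb2 huv ⟨hdx, hny⟩
  have hU : ((u.toNat : ℤ)) = u := Int.toNat_of_nonneg hu0
  have hV : ((v.toNat : ℤ)) = v := Int.toNat_of_nonneg hv0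
  by_cases hv : v = 0
  · -- v = 0, u > 0
    have hupos : 0 < u := by
      rcases hu0.lt_or_eq with h | h
      · exact h
      · exact absurd ⟨h.symm, hv⟩ huv
    have key : a3 ≤ u.toNat := by
      apply hmin3 u.toNat (by omega)
      refine ⟨0, u * e, u * l, hordFpos, by rw [hU]; ring, by rw [hU]; ring,
        by simpa [hv] using hdx, by simpa [hv] using hny,
        by positivity, by positivity, ?_⟩
      rintro ⟨h1, h2⟩
      rcases mul_eq_zero.mp h1 with h | h
      · omega
      rcases mul_eq_zero.mp h2 with h' | h'
      · omega
      exact helZ ⟨by exact_mod_cast h, by exact_mod_cast h'⟩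
    omega
  · have hvpos : 0 < v := lt_of_le_of_ne hv0 (Ne.symm hv)
    by_cases hs : 0 < v * (f:ℤ) - u * e ∨ 0 < v * (m:ℤ) - u * l ∨
        (v * (f:ℤ) - u * e = 0 ∧ v * (m:ℤ) - u * l = 0)
    · have key : b2 ≤ v.toNat := by
        apply hmin2 v.toNat (by omega)
        refine ⟨u.toNat, v * f - u * e, v * m - u * l, by omega,
          by rw [hU, hV]; ring, by rw [hU, hV]; ring, ?_, ?_, hs⟩
        · have := (dvd_neg (α := ℤ)).mpr hdx; rwa [neg_sub] at this
        · have := (dvd_neg (α := ℤ)).mpr hny; rwa [neg_sub] at this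
      omega
    · push_neg at hs
      obtain ⟨hs1, hs2, hs3⟩ := hs
      have hg0 : 0 ≤ u * (e:ℤ) - v * f := by linarith
      have hh0 : 0 ≤ u * (l:ℤ) - v * m := by linarith
      have hupos : 0 < u := by
        rcases hu0.lt_or_eq with h | h
        · exact h
        exfalso
        obtain rfl : u = 0 := h.symm
        simp only [zero_mul, sub_zero] at hs1 hs2 hs3
        have hf0 : (0:ℤ) ≤ v * f := mul_nonneg hv0 (by positivity)
        have hm0 : (0:ℤ) ≤ v * m := mul_nonneg hv0 (by positivity)
        exact hs3 (le_antisymm hs1 hf0) (le_antisymm hs2 hm0)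
      have key : a3 ≤ u.toNat := by
        apply hmin3 u.toNat (by omega)
        refine ⟨v.toNat, u * e - v * f, u * l - v * m, by omega,
          by rw [hU, hV], by rw [hU, hV], hdx, hny, hg0, hh0, ?_⟩
        rintro ⟨h1, h2⟩
        have e1 : v * (f:ℤ) - u * e = 0 := by linarith
        have e2 : v * (m:ℤ) - u * l = 0 := by linarith
        exact hs3 e1 e2
      omega
end

section
/- With notation as in the four-generator setup: define B_0 = {(a,b) ∈ ℕ² : (a < a_1 and b < b_2) or (a < a_3 and b < b_1)}, where a_1 = a_3 - a_2 and b_1 = b_2 - b_3. Then |B_0| = |H|, where H is the subgroup of (ℤ/dℤ) ⊕ (ℤ/nℤ) generated by the classes of (e,ℓ) and (f,m). Moreover the map (a,b) ↦ class of a(e,ℓ)+b(f,m) is a bijection from B_0 onto H. -/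
set_option maxHeartbeats 1000000 in
/-- Four-generator setup: with `a₁ = a₃ - a₂`, `b₁ = b₂ - b₃` and
`B₀ = {(a,b) ∈ ℕ² : (a < a₁ ∧ b < b₂) ∨ (a < a₃ ∧ b < b₁)}`, we have `|B₀| = |H|`, where `H`
is the subgroup of `(ℤ/d) ⊕ (ℤ/n)` generated by `(e,ℓ)` and `(f,m)`; moreover
`(a,b) ↦ a(e,ℓ) + b(f,m)` is a bijection from `B₀` onto `H`. -/
theorem stmt_9
    (d n e f l m : ℕ) (hd : 0 < d) (hn : 0 < n) (hel : (e, l) ≠ (0, 0))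
    (a2 b2 a3 b3 : ℕ) (g2 h2 g3 h3 : ℤ)
    -- `b₂` is the smallest positive integer admitting a relation
    -- `-a₂(e,ℓ) + b₂(f,m) = (g₂,h₂) ∈ dℤ ⊕ nℤ` with `a₂ < ord((e,ℓ))` and
    -- `g₂ > 0` or `h₂ > 0` or `(g₂,h₂) = (0,0)`.
    (hb2pos : 0 < b2)
    (ha2ord : a2 < addOrderOf (((e : ZMod d), (l : ZMod n)) : ZMod d × ZMod n))
    (hrel2x : -(a2 : ℤ) * e + b2 * f = g2) (hrel2y : -(a2 : ℤ) * l + b2 * m = h2)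
    (hdvd2 : (d : ℤ) ∣ g2 ∧ (n : ℤ) ∣ h2)
    (hsign2 : 0 < g2 ∨ 0 < h2 ∨ (g2 = 0 ∧ h2 = 0))
    (hmin2 : ∀ b' : ℕ, 0 < b' →
      (∃ (a' : ℕ) (g h : ℤ), a' < addOrderOf (((e : ZMod d), (l : ZMod n)) : ZMod d × ZMod n) ∧
        -(a' : ℤ) * e + b' * f = g ∧ -(a' : ℤ) * l + b' * m = h ∧
        (d : ℤ) ∣ g ∧ (n : ℤ) ∣ h ∧ (0 < g ∨ 0 < h ∨ (g = 0 ∧ h = 0))) → b2 ≤ b')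
    -- `a₃` is the smallest positive integer admitting a relation
    -- `a₃(e,ℓ) - b₃(f,m) = (g₃,h₃) ∈ dℤ ⊕ nℤ` with `b₃ < ord((f,m))`,
    -- `g₃, h₃ ≥ 0` not both zero.
    (ha3pos : 0 < a3)
    (hb3ord : b3 < addOrderOf (((f : ZMod d), (m : ZMod n)) : ZMod d × ZMod n))
    (hrel3x : (a3 : ℤ) * e - b3 * f = g3) (hrel3y : (a3 : ℤ) * l - b3 * m = h3)
    (hdvd3 : (d : ℤ) ∣ g3 ∧ (n : ℤ) ∣ h3)
    (hsign3 : 0 ≤ g3 ∧ 0 ≤ h3 ∧ ¬(g3 = 0 ∧ h3 = 0))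
    (hmin3 : ∀ a' : ℕ, 0 < a' →
      (∃ (b' : ℕ) (g h : ℤ), b' < addOrderOf (((f : ZMod d), (m : ZMod n)) : ZMod d × ZMod n) ∧
        (a' : ℤ) * e - b' * f = g ∧ (a' : ℤ) * l - b' * m = h ∧
        (d : ℤ) ∣ g ∧ (n : ℤ) ∣ h ∧ 0 ≤ g ∧ 0 ≤ h ∧ ¬(g = 0 ∧ h = 0)) → a3 ≤ a')
    (H : AddSubgroup (ZMod d × ZMod n))
    (hH : H = AddSubgroup.closure {((e : ZMod d), (l : ZMod n)), ((f : ZMod d), (m : ZMod n))})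
    (B0 : Set (ℕ × ℕ))
    (hB0 : B0 = {v : ℕ × ℕ | (v.1 < a3 - a2 ∧ v.2 < b2) ∨ (v.1 < a3 ∧ v.2 < b2 - b3)}) :
    Nat.card B0 = Nat.card H ∧
    Set.BijOn
      (fun v : ℕ × ℕ =>
        v.1 • (((e : ZMod d), (l : ZMod n)) : ZMod d × ZMod n) +
        v.2 • (((f : ZMod d), (m : ZMod n)) : ZMod d × ZMod n))
      B0 (H : Set (ZMod d × ZMod n)) := by
  haveI : NeZero d := ⟨hd.ne'⟩
  haveI : NeZero n := ⟨hn.ne'⟩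
  set P : ZMod d × ZMod n := ((e : ZMod d), (l : ZMod n)) with hP
  set Q : ZMod d × ZMod n := ((f : ZMod d), (m : ZMod n)) with hQ
  set o := addOrderOf P with ho_def
  set p := addOrderOf Q with hp_def
  have ho : 0 < o := addOrderOf_pos P
  have hp : 0 < p := addOrderOf_pos Q
  have hPdvd : ∀ A : ℤ, A • P = 0 ↔ ((o : ℤ) ∣ A) :=
    fun A => (addOrderOf_dvd_iff_zsmul_eq_zero).symm
  have hQdvd : ∀ A : ℤ, A • Q = 0 ↔ ((p : ℤ) ∣ A) :=
    fun A => (addOrderOf_dvd_iff_zsmul_eq_zero).symm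
  have bridge : ∀ A B : ℤ, (A • P = B • Q) ↔
      ((d : ℤ) ∣ (A*(e:ℤ) - B*(f:ℤ)) ∧ (n : ℤ) ∣ (A*(l:ℤ) - B*(m:ℤ))) := by
    intro A B
    have key : A • P - B • Q
        = (((A*(e:ℤ) - B*(f:ℤ) : ℤ) : ZMod d), ((A*(l:ℤ) - B*(m:ℤ) : ℤ) : ZMod n)) := by
      ext <;> simp [hP, hQ, zsmul_eq_mul]
    rw [← sub_eq_zero, key, Prod.mk_eq_zero,
      ZMod.intCast_zmod_eq_zero_iff_dvd, ZMod.intCast_zmod_eq_zero_iff_dvd]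
  have hel' : e ≠ 0 ∨ l ≠ 0 := by
    by_contra hc; push_neg at hc; exact hel (by simp [hc.1, hc.2])
  have ha2b2 : (a2 : ℤ) • P = (b2 : ℤ) • Q := by
    refine (bridge _ _).2 ⟨?_, ?_⟩
    · rw [show (a2:ℤ)*e - (b2:ℤ)*f = -g2 by linear_combination -hrel2x]
      exact dvd_neg.2 hdvd2.1
    · rw [show (a2:ℤ)*l - (b2:ℤ)*m = -h2 by linear_combination -hrel2y]
      exact dvd_neg.2 hdvd2.2
  have hvrel : (a3 : ℤ) • P = (b3 : ℤ) • Q := by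
    refine (bridge _ _).2 ⟨?_, ?_⟩
    · rw [show (a3:ℤ)*e - (b3:ℤ)*f = g3 by linear_combination hrel3x]
      exact hdvd3.1
    · rw [show (a3:ℤ)*l - (b3:ℤ)*m = h3 by linear_combination hrel3y]
      exact hdvd3.2
  have hoP : ((o : ℤ)) • P = 0 := (hPdvd _).2 dvd_rfl
  have hpQ : ((p : ℤ)) • Q = 0 := (hQdvd _).2 dvd_rfl
  have tri : ∀ x y : ℤ, 0 ≤ x → 0 ≤ y → (0 < x ∨ 0 < y ∨ (x = 0 ∧ y = 0)) := by
    intro x y hx hy; omega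
  have keyNP : ∀ i x : ℤ, 1 ≤ i → i * x ≤ 0 → x ≤ 0 := by
    intro i x hi hix; nlinarith
  have dvd_small : ∀ C : ℤ, (o:ℤ) ∣ C → -(o:ℤ) < C → C < o → C = 0 := by
    rintro C ⟨k, hk⟩ hl hr
    rcases lt_trichotomy k 0 with h | h | h
    · exfalso; nlinarith
    · rw [hk, h, mul_zero]
    · exfalso; nlinarith
  -- b2 ≤ p
  have b2lep : b2 ≤ p := by
    apply hmin2 p hp
    have hrel : ((0:ℕ) : ℤ) • P = (p : ℤ) • Q := by
      rw [hpQ]; simp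
    obtain ⟨hdg, hdh⟩ := (bridge _ _).1 hrel
    refine ⟨0, (p:ℤ)*f, (p:ℤ)*m, ho, by push_cast; ring, by push_cast; ring, ?_, ?_, ?_⟩
    · simpa using (dvd_neg.2 hdg)
    · simpa using (dvd_neg.2 hdh)
    · exact tri _ _ (by positivity) (by positivity)
  -- a3 ≤ o
  have a3leo : a3 ≤ o := by
    apply hmin3 o ho
    have hrel : ((o:ℕ) : ℤ) • P = ((0:ℕ) : ℤ) • Q := by
      rw [hoP]; simp
    obtain ⟨hdg, hdh⟩ := (bridge _ _).1 hrel
    refine ⟨0, (o:ℤ)*e, (o:ℤ)*l, hp, by push_cast; ring, by push_cast; ring, ?_, ?_,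
      by positivity, by positivity, ?_⟩
    · simpa using hdg
    · simpa using hdh
    · rintro ⟨hx, hy⟩
      have hoz : (o:ℤ) ≠ 0 := by exact_mod_cast ho.ne'
      rcases hel' with h | h
      · exact h (by exact_mod_cast (mul_eq_zero.1 hx).resolve_left hoz)
      · exact h (by exact_mod_cast (mul_eq_zero.1 hy).resolve_left hoz)
  -- canonical representative
  have canon : ∀ C : ℤ, ∃ A : ℕ, A < o ∧ ((A:ℤ) • P = C • P) ∧ (o:ℤ) ∣ (C - A) := by
    intro C
    have hoz : (0:ℤ) < (o:ℤ) := by exact_mod_cast ho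
    have h1 : 0 ≤ C % o := Int.emod_nonneg C hoz.ne'
    have h2 : C % o < o := Int.emod_lt_of_pos C hoz
    refine ⟨(C % o).toNat, ?_, ?_, ?_⟩
    · omega
    · have hc : (((C % o).toNat : ℤ)) = C % o := Int.toNat_of_nonneg h1
      rw [hc, ← sub_eq_zero, ← sub_smul, hPdvd]
      exact ⟨-(C / o), by rw [Int.emod_def]; ring⟩
    · have hc : (((C % o).toNat : ℤ)) = C % o := Int.toNat_of_nonneg h1
      rw [hc]
      exact ⟨C / o, by rw [Int.emod_def]; ring⟩
  have canonQ : ∀ C : ℤ, ∃ A : ℕ, A < p ∧ ((A:ℤ) • Q = C • Q) := by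
    intro C
    have hpz : (0:ℤ) < (p:ℤ) := by exact_mod_cast hp
    have h1 : 0 ≤ C % p := Int.emod_nonneg C hpz.ne'
    have h2 : C % p < p := Int.emod_lt_of_pos C hpz
    refine ⟨(C % p).toNat, by omega, ?_⟩
    have hc : (((C % p).toNat : ℤ)) = C % p := Int.toNat_of_nonneg h1
    rw [hc, ← sub_eq_zero, ← sub_smul, hQdvd]
    exact ⟨-(C / p), by rw [Int.emod_def]; ring⟩
  -- KEY LEMMA B: canonical representative of y•Q for 0<y<b2 is "strong" and ≥ a3
  have lemB : ∀ A y : ℕ, A < o → 0 < y → y < b2 → ((A:ℤ) • P = (y:ℤ) • Q) →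
      (0 ≤ (A:ℤ)*e - y*f ∧ 0 ≤ (A:ℤ)*l - y*m ∧
        ¬((A:ℤ)*e - y*f = 0 ∧ (A:ℤ)*l - y*m = 0) ∧ a3 ≤ A) := by
    intro A y hA hy hyb2 hrel
    obtain ⟨hdg, hdh⟩ := (bridge _ _).1 hrel
    obtain ⟨g, hgdef⟩ : ∃ g : ℤ, (A:ℤ)*e - y*f = g := ⟨_, rfl⟩
    obtain ⟨h, hhdef⟩ : ∃ h : ℤ, (A:ℤ)*l - y*m = h := ⟨_, rfl⟩
    rw [hgdef] at hdg
    rw [hhdef] at hdh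
    have hstrong : 0 ≤ g ∧ 0 ≤ h ∧ ¬(g = 0 ∧ h = 0) := by
      by_contra hcon
      have hb2le : b2 ≤ y := by
        refine hmin2 y hy ⟨A, -g, -h, hA, by linear_combination -hgdef,
          by linear_combination -hhdef, dvd_neg.2 hdg, dvd_neg.2 hdh, ?_⟩
        omega
      omega
    have hApos : 0 < A := by
      rcases Nat.eq_zero_or_pos A with h0 | hpos
      · exfalso
        subst h0
        have h1 : (0:ℤ) ≤ (y:ℤ)*f := by positivity
        have h2 : (0:ℤ) ≤ (y:ℤ)*m := by positivity
        have hg0 : g ≤ 0 := by rw [← hgdef]; push_cast; linarith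
        have hh0 : h ≤ 0 := by rw [← hhdef]; push_cast; linarith
        exact hstrong.2.2 ⟨le_antisymm hg0 hstrong.1, le_antisymm hh0 hstrong.2.1⟩
      · exact hpos
    have ha3A : a3 ≤ A := by
      exact hmin3 A hApos ⟨y, g, h, lt_of_lt_of_le hyb2 b2lep, hgdef, hhdef, hdg, hdh,
        hstrong.1, hstrong.2.1, hstrong.2.2⟩
    rw [hgdef, hhdef]
    exact ⟨hstrong.1, hstrong.2.1, hstrong.2.2, ha3A⟩
  -- b3 < b2
  have hb3b2 : b3 < b2 := by
    by_cases ha20 : a2 = 0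
    · -- then b2 • Q = 0, so p ∣ b2, so b2 = p > b3
      have hz : (b2:ℤ) • Q = 0 := by
        rw [← ha2b2, ha20]; simp
      have hdvd : (p:ℤ) ∣ (b2:ℤ) := (hQdvd _).1 hz
      have : p ≤ b2 := by
        have := Int.le_of_dvd (by exact_mod_cast hb2pos) hdvd
        exact_mod_cast this
      omega
    · have ha2pos : 0 < a2 := Nat.pos_of_ne_zero ha20
      by_contra hcon
      push_neg at hcon   -- hcon : b2 ≤ b3
      obtain ⟨i, r, hir, hrlt, hi1⟩ : ∃ i r : ℕ, b2 * i + r = b3 ∧ r < b2 ∧ 1 ≤ i := by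
        refine ⟨b3 / b2, b3 % b2, Nat.div_add_mod b3 b2, Nat.mod_lt _ hb2pos, ?_⟩
        exact (Nat.one_le_div_iff hb2pos).2 hcon
      have hb3z : (b3:ℤ) = (b2:ℤ) * i + r := by
        rw [← hir]; push_cast; ring
      have hib2Q : ((i:ℤ)*b2) • Q = ((i:ℤ)*a2) • P := by
        rw [mul_smul, mul_smul, ha2b2]
      have hrQ : (r:ℤ) • Q = ((a3:ℤ) - i*a2) • P := by
        calc (r:ℤ) • Q = ((b3:ℤ) - i*b2) • Q := by
              rw [show ((b3:ℤ) - i*b2) = r by rw [hb3z]; ring]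
          _ = (b3:ℤ) • Q - ((i:ℤ)*b2) • Q := sub_smul _ _ _
          _ = (a3:ℤ) • P - ((i:ℤ)*a2) • P := by rw [← hvrel, hib2Q]
          _ = ((a3:ℤ) - i*a2) • P := (sub_smul _ _ _).symm
      rcases Nat.eq_zero_or_pos r with hr0 | hrpos
      · -- r = 0 : a3 ≡ i·a2 (mod o)
        have h0 : ((a3:ℤ) - i*a2) • P = 0 := by
          rw [← hrQ, hr0]; simp
        obtain ⟨t, ht⟩ := (hPdvd _).1 h0
        have hrz : (r:ℤ) = 0 := by exact_mod_cast hr0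
        have hg3eq : g3 = -(i:ℤ)*g2 + t*((o:ℤ)*e) := by
          linear_combination -hrel3x - (i:ℤ)*hrel2x + (e:ℤ)*ht - (f:ℤ)*hb3z - (f:ℤ)*hrz
        have hh3eq : h3 = -(i:ℤ)*h2 + t*((o:ℤ)*l) := by
          linear_combination -hrel3y - (i:ℤ)*hrel2y + (l:ℤ)*ht - (m:ℤ)*hb3z - (m:ℤ)*hrz
        have hi1z : (1:ℤ) ≤ (i:ℤ) := by exact_mod_cast hi1
        rcases le_or_gt t 0 with ht0 | ht1
        · -- t ≤ 0 leads to g2,h2 ≤ 0, then all zero, contradiction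
          have hoe : t*((o:ℤ)*e) ≤ 0 := mul_nonpos_iff.2 (Or.inr ⟨ht0, by positivity⟩)
          have hol : t*((o:ℤ)*l) ≤ 0 := mul_nonpos_iff.2 (Or.inr ⟨ht0, by positivity⟩)
          have hg2le : g2 ≤ 0 := keyNP i g2 hi1z (by linarith [hsign3.1])
          have hh2le : h2 ≤ 0 := keyNP i h2 hi1z (by linarith [hsign3.2.1])
          have hg20 : g2 = 0 ∧ h2 = 0 := by omega
          have hg30 : g3 = 0 := by
            have hle : g3 ≤ 0 := by rw [hg3eq, hg20.1]; simpa using hoe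
            linarith [hsign3.1]
          have hh30 : h3 = 0 := by
            have hle : h3 ≤ 0 := by rw [hh3eq, hg20.2]; simpa using hol
            linarith [hsign3.2.1]
          exact hsign3.2.2 ⟨hg30, hh30⟩
        · -- t ≥ 1 : a3 = i·a2 + o·t > o, contradiction with a3 ≤ o
          have h1 : (1:ℤ) ≤ (i:ℤ)*(a2:ℤ) := by
            have : (1:ℤ) ≤ (a2:ℤ) := by exact_mod_cast ha2pos
            nlinarith
          have h2' : (o:ℤ) ≤ (o:ℤ)*t := by nlinarith [ho]
          have h3' : (a3:ℤ) ≤ (o:ℤ) := by exact_mod_cast a3leo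
          linarith [ht, h1, h2']
      · -- r ≥ 1
        obtain ⟨z, hzsum, hzpos, hzlt⟩ : ∃ z : ℕ, r + z = b2 ∧ 0 < z ∧ z < b2 :=
          ⟨b2 - r, by omega, by omega, by omega⟩
        have hzz : (z:ℤ) = (b2:ℤ) - r := by
          have : (r:ℤ) + z = b2 := by exact_mod_cast hzsum
          linarith
        have hzQ : (z:ℤ) • Q = (((i:ℤ)+1)*a2 - a3) • P := by
          calc (z:ℤ) • Q = ((b2:ℤ) - r) • Q := by rw [hzz]
            _ = (b2:ℤ) • Q - (r:ℤ) • Q := sub_smul _ _ _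
            _ = (a2:ℤ) • P - ((a3:ℤ) - i*a2) • P := by rw [← ha2b2, hrQ]
            _ = (((i:ℤ)+1)*a2 - a3) • P := by rw [← sub_smul]; congr 1; ring
        obtain ⟨A, hAo, hAP, hAdvd⟩ := canon (((i:ℤ)+1)*a2 - a3)
        have hArel : (A:ℤ) • P = (z:ℤ) • Q := hAP.trans hzQ.symm
        obtain ⟨hg'', hh'', hne'', ha3A⟩ := lemB A z hAo hzpos hzlt hArel
        have hsum0 : ((A:ℤ) + a3 - ((i:ℤ)+1)*a2) • P = 0 := by
          have h1 : ((z:ℤ) + b3) = ((i:ℤ)+1)*b2 := by rw [hzz, hb3z]; ring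
          have h2 : (z:ℤ) • Q + (b3:ℤ) • Q = (((i:ℤ)+1)*a2) • P := by
            rw [← add_smul, h1, mul_smul, ← ha2b2, ← mul_smul]
          rw [sub_smul, add_smul, hArel, hvrel, h2, sub_self]
        obtain ⟨t, ht⟩ := (hPdvd _).1 hsum0
        have hsx : ((A:ℤ)*e - z*f) + g3 = -((i:ℤ)+1)*g2 + t*((o:ℤ)*e) := by
          linear_combination -hrel3x - ((i:ℤ)+1)*hrel2x + (e:ℤ)*ht - (f:ℤ)*hzz - (f:ℤ)*hb3z
        have hsy : ((A:ℤ)*l - z*m) + h3 = -((i:ℤ)+1)*h2 + t*((o:ℤ)*l) := by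
          linear_combination -hrel3y - ((i:ℤ)+1)*hrel2y + (l:ℤ)*ht - (m:ℤ)*hzz - (m:ℤ)*hb3z
        have hi1z : (1:ℤ) ≤ (i:ℤ) + 1 := by omega
        rcases le_or_gt t 0 with ht0 | ht1
        · have hoe : t*((o:ℤ)*e) ≤ 0 := mul_nonpos_iff.2 (Or.inr ⟨ht0, by positivity⟩)
          have hol : t*((o:ℤ)*l) ≤ 0 := mul_nonpos_iff.2 (Or.inr ⟨ht0, by positivity⟩)
          have hg2le : g2 ≤ 0 := keyNP ((i:ℤ)+1) g2 hi1z (by linarith [hsign3.1, hg''])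
          have hh2le : h2 ≤ 0 := keyNP ((i:ℤ)+1) h2 hi1z (by linarith [hsign3.2.1, hh''])
          have hg20 : g2 = 0 ∧ h2 = 0 := by omega
          have hg30 : g3 = 0 := by
            have hle : ((A:ℤ)*e - z*f) + g3 ≤ 0 := by rw [hsx, hg20.1]; simpa using hoe
            linarith [hsign3.1, hg'']
          have hh30 : h3 = 0 := by
            have hle : ((A:ℤ)*l - z*m) + h3 ≤ 0 := by rw [hsy, hg20.2]; simpa using hol
            linarith [hsign3.2.1, hh'']
          exact hsign3.2.2 ⟨hg30, hh30⟩
        · -- t ≥ 1 : then i·a2 < a3, and we contradict lemB at r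
          have hAlt : (A:ℤ) ≤ (o:ℤ) - 1 := by
            have : (A:ℤ) < (o:ℤ) := by exact_mod_cast hAo
            omega
          have hot : (o:ℤ) ≤ (o:ℤ)*t := by nlinarith [ho]
          have hgt : (i:ℤ)*a2 + 1 ≤ (a3:ℤ) := by
            have ha2z : (1:ℤ) ≤ (a2:ℤ) := by exact_mod_cast ha2pos
            linarith [ht, hAlt, hot]
          have hialt : i*a2 < a3 := by
            have hk : ((i*a2 : ℕ):ℤ) + 1 ≤ (a3:ℤ) := by push_cast; linarith [hgt]
            exact_mod_cast hk
          have hA'z : ((a3 - i*a2 : ℕ):ℤ) = (a3:ℤ) - i*a2 := by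
            rw [Nat.cast_sub hialt.le]; push_cast; ring
          have hA'rel : ((a3 - i*a2 : ℕ):ℤ) • P = (r:ℤ) • Q := by rw [hA'z, ← hrQ]
          have hipos : 1 ≤ i*a2 := Nat.mul_pos hi1 ha2pos
          have hA'o : a3 - i*a2 < o := by omega
          obtain ⟨_, _, _, hge⟩ := lemB (a3 - i*a2) r hA'o hrpos hrlt hA'rel
          omega
  -- a2 < a3
  have ha2a3 : a2 < a3 := by
    by_contra hcon
    push_neg at hcon
    rcases Nat.eq_zero_or_pos b3 with hb30 | hb3pos
    · have h0 : (a3:ℤ) • P = 0 := by rw [hvrel, hb30]; simp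
      have hdvd : (o:ℤ) ∣ (a3:ℤ) := (hPdvd _).1 h0
      have : o ≤ a3 := by exact_mod_cast Int.le_of_dvd (by exact_mod_cast ha3pos) hdvd
      omega
    · obtain ⟨y, hysum, hypos, hylt⟩ : ∃ y:ℕ, b3 + y = b2 ∧ 0 < y ∧ y < b2 :=
        ⟨b2 - b3, by omega, by omega, by omega⟩
      have hyz : (y:ℤ) = (b2:ℤ) - b3 := by
        have : (b3:ℤ) + y = b2 := by exact_mod_cast hysum
        linarith
      have hAz : ((a2 - a3 : ℕ):ℤ) = (a2:ℤ) - a3 := by rw [Nat.cast_sub hcon]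
      have hArel : ((a2 - a3 : ℕ):ℤ) • P = (y:ℤ) • Q := by
        rw [hAz, hyz, sub_smul, sub_smul, ha2b2, hvrel]
      have hAo : a2 - a3 < o := by omega
      obtain ⟨hgs, hhs, hns, _⟩ := lemB (a2 - a3) y hAo hypos hylt hArel
      have e1 : ((a2 - a3:ℕ):ℤ)*e - (y:ℤ)*f = -g2 - g3 := by
        rw [hAz, hyz]; linear_combination -hrel2x - hrel3x
      have e2 : ((a2 - a3:ℕ):ℤ)*l - (y:ℤ)*m = -h2 - h3 := by
        rw [hAz, hyz]; linear_combination -hrel2y - hrel3y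
      rw [e1] at hgs
      rw [e2] at hhs
      rw [e1, e2] at hns
      rcases hsign3 with ⟨hg3, hh3, hne3⟩
      omega
  -- injectivity core
  have main : ∀ x1 y1 x2 y2 : ℕ, ((x1,y1) ∈ B0) → ((x2,y2) ∈ B0) → y2 ≤ y1 →
      ((x1:ℤ) • P + (y1:ℤ) • Q = (x2:ℤ) • P + (y2:ℤ) • Q) → x1 = x2 ∧ y1 = y2 := by
    intro x1 y1 x2 y2 h1 h2 hyle heq
    rw [hB0] at h1 h2
    simp only [Set.mem_setOf_eq] at h1 h2
    have hx1a3 : x1 < a3 := by rcases h1 with ⟨h,_⟩|⟨h,_⟩ <;> omega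
    have hx2a3 : x2 < a3 := by rcases h2 with ⟨h,_⟩|⟨h,_⟩ <;> omega
    have hy1b2 : y1 < b2 := by rcases h1 with ⟨_,h⟩|⟨_,h⟩ <;> omega
    have hrel : ((x2:ℤ) - x1) • P = ((y1:ℤ) - y2) • Q := by
      rw [sub_smul, sub_smul, sub_eq_sub_iff_add_eq_add, add_comm ((y1:ℤ) • Q) ((x1:ℤ) • P)]
      exact heq.symm
    rcases Nat.eq_zero_or_pos (y1 - y2) with hdb0 | hdbpos
    · have hy : y1 = y2 := by omega
      have h0 : ((x2:ℤ) - x1) • P = 0 := by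
        rw [hrel, show ((y1:ℤ) - y2) = 0 by rw [hy]; ring, zero_smul]
      have hz := dvd_small _ ((hPdvd _).1 h0) (by push_cast; omega) (by push_cast; omega)
      constructor
      · omega
      · exact hy
    · have hΔz : ((y1 - y2:ℕ):ℤ) = (y1:ℤ) - y2 := by rw [Nat.cast_sub hyle]
      obtain ⟨A, hAo, hAP, hAdvd⟩ := canon ((x2:ℤ) - x1)
      have hArel : (A:ℤ) • P = ((y1-y2:ℕ):ℤ) • Q := by rw [hAP, hrel, hΔz]
      have hdblt : y1 - y2 < b2 := by omega
      obtain ⟨_, _, _, ha3A⟩ := lemB A (y1 - y2) hAo hdbpos hdblt hArel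
      exfalso
      rcases le_or_gt x1 x2 with hxle | hxgt
      · have hC := dvd_small _ hAdvd (by push_cast; omega) (by push_cast; omega)
        omega
      · have hxrel : ∀ u v : ℤ, u • P = v • Q → (u - ((x2:ℤ) - x1)) • P = (v - ((y1:ℤ) - y2)) • Q := by
          intro u v huv
          rw [sub_smul u ((x2:ℤ) - (x1:ℤ)) P, sub_smul v ((y1:ℤ) - (y2:ℤ)) Q, huv, hrel]
        rcases h1 with ⟨hxa1, _⟩ | ⟨_, hyb1⟩
        · -- R1 : x1 < a3 - a2
          have hc1 : ((a2 + (x1 - x2) : ℕ):ℤ) = (a2:ℤ) - ((x2:ℤ) - x1) := by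
            push_cast [Nat.cast_sub hxgt.le]; ring
          have hc2 : ((b2 - (y1-y2) : ℕ):ℤ) = (b2:ℤ) - ((y1:ℤ) - y2) := by
            push_cast [Nat.cast_sub hdblt.le, Nat.cast_sub hyle]; ring
          have key2 : ((a2 + (x1 - x2) : ℕ):ℤ) • P = ((b2 - (y1-y2) : ℕ):ℤ) • Q := by
            rw [hc1, hc2]; exact hxrel _ _ ha2b2
          obtain ⟨_, _, _, hge⟩ := lemB (a2 + (x1 - x2)) (b2 - (y1-y2))
            (by omega) (by omega) (by omega) key2
          omega
        · -- R2 : y1 < b2 - b3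
          have hc1 : ((a3 - (x1 - x2) : ℕ):ℤ) = (a3:ℤ) - ((x1:ℤ) - x2) := by
            push_cast [Nat.cast_sub (by omega : x1 - x2 ≤ a3), Nat.cast_sub hxgt.le]; ring
          have hc2 : ((b3 + (y1-y2) : ℕ):ℤ) = (b3:ℤ) + ((y1:ℤ) - y2) := by
            push_cast [Nat.cast_sub hyle]; ring
          have key3 : ((a3 - (x1 - x2) : ℕ):ℤ) • P = ((b3 + (y1-y2) : ℕ):ℤ) • Q := by
            rw [hc1, show (a3:ℤ) - ((x1:ℤ) - x2) = (a3:ℤ) + ((x2:ℤ) - x1) by ring, hc2,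
              add_smul, add_smul, hvrel, hrel]
          obtain ⟨_, _, _, hge⟩ := lemB (a3 - (x1 - x2)) (b3 + (y1-y2))
            (by omega) (by omega) (by omega) key3
          omega
  -- reduction core for surjectivity
  have w0 : ((a3 - a2 : ℕ):ℤ) • P + ((b2 - b3 : ℕ):ℤ) • Q = 0 := by
    rw [Nat.cast_sub ha2a3.le, Nat.cast_sub hb3b2.le, sub_smul, sub_smul, hvrel, ha2b2]
    abel
  have v0 : (a3:ℤ) • P - (b3:ℤ) • Q = 0 := sub_eq_zero.2 hvrel
  have red : ∀ a : ℕ, ∀ b : ℕ, b < b2 → ∃ w : ℕ × ℕ, w ∈ B0 ∧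
      (w.1:ℤ) • P + (w.2:ℤ) • Q = (a:ℤ) • P + (b:ℤ) • Q := by
    intro a
    induction a using Nat.strong_induction_on with
    | _ a ih =>
      intro b hb
      by_cases hcase1 : a < a3 - a2
      · exact ⟨(a,b), by rw [hB0]; exact Or.inl ⟨hcase1, hb⟩, rfl⟩
      · by_cases hcase2 : b2 - b3 ≤ b
        · obtain ⟨w, hw, heq⟩ := ih (a - (a3 - a2)) (by omega) (b - (b2 - b3)) (by omega)
          refine ⟨w, hw, heq.trans ?_⟩
          have hc1 : ((a - (a3 - a2) : ℕ):ℤ) = (a:ℤ) - ((a3 - a2 : ℕ):ℤ) := by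
            rw [Nat.cast_sub (by omega)]
          have hc2 : ((b - (b2 - b3) : ℕ):ℤ) = (b:ℤ) - ((b2 - b3 : ℕ):ℤ) := by
            rw [Nat.cast_sub (by omega)]
          rw [hc1, hc2, sub_smul, sub_smul]
          have hre : (a:ℤ) • P - ((a3 - a2 : ℕ):ℤ) • P + ((b:ℤ) • Q - ((b2 - b3 : ℕ):ℤ) • Q)
              = ((a:ℤ) • P + (b:ℤ) • Q) - (((a3 - a2 : ℕ):ℤ) • P + ((b2 - b3 : ℕ):ℤ) • Q) := by
            abel
          rw [hre, w0, sub_zero]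
        · by_cases hcase3 : a < a3
          · exact ⟨(a,b), by rw [hB0]; exact Or.inr ⟨hcase3, by omega⟩, rfl⟩
          · obtain ⟨w, hw, heq⟩ := ih (a - a3) (by omega) (b + b3) (by omega)
            refine ⟨w, hw, heq.trans ?_⟩
            have hc1 : ((a - a3 : ℕ):ℤ) = (a:ℤ) - a3 := by rw [Nat.cast_sub (by omega)]
            have hc2 : ((b + b3 : ℕ):ℤ) = (b:ℤ) + b3 := by push_cast; ring
            rw [hc1, hc2, sub_smul, add_smul]
            have hre : (a:ℤ) • P - (a3:ℤ) • P + ((b:ℤ) • Q + (b3:ℤ) • Q)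
                = ((a:ℤ) • P + (b:ℤ) • Q) - ((a3:ℤ) • P - (b3:ℤ) • Q) := by abel
            rw [hre, v0, sub_zero]
  -- the map
  have hFz : ∀ w : ℕ × ℕ, w.1 • P + w.2 • Q = (w.1:ℤ) • P + (w.2:ℤ) • Q := by
    intro w; rw [natCast_zsmul, natCast_zsmul]
  have hmaps : Set.MapsTo (fun v : ℕ × ℕ => v.1 • P + v.2 • Q) B0 (H : Set (ZMod d × ZMod n)) := by
    intro w _
    have hPH : P ∈ AddSubgroup.closure ({P, Q} : Set (ZMod d × ZMod n)) :=
      AddSubgroup.subset_closure (by simp)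
    have hQH : Q ∈ AddSubgroup.closure ({P, Q} : Set (ZMod d × ZMod n)) :=
      AddSubgroup.subset_closure (by simp)
    simp only [SetLike.mem_coe, hH]
    exact add_mem (nsmul_mem hPH _) (nsmul_mem hQH _)
  have hinj : Set.InjOn (fun v : ℕ × ℕ => v.1 • P + v.2 • Q) B0 := by
    intro u hu v hv huv
    simp only at huv
    rw [hFz u, hFz v] at huv
    rcases le_total v.2 u.2 with h | h
    · obtain ⟨h1, h2⟩ := main u.1 u.2 v.1 v.2 (by simpa using hu) (by simpa using hv) h huv
      exact Prod.ext h1 h2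
    · obtain ⟨h1, h2⟩ := main v.1 v.2 u.1 u.2 (by simpa using hv) (by simpa using hu) h huv.symm
      exact Prod.ext h1.symm h2.symm
  have hsurj : Set.SurjOn (fun v : ℕ × ℕ => v.1 • P + v.2 • Q) B0 (H : Set (ZMod d × ZMod n)) := by
    intro x hx
    simp only [SetLike.mem_coe, hH] at hx
    obtain ⟨A, B, hAB⟩ := (AddSubgroup.mem_closure_pair).1 hx
    obtain ⟨b0, hb0p, hb0Q⟩ := canonQ B
    have hblt : b0 % b2 < b2 := Nat.mod_lt _ hb2pos
    obtain ⟨a, hao, haP, _⟩ := canon (A + ((b0 / b2 : ℕ):ℤ) * a2)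
    have hkey : (a:ℤ) • P + ((b0 % b2 : ℕ):ℤ) • Q = A • P + B • Q := by
      rw [haP, add_smul, mul_smul, ha2b2, ← mul_smul]
      have hsplit : b2 * (b0 / b2) + b0 % b2 = b0 := Nat.div_add_mod b0 b2
      have h2 : ((b0 / b2 : ℕ):ℤ) * b2 + ((b0 % b2 : ℕ):ℤ) = (b0:ℤ) := by
        conv_rhs => rw [← hsplit]
        push_cast; ring
      have hre : A • P + (((b0 / b2 : ℕ):ℤ) * (b2:ℤ)) • Q + ((b0 % b2 : ℕ):ℤ) • Q
          = A • P + ((((b0 / b2 : ℕ):ℤ) * b2 + ((b0 % b2 : ℕ):ℤ))) • Q := by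
        rw [add_smul]; abel
      rw [hre, h2, hb0Q]
    obtain ⟨w, hw, heq⟩ := red a (b0 % b2) hblt
    refine ⟨w, hw, ?_⟩
    simp only
    rw [hFz w, heq, hkey, hAB]
  have hbij : Set.BijOn (fun v : ℕ × ℕ => v.1 • P + v.2 • Q) B0 (H : Set (ZMod d × ZMod n)) :=
    ⟨hmaps, hinj, hsurj⟩
  exact ⟨Nat.card_congr (Set.BijOn.equiv _ hbij), hbij⟩
end

section
/- With notation as in the four-generator setup: |H| = a_3·b_2 - a_2·b_3 = a_3·b_1 + a_1·b_3 = a_1·b_2 + a_2·b_1, where a_1 = a_3 - a_2 and b_1 = b_2 - b_3, and H is the subgroup of (ℤ/dℤ)⊕(ℤ/nℤ) generated by (e,ℓ) and (f,m). -/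
set_option maxHeartbeats 1600000 in
/-- Four-generator setup: with `a₁ = a₃ - a₂`, `b₁ = b₂ - b₃`,
`|H| = a₃b₂ - a₂b₃ = a₃b₁ + a₁b₃ = a₁b₂ + a₂b₁`, where `H` is the subgroup of
`(ℤ/d) ⊕ (ℤ/n)` generated by `(e,ℓ)` and `(f,m)`. -/
theorem stmt_10
    (d n e f l m : ℕ) (hd : 0 < d) (hn : 0 < n) (hel : (e, l) ≠ (0, 0))
    (a2 b2 a3 b3 : ℕ) (g2 h2 g3 h3 : ℤ)
    -- `b₂` is the smallest positive integer admitting a relation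
    -- `-a₂(e,ℓ) + b₂(f,m) = (g₂,h₂) ∈ dℤ ⊕ nℤ` with `a₂ < ord((e,ℓ))` and
    -- `g₂ > 0` or `h₂ > 0` or `(g₂,h₂) = (0,0)`.
    (hb2pos : 0 < b2)
    (ha2ord : a2 < addOrderOf (((e : ZMod d), (l : ZMod n)) : ZMod d × ZMod n))
    (hrel2x : -(a2 : ℤ) * e + b2 * f = g2) (hrel2y : -(a2 : ℤ) * l + b2 * m = h2)
    (hdvd2 : (d : ℤ) ∣ g2 ∧ (n : ℤ) ∣ h2)
    (hsign2 : 0 < g2 ∨ 0 < h2 ∨ (g2 = 0 ∧ h2 = 0))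
    (hmin2 : ∀ b' : ℕ, 0 < b' →
      (∃ (a' : ℕ) (g h : ℤ), a' < addOrderOf (((e : ZMod d), (l : ZMod n)) : ZMod d × ZMod n) ∧
        -(a' : ℤ) * e + b' * f = g ∧ -(a' : ℤ) * l + b' * m = h ∧
        (d : ℤ) ∣ g ∧ (n : ℤ) ∣ h ∧ (0 < g ∨ 0 < h ∨ (g = 0 ∧ h = 0))) → b2 ≤ b')
    -- `a₃` is the smallest positive integer admitting a relation
    -- `a₃(e,ℓ) - b₃(f,m) = (g₃,h₃) ∈ dℤ ⊕ nℤ` with `b₃ < ord((f,m))`,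
    -- `g₃, h₃ ≥ 0` not both zero.
    (ha3pos : 0 < a3)
    (hb3ord : b3 < addOrderOf (((f : ZMod d), (m : ZMod n)) : ZMod d × ZMod n))
    (hrel3x : (a3 : ℤ) * e - b3 * f = g3) (hrel3y : (a3 : ℤ) * l - b3 * m = h3)
    (hdvd3 : (d : ℤ) ∣ g3 ∧ (n : ℤ) ∣ h3)
    (hsign3 : 0 ≤ g3 ∧ 0 ≤ h3 ∧ ¬(g3 = 0 ∧ h3 = 0))
    (hmin3 : ∀ a' : ℕ, 0 < a' →
      (∃ (b' : ℕ) (g h : ℤ), b' < addOrderOf (((f : ZMod d), (m : ZMod n)) : ZMod d × ZMod n) ∧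
        (a' : ℤ) * e - b' * f = g ∧ (a' : ℤ) * l - b' * m = h ∧
        (d : ℤ) ∣ g ∧ (n : ℤ) ∣ h ∧ 0 ≤ g ∧ 0 ≤ h ∧ ¬(g = 0 ∧ h = 0)) → a3 ≤ a')
    (ha23 : a2 < a3) (hb32 : b3 < b2)
    (H : AddSubgroup (ZMod d × ZMod n))
    (hH : H = AddSubgroup.closure {((e : ZMod d), (l : ZMod n)), ((f : ZMod d), (m : ZMod n))}) :
    Nat.card H = a3 * b2 - a2 * b3 ∧
    Nat.card H = a3 * (b2 - b3) + (a3 - a2) * b3 ∧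
    Nat.card H = (a3 - a2) * b2 + a2 * (b2 - b3) := by
  classical
  haveI : NeZero d := ⟨hd.ne'⟩
  haveI : NeZero n := ⟨hn.ne'⟩
  set P : ZMod d × ZMod n := ((e : ZMod d), (l : ZMod n)) with hPdef
  set Q : ZMod d × ZMod n := ((f : ZMod d), (m : ZMod n)) with hQdef
  set K : ℕ := addOrderOf P with hKdef
  set OQ : ℕ := addOrderOf Q with hOQdef
  have hKpos : 0 < K := addOrderOf_pos P
  have hOQpos : 0 < OQ := addOrderOf_pos Q
  have hKz : (0:ℤ) < (K:ℤ) := by exact_mod_cast hKpos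
  have hOQz : (0:ℤ) < (OQ:ℤ) := by exact_mod_cast hOQpos
  -- basic cast facts
  have he0 : (0:ℤ) ≤ (e:ℤ) := Int.natCast_nonneg e
  have hf0 : (0:ℤ) ≤ (f:ℤ) := Int.natCast_nonneg f
  have hl0 : (0:ℤ) ≤ (l:ℤ) := Int.natCast_nonneg l
  have hm0 : (0:ℤ) ≤ (m:ℤ) := Int.natCast_nonneg m
  have helZ : ¬((e:ℤ) = 0 ∧ (l:ℤ) = 0) := by
    rintro ⟨he, hl⟩
    apply hel
    have : e = 0 := by exact_mod_cast he
    have : l = 0 := by exact_mod_cast hl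
    simp_all
  -- the key link between integer relations and group relations
  have zero_iff : ∀ x y : ℤ, (x • P + y • Q = 0) ↔
      ((d : ℤ) ∣ (x * e + y * f) ∧ (n : ℤ) ∣ (x * l + y * m)) := by
    intro x y
    have hcomp : x • P + y • Q =
        (((x * e + y * f : ℤ) : ZMod d), ((x * l + y * m : ℤ) : ZMod n)) := by
      rw [hPdef, hQdef]
      simp only [Prod.smul_mk, Prod.mk_add_mk, Prod.mk.injEq]
      constructor <;> (rw [zsmul_eq_mul, zsmul_eq_mul]; push_cast; ring)
    rw [hcomp, Prod.mk_eq_zero, ZMod.intCast_zmod_eq_zero_iff_dvd,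
      ZMod.intCast_zmod_eq_zero_iff_dvd]
  -- divisibility facts from orders
  have hKrel : (K:ℤ) • P + (0:ℤ) • Q = 0 := by
    rw [zero_smul, add_zero, natCast_zsmul, hKdef, addOrderOf_nsmul_eq_zero]
  have hdKe : (d:ℤ) ∣ (K:ℤ) * e := by
    have := (zero_iff K 0).mp hKrel
    simpa using this.1
  have hnKl : (n:ℤ) ∣ (K:ℤ) * l := by
    have := (zero_iff K 0).mp hKrel
    simpa using this.2
  have hOQrel : (0:ℤ) • P + (OQ:ℤ) • Q = 0 := by
    rw [zero_smul, zero_add, natCast_zsmul, hOQdef, addOrderOf_nsmul_eq_zero]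
  have hdOQf : (d:ℤ) ∣ (OQ:ℤ) * f := by
    have := (zero_iff 0 OQ).mp hOQrel
    simpa using this.1
  have hnOQm : (n:ℤ) ∣ (OQ:ℤ) * m := by
    have := (zero_iff 0 OQ).mp hOQrel
    simpa using this.2
  -- relation divisibilities for u = (-a2, b2) and v = (a3, -b3)
  have hdg2 : (d:ℤ) ∣ (-(a2:ℤ) * e + (b2:ℤ) * f) := by rw [hrel2x]; exact hdvd2.1
  have hdh2 : (n:ℤ) ∣ (-(a2:ℤ) * l + (b2:ℤ) * m) := by rw [hrel2y]; exact hdvd2.2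
  have hdg3 : (d:ℤ) ∣ ((a3:ℤ) * e - (b3:ℤ) * f) := by rw [hrel3x]; exact hdvd3.1
  have hdh3 : (n:ℤ) ∣ ((a3:ℤ) * l - (b3:ℤ) * m) := by rw [hrel3y]; exact hdvd3.2
  -- integer versions of the minimality hypotheses
  have HM2 : ∀ a' b' : ℤ, 0 ≤ a' → a' < (K:ℤ) → 0 < b' →
      (d:ℤ) ∣ (-a' * e + b' * f) → (n:ℤ) ∣ (-a' * l + b' * m) →
      (0 < -a' * e + b' * f ∨ 0 < -a' * l + b' * m ∨
        (-a' * e + b' * f = 0 ∧ -a' * l + b' * m = 0)) →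
      (b2:ℤ) ≤ b' := by
    intro a' b' ha0 haK hb0 hdvg hdvh hsgn
    have hb2le : b2 ≤ b'.toNat := by
      apply hmin2 b'.toNat (by omega)
      refine ⟨a'.toNat, -a' * e + b' * f, -a' * l + b' * m, by omega, ?_, ?_, hdvg, hdvh, hsgn⟩
      · rw [Int.toNat_of_nonneg ha0, Int.toNat_of_nonneg hb0.le]
      · rw [Int.toNat_of_nonneg ha0, Int.toNat_of_nonneg hb0.le]
    omega
  have HM3 : ∀ a' b' : ℤ, 0 < a' → 0 ≤ b' → b' < (OQ:ℤ) →
      (d:ℤ) ∣ (a' * e - b' * f) → (n:ℤ) ∣ (a' * l - b' * m) →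
      0 ≤ a' * e - b' * f → 0 ≤ a' * l - b' * m →
      ¬(a' * e - b' * f = 0 ∧ a' * l - b' * m = 0) →
      (a3:ℤ) ≤ a' := by
    intro a' b' ha0 hb0 hbOQ hdvg hdvh hs1 hs2 hs3
    have ha3le : a3 ≤ a'.toNat := by
      apply hmin3 a'.toNat (by omega)
      refine ⟨b'.toNat, a' * e - b' * f, a' * l - b' * m, by omega, ?_, ?_, hdvg, hdvh,
        hs1, hs2, hs3⟩
      · rw [Int.toNat_of_nonneg ha0.le, Int.toNat_of_nonneg hb0]
      · rw [Int.toNat_of_nonneg ha0.le, Int.toNat_of_nonneg hb0]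
    omega
  -- Lemma N : no lattice vector with x > 0 ≥ y unless a3 ≤ x or b2 ≤ -y
  have lemN : ∀ x y : ℤ, 0 < x → y ≤ 0 →
      (d:ℤ) ∣ (x * e + y * f) → (n:ℤ) ∣ (x * l + y * m) →
      ((a3:ℤ) ≤ x ∨ (b2:ℤ) ≤ -y) := by
    intro x y hx hy hg hh
    by_cases hs : 0 ≤ x * e + y * f ∧ 0 ≤ x * l + y * m ∧
        ¬(x * e + y * f = 0 ∧ x * l + y * m = 0)
    · left
      obtain ⟨hs1, hs2, hs3⟩ := hs
      set b' : ℤ := (-y) % (OQ:ℤ) with hb'def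
      have hb'0 : 0 ≤ b' := Int.emod_nonneg _ (by omega)
      have hb'lt : b' < (OQ:ℤ) := Int.emod_lt_of_pos _ hOQz
      have hq0 : 0 ≤ (-y) / (OQ:ℤ) := Int.ediv_nonneg (by omega) hOQz.le
      have e1 : x * e - b' * f = (x * e + y * f) + (-y / (OQ:ℤ)) * ((OQ:ℤ) * f) := by
        rw [hb'def, Int.emod_def]; ring
      have e2 : x * l - b' * m = (x * l + y * m) + (-y / (OQ:ℤ)) * ((OQ:ℤ) * m) := by
        rw [hb'def, Int.emod_def]; ring
      have ht1 : 0 ≤ (-y / (OQ:ℤ)) * ((OQ:ℤ) * f) :=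
        mul_nonneg hq0 (mul_nonneg hOQz.le hf0)
      have ht2 : 0 ≤ (-y / (OQ:ℤ)) * ((OQ:ℤ) * m) :=
        mul_nonneg hq0 (mul_nonneg hOQz.le hm0)
      apply HM3 x b' hx hb'0 hb'lt
      · rw [e1]; exact dvd_add hg (Dvd.dvd.mul_left hdOQf _)
      · rw [e2]; exact dvd_add hh (Dvd.dvd.mul_left hnOQm _)
      · rw [e1]; linarith
      · rw [e2]; linarith
      · rintro ⟨hz1, hz2⟩
        rw [e1] at hz1; rw [e2] at hz2
        exact hs3 ⟨by linarith, by linarith⟩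
    · right
      have hcase : x * e + y * f < 0 ∨ x * l + y * m < 0 ∨
          (x * e + y * f = 0 ∧ x * l + y * m = 0) := by
        by_contra hc
        push_neg at hc
        exact hs ⟨hc.1, hc.2.1, fun hz => hc.2.2 hz.1 hz.2⟩
      have hy0 : y < 0 := by
        rcases hy.lt_or_eq with h | h
        · exact h
        · exfalso
          subst h
          have hge : 0 ≤ x * e + 0 * f := by
            simp only [zero_mul, add_zero]; exact mul_nonneg hx.le he0
          have hgl : 0 ≤ x * l + 0 * m := by
            simp only [zero_mul, add_zero]; exact mul_nonneg hx.le hl0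
          rcases hcase with h | h | h
          · linarith
          · linarith
          · simp only [zero_mul, add_zero] at h
            rcases mul_eq_zero.mp h.1 with h' | h'
            · exact absurd h' (by positivity)
            · rcases mul_eq_zero.mp h.2 with h'' | h''
              · exact absurd h'' (by positivity)
              · exact helZ ⟨h', h''⟩
      set t : ℤ := x % (K:ℤ) with htdef
      have ht0 : 0 ≤ t := Int.emod_nonneg _ (by omega)
      have htK : t < (K:ℤ) := Int.emod_lt_of_pos _ hKz
      have hq0 : 0 ≤ x / (K:ℤ) := Int.ediv_nonneg hx.le hKz.le
      have e1 : -t * e + (-y) * f = -(x * e + y * f) + (x / (K:ℤ)) * ((K:ℤ) * e) := by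
        rw [htdef, Int.emod_def]; ring
      have e2 : -t * l + (-y) * m = -(x * l + y * m) + (x / (K:ℤ)) * ((K:ℤ) * l) := by
        rw [htdef, Int.emod_def]; ring
      have ht1 : 0 ≤ (x / (K:ℤ)) * ((K:ℤ) * e) := mul_nonneg hq0 (mul_nonneg hKz.le he0)
      have ht2 : 0 ≤ (x / (K:ℤ)) * ((K:ℤ) * l) := mul_nonneg hq0 (mul_nonneg hKz.le hl0)
      apply HM2 t (-y) ht0 htK (by omega)
      · rw [e1]; exact dvd_add (dvd_neg.mpr hg) (Dvd.dvd.mul_left hdKe _)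
      · rw [e2]; exact dvd_add (dvd_neg.mpr hh) (Dvd.dvd.mul_left hnKl _)
      · rcases hcase with h | h | h
        · left; rw [e1]; linarith
        · right; left; rw [e2]; linarith
        · have hv1 : -t * e + (-y) * f = (x / (K:ℤ)) * ((K:ℤ) * e) := by
            rw [e1, h.1]; ring
          have hv2 : -t * l + (-y) * m = (x / (K:ℤ)) * ((K:ℤ) * l) := by
            rw [e2, h.2]; ring
          rcases ht1.lt_or_eq with h1 | h1
          · left; rw [hv1]; exact h1
          · rcases ht2.lt_or_eq with h2 | h2
            · right; left; rw [hv2]; exact h2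
            · right; right; rw [hv1, hv2]; exact ⟨h1.symm, h2.symm⟩
  -- Lemma M : no lattice vector with x ≤ 0 < y unless b2 ≤ y or a3 ≤ -x
  have lemM : ∀ x y : ℤ, x ≤ 0 → 0 < y →
      (d:ℤ) ∣ (x * e + y * f) → (n:ℤ) ∣ (x * l + y * m) →
      ((b2:ℤ) ≤ y ∨ (a3:ℤ) ≤ -x) := by
    intro x y hx hy hg hh
    by_cases hs : 0 < x * e + y * f ∨ 0 < x * l + y * m ∨
        (x * e + y * f = 0 ∧ x * l + y * m = 0)
    · left
      set t : ℤ := (-x) % (K:ℤ) with htdef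
      have ht0 : 0 ≤ t := Int.emod_nonneg _ (by omega)
      have htK : t < (K:ℤ) := Int.emod_lt_of_pos _ hKz
      have hq0 : 0 ≤ (-x) / (K:ℤ) := Int.ediv_nonneg (by omega) hKz.le
      have e1 : -t * e + y * f = (x * e + y * f) + ((-x) / (K:ℤ)) * ((K:ℤ) * e) := by
        rw [htdef, Int.emod_def]; ring
      have e2 : -t * l + y * m = (x * l + y * m) + ((-x) / (K:ℤ)) * ((K:ℤ) * l) := by
        rw [htdef, Int.emod_def]; ring
      have ht1 : 0 ≤ ((-x) / (K:ℤ)) * ((K:ℤ) * e) := mul_nonneg hq0 (mul_nonneg hKz.le he0)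
      have ht2 : 0 ≤ ((-x) / (K:ℤ)) * ((K:ℤ) * l) := mul_nonneg hq0 (mul_nonneg hKz.le hl0)
      apply HM2 t y ht0 htK hy
      · rw [e1]; exact dvd_add hg (Dvd.dvd.mul_left hdKe _)
      · rw [e2]; exact dvd_add hh (Dvd.dvd.mul_left hnKl _)
      · rcases hs with h | h | h
        · left; rw [e1]; linarith
        · right; left; rw [e2]; linarith
        · have hv1 : -t * e + y * f = ((-x) / (K:ℤ)) * ((K:ℤ) * e) := by
            rw [e1, h.1]; ring
          have hv2 : -t * l + y * m = ((-x) / (K:ℤ)) * ((K:ℤ) * l) := by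
            rw [e2, h.2]; ring
          rcases ht1.lt_or_eq with h1 | h1
          · left; rw [hv1]; exact h1
          · rcases ht2.lt_or_eq with h2 | h2
            · right; left; rw [hv2]; exact h2
            · right; right; rw [hv1, hv2]; exact ⟨h1.symm, h2.symm⟩
    · right
      have hs1 : x * e + y * f ≤ 0 := le_of_not_gt (fun h => hs (Or.inl h))
      have hs2 : x * l + y * m ≤ 0 := le_of_not_gt (fun h => hs (Or.inr (Or.inl h)))
      have hs3 : ¬(x * e + y * f = 0 ∧ x * l + y * m = 0) :=
        fun h => hs (Or.inr (Or.inr h))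
      have hx0 : x < 0 := by
        rcases hx.lt_or_eq with h | h
        · exact h
        · exfalso
          subst h
          have hge : 0 ≤ 0 * e + y * f := by
            simp only [zero_mul, zero_add]; exact mul_nonneg hy.le hf0
          have hgl : 0 ≤ 0 * l + y * m := by
            simp only [zero_mul, zero_add]; exact mul_nonneg hy.le hm0
          exact hs3 ⟨le_antisymm hs1 hge, le_antisymm hs2 hgl⟩
      set b' : ℤ := y % (OQ:ℤ) with hb'def
      have hb'0 : 0 ≤ b' := Int.emod_nonneg _ (by omega)
      have hb'lt : b' < (OQ:ℤ) := Int.emod_lt_of_pos _ hOQz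
      have hq0 : 0 ≤ y / (OQ:ℤ) := Int.ediv_nonneg hy.le hOQz.le
      have e1 : (-x) * e - b' * f = -(x * e + y * f) + (y / (OQ:ℤ)) * ((OQ:ℤ) * f) := by
        rw [hb'def, Int.emod_def]; ring
      have e2 : (-x) * l - b' * m = -(x * l + y * m) + (y / (OQ:ℤ)) * ((OQ:ℤ) * m) := by
        rw [hb'def, Int.emod_def]; ring
      have ht1 : 0 ≤ (y / (OQ:ℤ)) * ((OQ:ℤ) * f) := mul_nonneg hq0 (mul_nonneg hOQz.le hf0)
      have ht2 : 0 ≤ (y / (OQ:ℤ)) * ((OQ:ℤ) * m) := mul_nonneg hq0 (mul_nonneg hOQz.le hm0)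
      apply HM3 (-x) b' (by omega) hb'0 hb'lt
      · rw [e1]; exact dvd_add (dvd_neg.mpr hg) (Dvd.dvd.mul_left hdOQf _)
      · rw [e2]; exact dvd_add (dvd_neg.mpr hh) (Dvd.dvd.mul_left hnOQm _)
      · rw [e1]; linarith
      · rw [e2]; linarith
      · rintro ⟨hz1, hz2⟩
        rw [e1] at hz1; rw [e2] at hz2
        exact hs3 ⟨by linarith, by linarith⟩
  -- cast facts for the coefficients
  have ha2z : (0:ℤ) ≤ (a2:ℤ) := Int.natCast_nonneg a2
  have hb3z : (0:ℤ) ≤ (b3:ℤ) := Int.natCast_nonneg b3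
  have ha3z : (0:ℤ) < (a3:ℤ) := by exact_mod_cast ha3pos
  have hb2z : (0:ℤ) < (b2:ℤ) := by exact_mod_cast hb2pos
  have ha23z : (a2:ℤ) < (a3:ℤ) := by exact_mod_cast ha23
  have hb32z : (b3:ℤ) < (b2:ℤ) := by exact_mod_cast hb32
  set Dz : ℤ := (a3:ℤ) * b2 - (a2:ℤ) * b3 with hDzdef
  have hDzpos : 0 < Dz := by
    rw [hDzdef]
    have s1 : (a2:ℤ) * b3 ≤ (a2:ℤ) * b2 := mul_le_mul_of_nonneg_left hb32z.le ha2z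
    have s2 : (a2:ℤ) * b2 < (a3:ℤ) * b2 := mul_lt_mul_of_pos_right ha23z hb2z
    linarith
  -- Claim C : no nonzero lattice vector in the fundamental parallelogram
  have claimC : ∀ x y : ℤ,
      (d:ℤ) ∣ (x * e + y * f) → (n:ℤ) ∣ (x * l + y * m) →
      0 ≤ (b3:ℤ) * x + (a3:ℤ) * y → (b3:ℤ) * x + (a3:ℤ) * y < Dz →
      0 ≤ (b2:ℤ) * x + (a2:ℤ) * y → (b2:ℤ) * x + (a2:ℤ) * y < Dz →
      x = 0 ∧ y = 0 := by
    intro x y hg hh h1 h2 h3 h4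
    have idx : x * Dz = (a3:ℤ) * ((b2:ℤ) * x + (a2:ℤ) * y)
        - (a2:ℤ) * ((b3:ℤ) * x + (a3:ℤ) * y) := by rw [hDzdef]; ring
    have idy : y * Dz = (b2:ℤ) * ((b3:ℤ) * x + (a3:ℤ) * y)
        - (b3:ℤ) * ((b2:ℤ) * x + (a2:ℤ) * y) := by rw [hDzdef]; ring
    have hn1 : 0 ≤ (a2:ℤ) * ((b3:ℤ) * x + (a3:ℤ) * y) := mul_nonneg ha2z h1
    have hn2 : 0 ≤ (a3:ℤ) * ((b2:ℤ) * x + (a2:ℤ) * y) := mul_nonneg ha3z.le h3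
    have hn3 : 0 ≤ (b3:ℤ) * ((b2:ℤ) * x + (a2:ℤ) * y) := mul_nonneg hb3z h3
    have hn4 : 0 ≤ (b2:ℤ) * ((b3:ℤ) * x + (a3:ℤ) * y) := mul_nonneg hb2z.le h1
    have hm1 : (a3:ℤ) * ((b2:ℤ) * x + (a2:ℤ) * y) < (a3:ℤ) * Dz :=
      mul_lt_mul_of_pos_left h4 ha3z
    have hm2 : (a2:ℤ) * ((b3:ℤ) * x + (a3:ℤ) * y) ≤ (a2:ℤ) * Dz :=
      mul_le_mul_of_nonneg_left h2.le ha2z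
    have hm3 : (b2:ℤ) * ((b3:ℤ) * x + (a3:ℤ) * y) < (b2:ℤ) * Dz :=
      mul_lt_mul_of_pos_left h2 hb2z
    have hm4 : (b3:ℤ) * ((b2:ℤ) * x + (a2:ℤ) * y) ≤ (b3:ℤ) * Dz :=
      mul_le_mul_of_nonneg_left h4.le hb3z
    have hxlt : x < (a3:ℤ) := by
      have hlt : x * Dz < (a3:ℤ) * Dz := by linarith
      exact lt_of_mul_lt_mul_right hlt hDzpos.le
    have hxge : -(a2:ℤ) ≤ x := by
      have hlt : (-(a2:ℤ)) * Dz ≤ x * Dz := by linarith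
      exact le_of_mul_le_mul_right hlt hDzpos
    have hylt : y < (b2:ℤ) := by
      have hlt : y * Dz < (b2:ℤ) * Dz := by linarith
      exact lt_of_mul_lt_mul_right hlt hDzpos.le
    have hyge : -(b3:ℤ) ≤ y := by
      have hlt : (-(b3:ℤ)) * Dz ≤ y * Dz := by linarith
      exact le_of_mul_le_mul_right hlt hDzpos
    rcases le_or_gt x 0 with hx | hx
    · rcases le_or_gt y 0 with hy | hy
      · -- x ≤ 0, y ≤ 0
        have hb3x : (b3:ℤ) * x ≤ 0 := mul_nonpos_of_nonneg_of_nonpos hb3z hx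
        have ha3y : 0 ≤ (a3:ℤ) * y := by linarith
        have ha3y' : (a3:ℤ) * y ≤ 0 := mul_nonpos_of_nonneg_of_nonpos ha3z.le hy
        have hy0 : y = 0 := by
          rcases mul_eq_zero.mp (le_antisymm ha3y' ha3y) with h | h
          · exact absurd h ha3z.ne'
          · exact h
        have hb2x : 0 ≤ (b2:ℤ) * x := by
          have h3' := h3
          rw [hy0, mul_zero, add_zero] at h3'
          exact h3'
        have hb2x' : (b2:ℤ) * x ≤ 0 := mul_nonpos_of_nonneg_of_nonpos hb2z.le hx
        have hx0 : x = 0 := by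
          rcases mul_eq_zero.mp (le_antisymm hb2x' hb2x) with h | h
          · exact absurd h hb2z.ne'
          · exact h
        exact ⟨hx0, hy0⟩
      · -- x ≤ 0 < y
        exfalso
        rcases lemM x y hx hy hg hh with h | h
        · linarith
        · linarith
    · rcases le_or_gt y 0 with hy | hy
      · -- 0 < x, y ≤ 0
        exfalso
        rcases lemN x y hx hy hg hh with h | h
        · linarith
        · linarith
      · -- 0 < x, 0 < y
        exfalso
        have hgN : (d:ℤ) ∣ (((a3:ℤ) - x) * e + (-(b3:ℤ) - y) * f) := by
          have hrw : ((a3:ℤ) - x) * e + (-(b3:ℤ) - y) * f =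
              ((a3:ℤ) * e - (b3:ℤ) * f) - (x * e + y * f) := by ring
          rw [hrw]; exact dvd_sub hdg3 hg
        have hhN : (n:ℤ) ∣ (((a3:ℤ) - x) * l + (-(b3:ℤ) - y) * m) := by
          have hrw : ((a3:ℤ) - x) * l + (-(b3:ℤ) - y) * m =
              ((a3:ℤ) * l - (b3:ℤ) * m) - (x * l + y * m) := by ring
          rw [hrw]; exact dvd_sub hdh3 hh
        have r1 := lemN ((a3:ℤ) - x) (-(b3:ℤ) - y) (by linarith) (by linarith) hgN hhN
        have hby : (b2:ℤ) - (b3:ℤ) ≤ y := by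
          rcases r1 with h | h
          · linarith
          · linarith
        have hgM : (d:ℤ) ∣ ((-(a2:ℤ) - x) * e + ((b2:ℤ) - y) * f) := by
          have hrw : (-(a2:ℤ) - x) * e + ((b2:ℤ) - y) * f =
              (-(a2:ℤ) * e + (b2:ℤ) * f) - (x * e + y * f) := by ring
          rw [hrw]; exact dvd_sub hdg2 hg
        have hhM : (n:ℤ) ∣ ((-(a2:ℤ) - x) * l + ((b2:ℤ) - y) * m) := by
          have hrw : (-(a2:ℤ) - x) * l + ((b2:ℤ) - y) * m =
              (-(a2:ℤ) * l + (b2:ℤ) * m) - (x * l + y * m) := by ring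
          rw [hrw]; exact dvd_sub hdh2 hh
        have r2 := lemM (-(a2:ℤ) - x) ((b2:ℤ) - y) (by linarith) (by linarith) hgM hhM
        have hax : (a3:ℤ) - (a2:ℤ) ≤ x := by
          rcases r2 with h | h
          · linarith
          · linarith
        -- now b3*x + a3*y ≥ b3*(a3-a2) + a3*(b2-b3) = Dz, contradiction
        have c1 : (b3:ℤ) * ((a3:ℤ) - (a2:ℤ)) ≤ (b3:ℤ) * x :=
          mul_le_mul_of_nonneg_left hax hb3z
        have c2 : (a3:ℤ) * ((b2:ℤ) - (b3:ℤ)) ≤ (a3:ℤ) * y :=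
          mul_le_mul_of_nonneg_left hby ha3z.le
        rw [hDzdef] at h2
        linarith
  -- every lattice vector is an integer combination of u and v
  have spanL : ∀ x y : ℤ,
      (d:ℤ) ∣ (x * e + y * f) → (n:ℤ) ∣ (x * l + y * m) →
      ∃ s t : ℤ, x = -(a2:ℤ) * s + (a3:ℤ) * t ∧ y = (b2:ℤ) * s - (b3:ℤ) * t := by
    intro x y hg hh
    set s : ℤ := ((b3:ℤ) * x + (a3:ℤ) * y) / Dz with hsdef
    set t : ℤ := ((b2:ℤ) * x + (a2:ℤ) * y) / Dz with htdef
    set x' : ℤ := x - (-(a2:ℤ) * s + (a3:ℤ) * t) with hx'def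
    set y' : ℤ := y - ((b2:ℤ) * s - (b3:ℤ) * t) with hy'def
    have hg' : (d:ℤ) ∣ (x' * e + y' * f) := by
      have hrw : x' * e + y' * f = (x * e + y * f)
          - s * (-(a2:ℤ) * e + (b2:ℤ) * f) - t * ((a3:ℤ) * e - (b3:ℤ) * f) := by
        rw [hx'def, hy'def]; ring
      rw [hrw]
      exact dvd_sub (dvd_sub hg (Dvd.dvd.mul_left hdg2 s)) (Dvd.dvd.mul_left hdg3 t)
    have hh' : (n:ℤ) ∣ (x' * l + y' * m) := by
      have hrw : x' * l + y' * m = (x * l + y * m)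
          - s * (-(a2:ℤ) * l + (b2:ℤ) * m) - t * ((a3:ℤ) * l - (b3:ℤ) * m) := by
        rw [hx'def, hy'def]; ring
      rw [hrw]
      exact dvd_sub (dvd_sub hh (Dvd.dvd.mul_left hdh2 s)) (Dvd.dvd.mul_left hdh3 t)
    have hα : (b3:ℤ) * x' + (a3:ℤ) * y' = ((b3:ℤ) * x + (a3:ℤ) * y) % Dz := by
      rw [hx'def, hy'def, hsdef, Int.emod_def, hDzdef]; ring
    have hβ : (b2:ℤ) * x' + (a2:ℤ) * y' = ((b2:ℤ) * x + (a2:ℤ) * y) % Dz := by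
      rw [hx'def, hy'def, htdef, Int.emod_def, hDzdef]; ring
    have hDne : Dz ≠ 0 := hDzpos.ne'
    have hc := claimC x' y' hg' hh'
      (by rw [hα]; exact Int.emod_nonneg _ hDne)
      (by rw [hα]; exact Int.emod_lt_of_pos _ hDzpos)
      (by rw [hβ]; exact Int.emod_nonneg _ hDne)
      (by rw [hβ]; exact Int.emod_lt_of_pos _ hDzpos)
    refine ⟨s, t, ?_, ?_⟩
    · have := hc.1; rw [hx'def] at this; linarith
    · have := hc.2; rw [hy'def] at this; linarith
  -- the subgroup generated modulo P
  set ZP : AddSubgroup (ZMod d × ZMod n) := AddSubgroup.zmultiples P with hZPdef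
  haveI : Finite ((ZMod d × ZMod n) ⧸ ZP) := Quotient.finite _
  set Qb : (ZMod d × ZMod n) ⧸ ZP := QuotientAddGroup.mk Q with hQbdef
  set c : ℕ := addOrderOf Qb with hcdef
  have hcpos : 0 < c := addOrderOf_pos Qb
  have hcz : (0:ℤ) < (c:ℤ) := by exact_mod_cast hcpos
  have hmkP : (QuotientAddGroup.mk P : (ZMod d × ZMod n) ⧸ ZP) = 0 := by
    rw [QuotientAddGroup.eq_zero_iff]
    exact AddSubgroup.mem_zmultiples P
  have hcdvd : ∀ y : ℤ, (∃ x : ℤ, x • P + y • Q = 0) → (c:ℤ) ∣ y := by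
    rintro y ⟨x, hx⟩
    have hyQ : y • Q = (-x) • P := by
      rw [neg_smul]
      exact eq_neg_of_add_eq_zero_left (by rw [add_comm]; exact hx)
    have hQb0 : y • Qb = 0 := by
      rw [hQbdef, ← QuotientAddGroup.mk_zsmul, hyQ, QuotientAddGroup.mk_zsmul, hmkP, smul_zero]
    exact addOrderOf_dvd_iff_zsmul_eq_zero.mpr hQb0
  have hKP : ∀ x : ℤ, x • P = 0 → (K:ℤ) ∣ x := by
    intro x hx
    rw [hKdef]
    exact addOrderOf_dvd_iff_zsmul_eq_zero.mpr hx
  obtain ⟨z, hz⟩ : ∃ z : ℤ, (c:ℤ) • Q = z • P := by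
    have h0 : (c:ℕ) • Qb = 0 := by rw [hcdef]; exact addOrderOf_nsmul_eq_zero Qb
    have h1 : (QuotientAddGroup.mk ((c:ℕ) • Q) : (ZMod d × ZMod n) ⧸ ZP) = 0 := by
      rw [QuotientAddGroup.mk_nsmul]; exact h0
    rw [QuotientAddGroup.eq_zero_iff] at h1
    obtain ⟨z, hz⟩ := AddSubgroup.mem_zmultiples_iff.mp h1
    exact ⟨z, by rw [natCast_zsmul]; exact hz.symm⟩
  -- membership characterization of H
  have hmemH : ∀ w : ZMod d × ZMod n, w ∈ H ↔ ∃ x y : ℤ, w = x • P + y • Q := by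
    intro w
    rw [hH]
    constructor
    · intro hw
      refine AddSubgroup.closure_induction (fun w₁ hw₁ => ?_) ⟨0, 0, by simp⟩
        (fun w₁ w₂ _ _ ih₁ ih₂ => ?_) (fun w₁ _ ih₁ => ?_) hw
      · rcases hw₁ with h | h
        · exact ⟨1, 0, by rw [h]; simp⟩
        · exact ⟨0, 1, by rw [Set.mem_singleton_iff.mp h]; simp⟩
      · obtain ⟨x₁, y₁, rfl⟩ := ih₁
        obtain ⟨x₂, y₂, rfl⟩ := ih₂
        exact ⟨x₁ + x₂, y₁ + y₂, by rw [add_smul, add_smul]; abel⟩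
      · obtain ⟨x₁, y₁, rfl⟩ := ih₁
        exact ⟨-x₁, -y₁, by rw [neg_smul, neg_smul]; abel⟩
    · rintro ⟨x, y, rfl⟩
      have hPmem : P ∈ AddSubgroup.closure ({P, Q} : Set (ZMod d × ZMod n)) :=
        AddSubgroup.subset_closure (by left; rfl)
      have hQmem : Q ∈ AddSubgroup.closure ({P, Q} : Set (ZMod d × ZMod n)) :=
        AddSubgroup.subset_closure (by right; rfl)
      exact AddSubgroup.add_mem _ (AddSubgroup.zsmul_mem _ hPmem x)
        (AddSubgroup.zsmul_mem _ hQmem y)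
  -- counting: |H| = K * c
  set Sbox : Finset (ℤ × ℤ) := Finset.Ico (0:ℤ) (K:ℤ) ×ˢ Finset.Ico (0:ℤ) (c:ℤ) with hSbox
  have hZKP : ((K:ℤ)) • P = 0 := by
    rw [natCast_zsmul, hKdef]; exact addOrderOf_nsmul_eq_zero P
  have hred : ∀ x y : ℤ, ∃ p : ℤ × ℤ, p ∈ Sbox ∧ p.1 • P + p.2 • Q = x • P + y • Q := by
    intro x y
    set x1 : ℤ := x + (y / (c:ℤ)) * z with hx1def
    refine ⟨(x1 % (K:ℤ), y % (c:ℤ)), ?_, ?_⟩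
    · rw [hSbox, Finset.mem_product]
      constructor
      · rw [Finset.mem_Ico]
        exact ⟨Int.emod_nonneg _ (by omega), Int.emod_lt_of_pos _ hKz⟩
      · rw [Finset.mem_Ico]
        exact ⟨Int.emod_nonneg _ (by omega), Int.emod_lt_of_pos _ hcz⟩
    · have hy : y • Q = ((c:ℤ) * (y / (c:ℤ))) • Q + (y % (c:ℤ)) • Q := by
        rw [← add_smul, Int.mul_ediv_add_emod]
      have hyP : ((c:ℤ) * (y / (c:ℤ))) • Q = ((y / (c:ℤ)) * z) • P := by
        rw [mul_comm (c:ℤ), mul_smul, hz, mul_smul]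
      have hx1 : x1 • P = (x1 % (K:ℤ)) • P := by
        conv_lhs => rw [← Int.mul_ediv_add_emod x1 (K:ℤ)]
        rw [add_smul, mul_comm (K:ℤ), mul_smul, hZKP, smul_zero, zero_add]
      calc (x1 % (K:ℤ)) • P + (y % (c:ℤ)) • Q
          = x1 • P + (y % (c:ℤ)) • Q := by rw [hx1]
        _ = x • P + (((y / (c:ℤ)) * z) • P + (y % (c:ℤ)) • Q) := by
            rw [hx1def, add_smul]; abel
        _ = x • P + y • Q := by rw [hy, hyP]
  have himg : (fun p : ℤ × ℤ => p.1 • P + p.2 • Q) '' ↑Sbox = (H : Set (ZMod d × ZMod n)) := by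
    ext w
    constructor
    · rintro ⟨p, _, rfl⟩
      exact (hmemH _).mpr ⟨p.1, p.2, rfl⟩
    · intro hw
      obtain ⟨x, y, rfl⟩ := (hmemH w).mp hw
      obtain ⟨p, hp, hpe⟩ := hred x y
      exact ⟨p, Finset.mem_coe.mpr hp, hpe⟩
  have hinj : Set.InjOn (fun p : ℤ × ℤ => p.1 • P + p.2 • Q) ↑Sbox := by
    intro p hp q hq hpq0
    have hpq : p.1 • P + p.2 • Q = q.1 • P + q.2 • Q := hpq0
    rw [hSbox] at hp hq
    simp only [Finset.coe_product, Set.mem_prod, Finset.coe_Ico, Set.mem_Ico] at hp hq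
    obtain ⟨⟨hp1a, hp1b⟩, hp2a, hp2b⟩ := hp
    obtain ⟨⟨hq1a, hq1b⟩, hq2a, hq2b⟩ := hq
    have h0 : (p.1 - q.1) • P + (p.2 - q.2) • Q = 0 := by
      rw [sub_smul, sub_smul, sub_add_sub_comm, hpq, sub_self]
    have hc2 : (c:ℤ) ∣ (p.2 - q.2) := hcdvd _ ⟨p.1 - q.1, h0⟩
    have hp2 : p.2 = q.2 := by
      have := Int.eq_zero_of_abs_lt_dvd hc2 (by rw [abs_lt]; omega)
      omega
    have h0' : (p.1 - q.1) • P = 0 := by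
      rw [hp2, sub_self, zero_smul, add_zero] at h0
      exact h0
    have hk1 : (K:ℤ) ∣ (p.1 - q.1) := hKP _ h0'
    have hp1 : p.1 = q.1 := by
      have := Int.eq_zero_of_abs_lt_dvd hk1 (by rw [abs_lt]; omega)
      omega
    exact Prod.ext hp1 hp2
  have hcard : Nat.card H = K * c := by
    have h1 : Nat.card H = Nat.card ((H : Set (ZMod d × ZMod n)) : Type _) := rfl
    rw [h1, Nat.card_coe_set_eq, ← himg, Set.ncard_image_of_injOn hinj,
      Set.ncard_coe_finset, hSbox, Finset.card_product, Int.card_Ico, Int.card_Ico]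
    simp
  -- now show K * c = Dz using the two bases of the relation lattice
  obtain ⟨s1, t1, e11, e12⟩ := spanL (K:ℤ) 0 (by simpa using hdKe) (by simpa using hnKl)
  have hw2 : (-z) • P + (c:ℤ) • Q = 0 := by rw [hz, neg_smul, neg_add_cancel]
  obtain ⟨hw2d, hw2n⟩ := (zero_iff (-z) (c:ℤ)).mp hw2
  obtain ⟨s2, t2, e21, e22⟩ := spanL (-z) (c:ℤ) hw2d hw2n
  -- c divides b2 and b3
  have hurel : (-(a2:ℤ)) • P + (b2:ℤ) • Q = 0 := by
    apply (zero_iff _ _).mpr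
    exact ⟨hdg2, hdh2⟩
  have hvrel : ((a3:ℤ)) • P + (-(b3:ℤ)) • Q = 0 := by
    apply (zero_iff _ _).mpr
    constructor
    · have hrw : (a3:ℤ) * e + -(b3:ℤ) * f = (a3:ℤ) * e - (b3:ℤ) * f := by ring
      rw [hrw]; exact hdg3
    · have hrw : (a3:ℤ) * l + -(b3:ℤ) * m = (a3:ℤ) * l - (b3:ℤ) * m := by ring
      rw [hrw]; exact hdh3
  obtain ⟨p2, hp2⟩ : (c:ℤ) ∣ (b2:ℤ) := hcdvd _ ⟨-(a2:ℤ), hurel⟩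
  obtain ⟨p3, hp3⟩ : (c:ℤ) ∣ (b3:ℤ) := by
    have : (c:ℤ) ∣ (-(b3:ℤ)) := hcdvd _ ⟨(a3:ℤ), hvrel⟩
    exact (dvd_neg.mp this)
  -- K divides -a2 + p2*z and a3 - p3*z
  obtain ⟨q2, hq2⟩ : (K:ℤ) ∣ (-(a2:ℤ) + p2 * z) := by
    apply hKP
    have hstep : (-(a2:ℤ) + p2 * z) • P = (-(a2:ℤ)) • P + (b2:ℤ) • Q := by
      rw [add_smul, mul_smul, ← hz, ← mul_smul, mul_comm p2 (c:ℤ), ← hp2]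
    rw [hstep]; exact hurel
  obtain ⟨q3, hq3⟩ : (K:ℤ) ∣ ((a3:ℤ) - p3 * z) := by
    apply hKP
    have hstep : ((a3:ℤ) - p3 * z) • P = (a3:ℤ) • P + (-(b3:ℤ)) • Q := by
      rw [sub_smul, mul_smul, ← hz, ← mul_smul, mul_comm p3 (c:ℤ), ← hp3, neg_smul,
        sub_eq_add_neg]
    rw [hstep]; exact hvrel
  have id1 : Dz = (K:ℤ) * (c:ℤ) * (q3 * p2 + q2 * p3) := by
    have ha3' : (a3:ℤ) = (K:ℤ) * q3 + p3 * z := by linarith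
    have ha2' : (a2:ℤ) = p2 * z - (K:ℤ) * q2 := by linarith
    rw [hDzdef, hp2, hp3, ha3', ha2']; ring
  have id2 : (K:ℤ) * (c:ℤ) = Dz * (t1 * s2 - s1 * t2) := by
    rw [hDzdef]
    linear_combination ((b2:ℤ) * s2 - (b3:ℤ) * t2) * e11 + (K:ℤ) * e22
      + ((a2:ℤ) * s2 - (a3:ℤ) * t2) * e12
  have hKc : Dz = (K:ℤ) * (c:ℤ) := by
    have hKcpos : 0 < (K:ℤ) * (c:ℤ) := mul_pos hKz hcz
    have hobs : Dz * ((t1 * s2 - s1 * t2) * (q3 * p2 + q2 * p3)) = Dz * 1 := by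
      calc Dz * ((t1 * s2 - s1 * t2) * (q3 * p2 + q2 * p3))
          = (Dz * (t1 * s2 - s1 * t2)) * (q3 * p2 + q2 * p3) := by ring
        _ = ((K:ℤ) * (c:ℤ)) * (q3 * p2 + q2 * p3) := by rw [← id2]
        _ = Dz := by rw [← id1]
        _ = Dz * 1 := by ring
    have hunit : (t1 * s2 - s1 * t2) * (q3 * p2 + q2 * p3) = 1 :=
      mul_left_cancel₀ hDzpos.ne' hobs
    rcases Int.mul_eq_one_iff_eq_one_or_neg_one.mp hunit with ⟨hu1, hu2⟩ | ⟨hu1, hu2⟩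
    · rw [id1, hu2, mul_one]
    · exfalso
      rw [id1, hu2] at hDzpos
      linarith
  -- final assembly
  have hle : a2 * b3 ≤ a3 * b2 := Nat.mul_le_mul ha23.le hb32.le
  have hmain : Nat.card H = a3 * b2 - a2 * b3 := by
    rw [hcard]
    have : ((K * c : ℕ) : ℤ) = ((a3 * b2 - a2 * b3 : ℕ) : ℤ) := by
      push_cast [hle]
      rw [← hKc, hDzdef]
    exact_mod_cast this
  refine ⟨hmain, ?_, ?_⟩
  · rw [hmain]
    have : a3 * (b2 - b3) + (a3 - a2) * b3 = a3 * b2 - a2 * b3 := by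
      zify [hb32.le, ha23.le, hle]
      ring
    rw [this]
  · rw [hmain]
    have : (a3 - a2) * b2 + a2 * (b2 - b3) = a3 * b2 - a2 * b3 := by
      zify [hb32.le, ha23.le, hle]
      ring
    rw [this]
end

section
/- Let R = k[x^d, x^e y^ℓ, x^f y^m, y^n] as in the four-generator setup and let H be the subgroup of (ℤ/dℤ)⊕(ℤ/nℤ) generated by (e,ℓ),(f,m). Then dim_k R/(x^d,y^n) ≤ |H|(|H|+1)/2 ≤ dn(dn+1)/2. -/
/-!
Write `u = x^e y^ℓ`, `v = x^f y^m`, `g₁ = (e, ℓ)`, `g₂ = (f, m)` and `N = |H|`. Modulo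
`(x^d, y^n)` the ring is generated by `u` and `v`, so the quotient is spanned by the monomials
`u^i v^j`. If `i + j ≥ N`, the `i + j + 1` elements `a • g₁` (`0 ≤ a ≤ i`) and `-(b • g₂)`
(`1 ≤ b ≤ j`) of `H` cannot all be distinct, which yields a relation `a • g₁ + b • g₂ = 0` with
`(0, 0) ≠ (a, b) ≤ (i, j)`. Then `u^a v^b = x^(d c₁) y^(n c₂)` is `0` or `1` in the quotient, so
`u^i v^j` is a scalar multiple of a monomial of lower degree. Hence the `N(N+1)/2` monomials with
`i + j < N` span the quotient.
-/

open MvPolynomial Finset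

theorem AddSubgroup.exists_nsmul_add_nsmul_eq_zero {A : Type*} [AddCommGroup A]
    {H : AddSubgroup A} [Finite H] {g₁ g₂ : A}
    (h₁ : g₁ ∈ H) (h₂ : g₂ ∈ H) {i j : ℕ} (hij : Nat.card H ≤ i + j) :
    ∃ a ≤ i, ∃ b ≤ j, (a, b) ≠ 0 ∧ a • g₁ + b • g₂ = 0 := by
  by_contra! hne
  let ψ : ℤ → H := fun t =>
    ⟨t.toNat • g₁ - (-t).toNat • g₂, sub_mem (nsmul_mem h₁ _) (nsmul_mem h₂ _)⟩
  have key : ∀ s ∈ Icc (-j : ℤ) i, ∀ t ∈ Icc (-j : ℤ) i, s ≤ t → ψ s = ψ t → s = t := by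
    intro s hs t ht hst hψ
    rw [mem_Icc] at hs ht
    obtain ⟨a, ha⟩ : ∃ a, t.toNat = s.toNat + a := ⟨t.toNat - s.toNat, by omega⟩
    obtain ⟨b, hb⟩ : ∃ b, (-s).toNat = (-t).toNat + b := ⟨(-s).toNat - (-t).toNat, by omega⟩
    have hrel : a • g₁ + b • g₂ = 0 := by
      have := congrArg Subtype.val hψ.symm
      simp only [ψ, ha, hb, add_nsmul] at this
      rw [← sub_eq_zero] at this
      rw [← this]
      abel
    obtain ⟨rfl, rfl⟩ : a = 0 ∧ b = 0 := by
      by_contra hab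
      exact hne a (by omega) b (by omega) (by simpa using hab) hrel
    omega
  have hinj : Set.InjOn ψ (Icc (-j : ℤ) i) := fun s hs t ht hψ =>
    (le_total s t).elim (key s hs t ht · hψ) (fun h => (key t ht s hs h hψ.symm).symm)
  have := Fintype.ofFinite H
  have hcard := card_le_card_of_injOn ψ (t := univ) (fun _ _ => mem_univ _) hinj
  rw [Int.card_Icc, card_univ, Fintype.card_eq_nat_card] at hcard
  omega

section Monomials

variable {k B : Type*} [CommRing k] [CommRing B] [Algebra k B] {s t : B} {N : ℕ}

theorem pow_mul_pow_mem_span_low_degree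
    (hrel : ∀ i j, N ≤ i + j →
      ∃ a ≤ i, ∃ b ≤ j, (a, b) ≠ 0 ∧ s ^ a * t ^ b ∈ Set.range (algebraMap k B))
    (i j : ℕ) :
    s ^ i * t ^ j ∈
      Submodule.span k ((fun p : ℕ × ℕ => s ^ p.1 * t ^ p.2) '' {p | p.1 + p.2 < N}) := by
  induction hD : i + j using Nat.strong_induction_on generalizing i j with
  | _ D ih =>
    obtain hlt | hle := lt_or_ge (i + j) N
    · exact Submodule.subset_span ⟨(i, j), hlt, rfl⟩
    obtain ⟨a, ha, b, hb, hab, c, hc⟩ := hrel i j hle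
    obtain ⟨i, rfl⟩ := Nat.exists_eq_add_of_le ha
    obtain ⟨j, rfl⟩ := Nat.exists_eq_add_of_le hb
    have hsplit : s ^ (a + i) * t ^ (b + j) = c • (s ^ i * t ^ j) := by
      rw [Algebra.smul_def, hc]
      ring
    rw [hsplit]
    simp only [ne_eq, Prod.mk_eq_zero] at hab
    exact Submodule.smul_mem _ c (ih _ (by omega) i j rfl)

theorem finrank_le_of_adjoin_pair_eq_top [StrongRankCondition k]
    (hst : Algebra.adjoin k {s, t} = ⊤)
    (hrel : ∀ i j, N ≤ i + j →
      ∃ a ≤ i, ∃ b ≤ j, (a, b) ≠ 0 ∧ s ^ a * t ^ b ∈ Set.range (algebraMap k B)) :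
    Module.finrank k B ≤ N * (N + 1) / 2 := by
  let v : (Σ i : Fin N, Fin (i + 1)) → B := fun p => s ^ (p.2 : ℕ) * t ^ (p.1 - p.2 : ℕ)
  have hspan : Submodule.span k (Set.range v) = ⊤ := by
    rw [eq_top_iff]
    intro x _
    have hx : x ∈ Subalgebra.toSubmodule (Algebra.adjoin k {s, t}) := by simp [hst]
    rw [Algebra.adjoin_eq_span] at hx
    refine Submodule.span_le.mpr ?_ hx
    rintro _ hy
    obtain ⟨i, j, rfl⟩ := (Submonoid.mem_closure_pair _ _ _).mp hy
    refine Submodule.span_mono ?_ (pow_mul_pow_mem_span_low_degree hrel i j)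
    rintro _ ⟨⟨a, b⟩, hab, rfl⟩
    exact ⟨⟨⟨a + b, hab⟩, ⟨a, Nat.lt_succ_of_le (Nat.le_add_right a b)⟩⟩, by simp [v]⟩
  calc Module.finrank k B ≤ Fintype.card (Σ i : Fin N, Fin (i + 1)) :=
        finrank_le_of_span_eq_top hspan
    _ = ∑ i ∈ range (N + 1), i := by
        rw [Fintype.card_sigma, sum_range_succ']
        simp [Fin.sum_univ_eq_sum_range (· + 1)]
    _ = N * (N + 1) / 2 := by rw [sum_range_id, Nat.add_sub_cancel, mul_comm]

end Monomials

section Quotient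

variable {k A : Type*} [CommRing k] [CommRing A] [Algebra k A] {x y : A}

theorem adjoin_mk_eq_top_of_adjoin_eq_top {s t : A} (h : Algebra.adjoin k {x, s, t, y} = ⊤) :
    Algebra.adjoin k {Ideal.Quotient.mk (Ideal.span {x, y}) s,
      Ideal.Quotient.mk (Ideal.span {x, y}) t} = ⊤ := by
  set π := Ideal.Quotient.mkₐ k (Ideal.span {x, y})
  rw [eq_top_iff, ← (AlgHom.range_eq_top π).mpr (Ideal.Quotient.mkₐ_surjective k _),
    ← Algebra.map_top, ← h, AlgHom.map_adjoin, Algebra.adjoin_le_iff]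
  rintro _ ⟨z, hz, rfl⟩
  have hx : π x = 0 := Ideal.Quotient.eq_zero_iff_mem.mpr (Ideal.subset_span (by simp))
  have hy : π y = 0 := Ideal.Quotient.eq_zero_iff_mem.mpr (Ideal.subset_span (by simp))
  rcases hz with rfl | rfl | rfl | rfl
  · rw [hx]; exact zero_mem _
  · exact Algebra.subset_adjoin (by simp [π])
  · exact Algebra.subset_adjoin (by simp [π])
  · rw [hy]; exact zero_mem _

theorem mk_pow_mul_pow_mem_range (c₁ c₂ : ℕ) :
    Ideal.Quotient.mk (Ideal.span {x, y}) (x ^ c₁ * y ^ c₂) ∈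
      Set.range (algebraMap k (A ⧸ Ideal.span {x, y})) := by
  have hx : Ideal.Quotient.mk (Ideal.span {x, y}) x = 0 :=
    Ideal.Quotient.eq_zero_iff_mem.mpr (Ideal.subset_span (by simp))
  have hy : Ideal.Quotient.mk (Ideal.span {x, y}) y = 0 :=
    Ideal.Quotient.eq_zero_iff_mem.mpr (Ideal.subset_span (by simp))
  exact ⟨0 ^ c₁ * 0 ^ c₂, by simp [hx, hy]⟩

end Quotient

theorem pow_mul_pow_eq_of_nsmul_add_nsmul_eq_zero {M : Type*} [CommMonoid M] (x y : M)
    {d n e l f m a b : ℕ}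
    (h : a • ((e : ZMod d), (l : ZMod n)) + b • ((f : ZMod d), (m : ZMod n)) = 0) :
    ∃ c₁ c₂, (x ^ e * y ^ l) ^ a * (x ^ f * y ^ m) ^ b = (x ^ d) ^ c₁ * (y ^ n) ^ c₂ := by
  simp only [Prod.smul_mk, Prod.mk_add_mk, Prod.mk_eq_zero, nsmul_eq_mul] at h
  obtain ⟨⟨c₁, hc₁⟩, c₂, hc₂⟩ : d ∣ a * e + b * f ∧ n ∣ a * l + b * m := by
    simp only [← ZMod.natCast_eq_zero_iff]
    push_cast
    exact h
  refine ⟨c₁, c₂, ?_⟩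
  rw [← pow_mul, ← pow_mul, ← hc₁, ← hc₂]
  simp only [mul_pow, ← pow_mul, pow_add]
  ac_rfl

theorem stmt_14_general (k : Type*) [Field k] (d n e f l m : ℕ) (hd : 0 < d) (hn : 0 < n)
    (R : Subalgebra k (MvPolynomial (Fin 2) k))
    (hR : R = Algebra.adjoin k
      ({X 0 ^ d, X 0 ^ e * X 1 ^ l, X 0 ^ f * X 1 ^ m, X 1 ^ n} :
        Set (MvPolynomial (Fin 2) k)))
    (xd yn : R)
    (hxd : (xd : MvPolynomial (Fin 2) k) = X 0 ^ d)
    (hyn : (yn : MvPolynomial (Fin 2) k) = X 1 ^ n)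
    (H : AddSubgroup (ZMod d × ZMod n))
    (hH : H = AddSubgroup.closure {((e : ZMod d), (l : ZMod n)), ((f : ZMod d), (m : ZMod n))}) :
    Module.finrank k (R ⧸ (Ideal.span {xd, yn} : Ideal R))
      ≤ Nat.card H * (Nat.card H + 1) / 2 ∧
    Nat.card H * (Nat.card H + 1) / 2 ≤ d * n * (d * n + 1) / 2 := by
  have : NeZero d := ⟨hd.ne'⟩
  have : NeZero n := ⟨hn.ne'⟩
  have hcard : Nat.card H ≤ d * n := by
    simpa using AddSubgroup.card_le_card_addGroup H
  refine ⟨?_, Nat.div_le_div_right (Nat.mul_le_mul hcard (by omega))⟩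
  obtain ⟨u, hu⟩ : ∃ u : R, (u : MvPolynomial (Fin 2) k) = X 0 ^ e * X 1 ^ l :=
    ⟨⟨_, hR ▸ Algebra.subset_adjoin (by simp)⟩, rfl⟩
  obtain ⟨v, hv⟩ : ∃ v : R, (v : MvPolynomial (Fin 2) k) = X 0 ^ f * X 1 ^ m :=
    ⟨⟨_, hR ▸ Algebra.subset_adjoin (by simp)⟩, rfl⟩
  have hgen : Algebra.adjoin k {xd, u, v, yn} = ⊤ := by
    subst hR
    rw [← Algebra.adjoin_adjoin_coe_preimage]
    congr 1
    ext z
    simp [Subtype.ext_iff, hxd, hyn, hu, hv]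
  refine finrank_le_of_adjoin_pair_eq_top (k := k) (B := R ⧸ Ideal.span {xd, yn})
    (adjoin_mk_eq_top_of_adjoin_eq_top hgen) fun i j hij => ?_
  subst hH
  set g₁ : ZMod d × ZMod n := ((e : ZMod d), (l : ZMod n))
  set g₂ : ZMod d × ZMod n := ((f : ZMod d), (m : ZMod n))
  obtain ⟨a, ha, b, hb, hab, hrel⟩ := AddSubgroup.exists_nsmul_add_nsmul_eq_zero
    (AddSubgroup.subset_closure (Set.mem_insert g₁ {g₂}))
    (AddSubgroup.subset_closure (Set.mem_insert_of_mem g₁ rfl)) hij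
  obtain ⟨c₁, c₂, hc⟩ :=
    pow_mul_pow_eq_of_nsmul_add_nsmul_eq_zero (X 0 : MvPolynomial (Fin 2) k) (X 1) hrel
  have hmon : u ^ a * v ^ b = xd ^ c₁ * yn ^ c₂ :=
    Subtype.ext (by simpa [hxd, hyn, hu, hv] using hc)
  refine ⟨a, ha, b, hb, hab, ?_⟩
  rw [← map_pow, ← map_pow, ← map_mul, hmon]
  exact mk_pow_mul_pow_mem_range c₁ c₂

/-- Let `R = k[x^d, x^e y^ℓ, x^f y^m, y^n]` and `H` the subgroup of `(ℤ/d) ⊕ (ℤ/n)`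
generated by `(e,ℓ)` and `(f,m)`.  Then
`dim_k R/(x^d, y^n) ≤ |H|(|H|+1)/2 ≤ dn(dn+1)/2`. -/
theorem stmt_14 (k : Type*) [Field k] (d n e f l m : ℕ) (hd : 0 < d) (hn : 0 < n)
    (hel : (e, l) ≠ (0, 0))
    (R : Subalgebra k (MvPolynomial (Fin 2) k))
    (hR : R = Algebra.adjoin k
      ({X 0 ^ d, X 0 ^ e * X 1 ^ l, X 0 ^ f * X 1 ^ m, X 1 ^ n} :
        Set (MvPolynomial (Fin 2) k)))
    (xd yn : R)
    (hxd : (xd : MvPolynomial (Fin 2) k) = X 0 ^ d)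
    (hyn : (yn : MvPolynomial (Fin 2) k) = X 1 ^ n)
    (H : AddSubgroup (ZMod d × ZMod n))
    (hH : H = AddSubgroup.closure {((e : ZMod d), (l : ZMod n)), ((f : ZMod d), (m : ZMod n))}) :
    Module.finrank k (R ⧸ (Ideal.span {xd, yn} : Ideal R))
      ≤ Nat.card H * (Nat.card H + 1) / 2 ∧
    Nat.card H * (Nat.card H + 1) / 2 ≤ d * n * (d * n + 1) / 2 :=
  stmt_14_general k d n e f l m hd hn R hR xd yn hxd hyn H hH
end

section
/- Let 0 < ℓ < m < n and d = gcd(ℓ,m,n). With a_2,b_2,c_2,a_3,b_3,c_3,a_1,b_1,c_1 the minimal solutions of b_2 m = a_2 ℓ + c_2 n (with n/gcd(ℓ,n) > a_2 ≥ 0, c_2 > 0, b_2 minimal positive), a_3 ℓ = b_3 m + c_3 n (with n/gcd(m,n) > b_3 ≥ 0, c_3 ≥ 0, a_3 minimal positive), and a_1 ℓ + b_1 m = c_1 n (with m/gcd(ℓ,m) ≥ a_1 > 0, b_1 > 0, c_1 minimal): then n = d(a_3 b_2 - a_2 b_3), m = d(a_3 c_2 + a_2 c_3), and ℓ = d(c_3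 b_2 + c_2 b_3). -/
lemma my_red (l n n1 : ℕ) (hn1 : 0 < n1) (hdvd : n ∣ n1 * l)
    (A : ℤ) (hA : 0 ≤ A) :
    ∃ A' k : ℤ, 0 ≤ A' ∧ A' < n1 ∧ 0 ≤ k ∧ A * l = A' * l + k * n := by
  obtain ⟨w, hw⟩ := hdvd
  refine ⟨A % (n1 : ℤ), (A / (n1:ℤ)) * (w:ℤ), Int.emod_nonneg _ (by positivity),
    Int.emod_lt_of_pos _ (by exact_mod_cast hn1), ?_, ?_⟩
  · have h1 : 0 ≤ A / (n1:ℤ) := Int.ediv_nonneg hA (by positivity)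
    positivity
  · have h2 : A % (n1:ℤ) = A - (n1:ℤ) * (A / (n1:ℤ)) := Int.emod_def A _
    have h3 : ((n1 : ℤ) * l) = (n:ℤ) * w := by exact_mod_cast congrArg (Nat.cast : ℕ → ℤ) hw
    linear_combination -(l:ℤ) * h2 + (A / (n1:ℤ)) * h3

lemma my_uniq (l n n1 : ℕ) (hl : 0 < l) (hn : 0 < n) (hn1 : Nat.gcd l n * n1 = n)
    (A A' : ℤ) (h : (n:ℤ) ∣ (A - A') * l) (hA : 0 ≤ A) (hA' : 0 ≤ A')
    (hAlt : A < n1) (hA'lt : A' < n1) : A = A' := by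
  set g := Nat.gcd l n with hg
  have hgpos : 0 < g := Nat.gcd_pos_of_pos_left _ hl
  obtain ⟨l1, hl1⟩ : g ∣ l := Nat.gcd_dvd_left _ _
  have hcop : Nat.Coprime l1 n1 := by
    have h1 : l / g = l1 := by rw [hl1]; exact Nat.mul_div_cancel_left _ hgpos
    have h2 : n / g = n1 := by rw [← hn1]; exact Nat.mul_div_cancel_left _ hgpos
    have := Nat.coprime_div_gcd_div_gcd (m := l) (n := n) hgpos
    rwa [h1, h2] at this
  have hdvd : (n1:ℤ) ∣ (A - A') * l1 := by
    have hne : (g:ℤ) ≠ 0 := by exact_mod_cast hgpos.ne'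
    have h3 : (n:ℤ) = (g:ℤ) * n1 := by exact_mod_cast hn1.symm
    have h4 : (l:ℤ) = (g:ℤ) * l1 := by exact_mod_cast hl1
    rw [h3, h4] at h
    obtain ⟨k, hk⟩ := h
    exact ⟨k, by apply mul_left_cancel₀ hne; linarith [hk]⟩
  have hdvd2 : (n1:ℤ) ∣ (A - A') := by
    have : IsCoprime (n1:ℤ) (l1:ℤ) := by
      rw [Int.isCoprime_iff_gcd_eq_one]
      exact_mod_cast hcop.symm
    exact this.dvd_of_dvd_mul_right hdvd
  obtain ⟨k, hk⟩ := hdvd2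
  have hn1pos : (0:ℤ) < n1 := by
    have h8 : 0 < n1 := by
      rcases Nat.eq_zero_or_pos n1 with h7|h7
      · subst h7; simp at hn1; omega
      · exact h7
    exact_mod_cast h8
  rcases lt_trichotomy k 0 with h6|h6|h6
  · have : (n1:ℤ) * k ≤ (n1:ℤ) * (-1) := mul_le_mul_of_nonneg_left (by omega) (by linarith)
    linarith
  · subst h6; linarith [hk]
  · have : (n1:ℤ) * 1 ≤ (n1:ℤ) * k := mul_le_mul_of_nonneg_left (by omega) (by linarith)
    linarith

lemma my_apply2 (l m n n1 b2 : ℕ) (hn1 : 0 < n1) (hdvd : n ∣ n1 * l)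
    (hmin2 : ∀ b' : ℕ, 0 < b' →
      (∃ a' c' : ℕ, a' < n1 ∧ 0 < c' ∧ b' * m = a' * l + c' * n) → b2 ≤ b')
    (B A C : ℤ) (hB : 0 < B) (hA : 0 ≤ A) (hC : 0 < C)
    (heq : B * (m:ℤ) = A * l + C * n) : (b2:ℤ) ≤ B := by
  obtain ⟨A', k, hA'0, hA'lt, hk0, hred⟩ := my_red l n n1 hn1 hdvd A hA
  set b' := B.toNat with hb'
  set a' := A'.toNat with ha'
  set c' := (C + k).toNat with hc'
  have e1 : (b' : ℤ) = B := Int.toNat_of_nonneg hB.le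
  have e2 : (a' : ℤ) = A' := Int.toNat_of_nonneg hA'0
  have e3 : (c' : ℤ) = C + k := Int.toNat_of_nonneg (by linarith)
  have heqn : b' * m = a' * l + c' * n := by
    have : ((b' * m : ℕ) : ℤ) = ((a' * l + c' * n : ℕ) : ℤ) := by
      push_cast
      rw [e1, e2, e3]
      linarith [heq, hred]
    exact_mod_cast this
  have h := hmin2 b' (by omega) ⟨a', c', by omega, by omega, heqn⟩
  calc (b2:ℤ) ≤ (b' : ℤ) := by exact_mod_cast h
    _ = B := e1

lemma my_apply3 (l m n n2 a3 : ℕ) (hn2 : 0 < n2) (hdvd : n ∣ n2 * m)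
    (hmin3 : ∀ a' : ℕ, 0 < a' →
      (∃ b' c' : ℕ, b' < n2 ∧ a' * l = b' * m + c' * n) → a3 ≤ a')
    (A B C : ℤ) (hA : 0 < A) (hB : 0 ≤ B) (hC : 0 ≤ C)
    (heq : A * (l:ℤ) = B * m + C * n) : (a3:ℤ) ≤ A := by
  obtain ⟨B', k, hB'0, hB'lt, hk0, hred⟩ := my_red m n n2 hn2 hdvd B hB
  set a' := A.toNat with ha'
  set b' := B'.toNat with hb'
  set c' := (C + k).toNat with hc'
  have e1 : (a' : ℤ) = A := Int.toNat_of_nonneg hA.le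
  have e2 : (b' : ℤ) = B' := Int.toNat_of_nonneg hB'0
  have e3 : (c' : ℤ) = C + k := Int.toNat_of_nonneg (by linarith)
  have heqn : a' * l = b' * m + c' * n := by
    have : ((a' * l : ℕ) : ℤ) = ((b' * m + c' * n : ℕ) : ℤ) := by
      push_cast
      rw [e1, e2, e3]
      linarith [heq, hred]
    exact_mod_cast this
  have h := hmin3 a' (by omega) ⟨b', c', by omega, heqn⟩
  calc (a3:ℤ) ≤ (a' : ℤ) := by exact_mod_cast h
    _ = A := e1

set_option maxHeartbeats 1000000 in
/-- Let `0 < ℓ < m < n`, `d = gcd(ℓ,m,n)`, and let `(a₁,b₁,c₁)`, `(a₂,b₂,c₂)`, `(a₃,b₃,c₃)`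
be the minimal solutions of `a₁ℓ + b₁m = c₁n`, `b₂m = a₂ℓ + c₂n`, `a₃ℓ = b₃m + c₃n` of the
projective monomial curve setup.  Then `n = d(a₃b₂ - a₂b₃)`, `m = d(a₃c₂ + a₂c₃)` and
`ℓ = d(c₃b₂ + c₂b₃)`. -/
theorem stmt_16
    (l m n : ℕ) (hl : 0 < l) (hlm : l < m) (hmn : m < n)
    (a1 b1 c1 a2 b2 c2 a3 b3 c3 : ℕ)
    -- `c₁` is minimal with `a₁ℓ + b₁m = c₁n`, `m/gcd(ℓ,m) ≥ a₁ > 0`, `b₁ > 0`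
    (ha1pos : 0 < a1) (ha1le : a1 ≤ m / Nat.gcd l m) (hb1pos : 0 < b1)
    (hrel1 : a1 * l + b1 * m = c1 * n)
    (hmin1 : ∀ a' b' c' : ℕ, 0 < a' → a' ≤ m / Nat.gcd l m → 0 < b' →
      a' * l + b' * m = c' * n → c1 ≤ c')
    -- `b₂` is the smallest positive integer with `b₂m = a₂ℓ + c₂n`,
    -- `n/gcd(ℓ,n) > a₂ ≥ 0`, `c₂ > 0`
    (hb2pos : 0 < b2) (ha2lt : a2 < n / Nat.gcd l n) (hc2pos : 0 < c2)
    (hrel2 : b2 * m = a2 * l + c2 * n)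
    (hmin2 : ∀ b' : ℕ, 0 < b' →
      (∃ a' c' : ℕ, a' < n / Nat.gcd l n ∧ 0 < c' ∧ b' * m = a' * l + c' * n) → b2 ≤ b')
    -- `a₃` is the smallest positive integer with `a₃ℓ = b₃m + c₃n`,
    -- `n/gcd(m,n) > b₃ ≥ 0`, `c₃ ≥ 0`
    (ha3pos : 0 < a3) (hb3lt : b3 < n / Nat.gcd m n)
    (hrel3 : a3 * l = b3 * m + c3 * n)
    (hmin3 : ∀ a' : ℕ, 0 < a' →
      (∃ b' c' : ℕ, b' < n / Nat.gcd m n ∧ a' * l = b' * m + c' * n) → a3 ≤ a')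
    :
    n = Nat.gcd l (Nat.gcd m n) * (a3 * b2 - a2 * b3) ∧
    m = Nat.gcd l (Nat.gcd m n) * (a3 * c2 + a2 * c3) ∧
    l = Nat.gcd l (Nat.gcd m n) * (c3 * b2 + c2 * b3) := by
  clear ha1pos ha1le hb1pos hrel1 hmin1
  have hm : 0 < m := lt_trans hl hlm
  have hn : 0 < n := lt_trans hm hmn
  -- integer versions of the relations
  have h2 : (b2:ℤ) * m = a2 * l + c2 * n := by exact_mod_cast hrel2
  have h3 : (a3:ℤ) * l = b3 * m + c3 * n := by exact_mod_cast hrel3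
  -- n1 and n2
  obtain ⟨n1, hn1eq⟩ : ∃ n1, n / Nat.gcd l n = n1 := ⟨_, rfl⟩
  obtain ⟨n2, hn2eq⟩ : ∃ n2, n / Nat.gcd m n = n2 := ⟨_, rfl⟩
  rw [hn1eq] at ha2lt hmin2
  rw [hn2eq] at hb3lt hmin3
  have hg1n : Nat.gcd l n * n1 = n := by
    rw [← hn1eq]; exact Nat.mul_div_cancel' (Nat.gcd_dvd_right l n)
  have hg2n : Nat.gcd m n * n2 = n := by
    rw [← hn2eq]; exact Nat.mul_div_cancel' (Nat.gcd_dvd_right m n)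
  have hn1pos : 0 < n1 := by
    rw [← hn1eq]
    exact Nat.div_pos (Nat.le_of_dvd hn (Nat.gcd_dvd_right l n)) (Nat.gcd_pos_of_pos_left _ hl)
  have hn2pos : 0 < n2 := by
    rw [← hn2eq]
    exact Nat.div_pos (Nat.le_of_dvd hn (Nat.gcd_dvd_right m n)) (Nat.gcd_pos_of_pos_left _ hm)
  have hdvd1 : n ∣ n1 * l := by
    obtain ⟨l1, hl1⟩ := Nat.gcd_dvd_left l n
    exact ⟨l1, by
      calc n1 * l = n1 * (Nat.gcd l n * l1) := by rw [← hl1]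
        _ = Nat.gcd l n * n1 * l1 := by ring
        _ = n * l1 := by rw [hg1n]⟩
  have hdvd2 : n ∣ n2 * m := by
    obtain ⟨m1, hm1⟩ := Nat.gcd_dvd_left m n
    exact ⟨m1, by
      calc n2 * m = n2 * (Nat.gcd m n * m1) := by rw [← hm1]
        _ = Nat.gcd m n * n2 * m1 := by ring
        _ = n * m1 := by rw [hg2n]⟩
  -- wrappers for minimality
  have AP2 : ∀ B A C : ℤ, 0 < B → 0 ≤ A → 0 < C → B * (m:ℤ) = A * l + C * n → (b2:ℤ) ≤ B :=
    fun B A C u1 u2 u3 u4 => my_apply2 l m n n1 b2 hn1pos hdvd1 hmin2 B A C u1 u2 u3 u4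
  have AP3 : ∀ A B C : ℤ, 0 < A → 0 ≤ B → 0 ≤ C → A * (l:ℤ) = B * m + C * n → (a3:ℤ) ≤ A :=
    fun A B C u1 u2 u3 u4 => my_apply3 l m n n2 a3 hn2pos hdvd2 hmin3 A B C u1 u2 u3 u4
  -- cast facts
  have ha2ltZ : (a2:ℤ) < n1 := by exact_mod_cast ha2lt
  have hb3ltZ : (b3:ℤ) < n2 := by exact_mod_cast hb3lt
  have ha2nn : (0:ℤ) ≤ (a2:ℤ) := by positivity
  have hb3nn : (0:ℤ) ≤ (b3:ℤ) := by positivity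
  have hc3nn : (0:ℤ) ≤ (c3:ℤ) := by positivity
  have hc2Z : (0:ℤ) < (c2:ℤ) := by exact_mod_cast hc2pos
  have ha3Z1 : (1:ℤ) ≤ (a3:ℤ) := by exact_mod_cast ha3pos
  have hb2Z1 : (1:ℤ) ≤ (b2:ℤ) := by exact_mod_cast hb2pos
  have hlz : (0:ℤ) < (l:ℤ) := by exact_mod_cast hl
  have hmz : (0:ℤ) < (m:ℤ) := by exact_mod_cast hm
  have hnz : (0:ℤ) < (n:ℤ) := by exact_mod_cast hn
  -- b3 < b2
  have hb3b2 : (b3:ℤ) < b2 := by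
    by_contra hcon
    push_neg at hcon
    have hid : ((a3:ℤ) - a2) * l = ((b3:ℤ) - b2) * m + ((c2:ℤ) + c3) * n := by
      linear_combination h3 + h2
    have t0 : (0:ℤ) ≤ ((b3:ℤ) - b2) * m := mul_nonneg (by linarith only [hcon]) hmz.le
    have t1 : (0:ℤ) < ((c2:ℤ) + c3) * n := mul_pos (by linarith only [hc2Z, hc3nn]) hnz
    have hApos : (0:ℤ) < (a3:ℤ) - a2 := by
      by_contra h7
      push_neg at h7
      have t2 : ((a3:ℤ) - a2) * l ≤ 0 := mul_nonpos_of_nonpos_of_nonneg h7 hlz.le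
      linarith only [hid, t0, t1, t2]
    have h8 := AP3 ((a3:ℤ) - a2) ((b3:ℤ) - b2) ((c2:ℤ) + c3) hApos
      (by linarith only [hcon]) (by linarith only [hc2Z, hc3nn]) hid
    have ha2z : (a2:ℤ) = 0 := by linarith only [h8, ha2nn]
    have huniq := my_uniq m n n2 hm hn hg2n (b3:ℤ) ((b3:ℤ) - b2)
      ⟨(c2:ℤ), by linear_combination h2 + (l:ℤ) * ha2z⟩
      hb3nn (by linarith only [hcon]) hb3ltZ (by linarith only [hb3ltZ, hb2Z1])
    linarith only [huniq, hb2Z1]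
  -- a2 < a3
  have ha2a3 : (a2:ℤ) < a3 := by
    by_contra hcon
    push_neg at hcon
    have hid : ((b2:ℤ) - b3) * m = ((a2:ℤ) - a3) * l + ((c2:ℤ) + c3) * n := by
      linear_combination h2 + h3
    have h8 := AP2 ((b2:ℤ) - b3) ((a2:ℤ) - a3) ((c2:ℤ) + c3) (by linarith only [hb3b2])
      (by linarith only [hcon]) (by linarith only [hc2Z, hc3nn]) hid
    have hb3z : (b3:ℤ) = 0 := by linarith only [h8, hb3nn]
    have huniq := my_uniq l n n1 hl hn hg1n (a2:ℤ) ((a2:ℤ) - a3)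
      ⟨(c3:ℤ), by linear_combination h3 + (m:ℤ) * hb3z⟩
      ha2nn (by linarith only [hcon]) ha2ltZ (by linarith only [ha2ltZ, ha3Z1])
    linarith only [huniq, ha3Z1]
  -- determinant quantities
  have idL : ((a3:ℤ) * b2 - a2 * b3) * l = ((c3:ℤ) * b2 + c2 * b3) * n := by
    linear_combination (b3:ℤ) * h2 + (b2:ℤ) * h3
  have idM : ((a3:ℤ) * b2 - a2 * b3) * m = ((a3:ℤ) * c2 + a2 * c3) * n := by
    linear_combination (a3:ℤ) * h2 + (a2:ℤ) * h3
  have hLposN : 0 < c3 * b2 + c2 * b3 := by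
    rcases Nat.eq_zero_or_pos b3 with hb | hb
    · rcases Nat.eq_zero_or_pos c3 with hcz | hcz
      · exfalso
        rw [hb, hcz] at hrel3
        simp at hrel3
        have := Nat.mul_pos ha3pos hl
        omega
      · have := Nat.mul_pos hcz hb2pos
        omega
    · have := Nat.mul_pos hc2pos hb
      omega
  have hLpos : (0:ℤ) < (c3:ℤ) * b2 + c2 * b3 := by exact_mod_cast hLposN
  have hNpos : (0:ℤ) < (a3:ℤ) * b2 - a2 * b3 := by
    by_contra h7
    push_neg at h7
    have h8 : ((a3:ℤ) * b2 - a2 * b3) * l ≤ 0 :=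
      mul_nonpos_of_nonpos_of_nonneg h7 hlz.le
    have h9 : (0:ℤ) < ((c3:ℤ) * b2 + c2 * b3) * n := mul_pos hLpos hnz
    linarith only [idL, h8, h9]
  -- key step: a relation with small positive coefficients forces lower bounds
  have step3 : ∀ x y c : ℤ, x * l + y * m = n * c → 1 ≤ x → x < a3 → 1 ≤ y → y < b2 →
      ((a3:ℤ) - a2 ≤ x ∧ (b2:ℤ) - b3 ≤ y) := by
    intro x y c hxy hx1 hx2 hy1 hy2
    constructor
    · rcases le_or_gt (c2:ℤ) c with hcc | hcc
      · have h8 := AP3 ((a2:ℤ) + x) ((b2:ℤ) - y) (c - c2) (by linarith only [ha2nn, hx1])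
          (by linarith only [hy2]) (by linarith only [hcc]) (by linear_combination hxy - h2)
        linarith only [h8]
      · exfalso
        have h8 := AP2 ((b2:ℤ) - y) ((a2:ℤ) + x) ((c2:ℤ) - c) (by linarith only [hy2])
          (by linarith only [ha2nn, hx1]) (by linarith only [hcc])
          (by linear_combination h2 - hxy)
        linarith only [h8, hy1]
    · rcases le_or_gt c (c3:ℤ) with hcc | hcc
      · exfalso
        have h8 := AP3 ((a3:ℤ) - x) ((b3:ℤ) + y) ((c3:ℤ) - c) (by linarith only [hx2])
          (by linarith only [hb3nn, hy1]) (by linarith only [hcc])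
          (by linear_combination h3 - hxy)
        linarith only [h8, hx1]
      · have h8 := AP2 ((b3:ℤ) + y) ((a3:ℤ) - x) (c - c3) (by linarith only [hb3nn, hy1])
          (by linarith only [hx2]) (by linarith only [hcc]) (by linear_combination hxy - h3)
        linarith only [h8]
  -- the main claim: every small lattice vector is in the span of v2, v3
  have claim : ∀ mu : ℕ, ∀ x y : ℤ, x.natAbs + y.natAbs ≤ mu → ((n:ℤ) ∣ x * l + y * m) →
      -(a2:ℤ) ≤ x → x < a3 → -(b3:ℤ) ≤ y → y < b2 →
      ∃ p q : ℤ, x = q * a3 - p * a2 ∧ y = p * b2 - q * b3 := by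
    intro mu
    induction mu with
    | zero =>
      intro x y hmu _ _ _ _ _
      have hx : x = 0 := by omega
      have hy : y = 0 := by omega
      exact ⟨0, 0, by simp [hx], by simp [hy]⟩
    | succ mu ih =>
      intro x y hmu hdvd hx1 hx2 hy1 hy2
      obtain ⟨c, hc⟩ := hdvd
      rcases le_or_gt x 0 with hx0 | hx0
      · rcases le_or_gt y 0 with hy0 | hy0
        · -- case 4 : x ≤ 0, y ≤ 0
          by_cases hxz : x = 0
          · by_cases hyz : y = 0
            · exact ⟨0, 0, by simp [hxz], by simp [hyz]⟩
            · exfalso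
              have hy' : y ≤ -1 := by omega
              have h9 : y * m = n * c := by linear_combination hc - (l:ℤ) * hxz
              have hcneg : (0:ℤ) < -c := by
                by_contra h7
                push_neg at h7
                have t1 : (0:ℤ) ≤ n * c := mul_nonneg hnz.le (by linarith only [h7])
                have t2 : y * m ≤ (-1) * m :=
                  mul_le_mul_of_nonneg_right (by linarith only [hy']) hmz.le
                linarith only [h9, t1, t2, hmz]
              have h8 := AP2 (-y) 0 (-c) (by linarith only [hy']) le_rfl hcneg
                (by linear_combination -hc + (l:ℤ) * hxz)
              linarith only [h8, hy1, hb3b2]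
          · by_cases hyz : y = 0
            · exfalso
              have hx' : x ≤ -1 := by omega
              have h9 : x * l = n * c := by linear_combination hc - (m:ℤ) * hyz
              have hcge : (0:ℤ) ≤ -c := by
                by_contra h7
                push_neg at h7
                have t1 : (0:ℤ) < n * c := mul_pos hnz (by linarith only [h7])
                have t2 : x * l ≤ (-1) * l :=
                  mul_le_mul_of_nonneg_right (by linarith only [hx']) hlz.le
                linarith only [h9, t1, t2, hlz]
              have h8 := AP3 (-x) 0 (-c) (by linarith only [hx']) le_rfl hcge
                (by linear_combination -hc + (m:ℤ) * hyz)
              linarith only [h8, hx1, ha2a3]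
            · have hx' : x ≤ -1 := by omega
              have hy' : y ≤ -1 := by omega
              obtain ⟨hsx, hsy⟩ := step3 (-x) (-y) (-c) (by linear_combination -hc)
                (by linarith only [hx']) (by linarith only [hx1, ha2a3])
                (by linarith only [hy']) (by linarith only [hy1, hb3b2])
              have ha1p : (1:ℤ) ≤ (a3:ℤ) - a2 := by linarith only [ha2a3]
              have hb1p : (1:ℤ) ≤ (b2:ℤ) - b3 := by linarith only [hb3b2]
              have hmu' : (-x - ((a3:ℤ) - a2)).natAbs + (-y - ((b2:ℤ) - b3)).natAbs ≤ mu := by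
                omega
              obtain ⟨p', q', hp', hq'⟩ := ih (-x - ((a3:ℤ) - a2)) (-y - ((b2:ℤ) - b3)) hmu'
                ⟨-c - c2 - c3, by linear_combination -hc - h2 - h3⟩
                (by linarith only [hsx, ha2nn]) (by linarith only [hx1, ha2a3])
                (by linarith only [hsy, hb3nn]) (by linarith only [hy1, hb3b2])
              exact ⟨-(p' + 1), -(q' + 1), by linarith only [hp'], by linarith only [hq']⟩
        · -- case 2 : x ≤ 0, y ≥ 1 : impossible
          exfalso
          rcases le_or_gt c 0 with hcle | hcpos
          · by_cases hxz : x = 0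
            · have h9 : y * m = n * c := by linear_combination hc - (l:ℤ) * hxz
              have t1 : n * c ≤ 0 := mul_nonpos_of_nonneg_of_nonpos hnz.le hcle
              have t2 : 1 * m ≤ y * m :=
                mul_le_mul_of_nonneg_right (by linarith only [hy0]) hmz.le
              linarith only [h9, t1, t2, hmz]
            · have hx' : x ≤ -1 := by omega
              have h8 := AP3 (-x) y (-c) (by linarith only [hx']) (by linarith only [hy0])
                (by linarith only [hcle]) (by linear_combination -hc)
              linarith only [h8, hx1, ha2a3]
          · have h8 := AP2 y (-x) c (by linarith only [hy0]) (by linarith only [hx0]) hcpos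
              (by linear_combination hc)
            linarith only [h8, hy2]
      · rcases le_or_gt y 0 with hy0 | hy0
        · -- case 1 : x ≥ 1, y ≤ 0 : impossible
          exfalso
          rcases le_or_gt 0 c with hcge | hcneg
          · have h8 := AP3 x (-y) c hx0 (by linarith only [hy0]) hcge
              (by linear_combination hc)
            linarith only [h8, hx2]
          · by_cases hyz : y = 0
            · have h9 : x * l = n * c := by linear_combination hc - (m:ℤ) * hyz
              have t1 : n * c ≤ n * (-1) :=
                mul_le_mul_of_nonneg_left (by linarith only [hcneg]) hnz.le
              have t2 : 1 * l ≤ x * l :=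
                mul_le_mul_of_nonneg_right (by linarith only [hx0]) hlz.le
              linarith only [h9, t1, t2, hlz, hnz]
            · have hy' : y ≤ -1 := by omega
              have h8 := AP2 (-y) x (-c) (by linarith only [hy']) (by linarith only [hx0])
                (by linarith only [hcneg]) (by linear_combination -hc)
              linarith only [h8, hy1, hb3b2]
        · -- case 3 : x ≥ 1, y ≥ 1 : descend
          obtain ⟨hsx, hsy⟩ := step3 x y c hc hx0 hx2 hy0 hy2
          have ha1p : (1:ℤ) ≤ (a3:ℤ) - a2 := by linarith only [ha2a3]
          have hb1p : (1:ℤ) ≤ (b2:ℤ) - b3 := by linarith only [hb3b2]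
          have hmu' : (x - ((a3:ℤ) - a2)).natAbs + (y - ((b2:ℤ) - b3)).natAbs ≤ mu := by
            omega
          obtain ⟨p', q', hp', hq'⟩ := ih (x - ((a3:ℤ) - a2)) (y - ((b2:ℤ) - b3)) hmu'
            ⟨c - c2 - c3, by linear_combination hc - h2 - h3⟩
            (by linarith only [hsx, ha2nn]) (by linarith only [hx2, ha1p])
            (by linarith only [hsy, hb3nn]) (by linarith only [hy2, hb1p])
          exact ⟨p' + 1, q' + 1, by linarith only [hp'], by linarith only [hq']⟩
  -- normalization : every lattice vector is in the span of v2, v3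
  have normalize : ∀ x y : ℤ, ((n:ℤ) ∣ x * l + y * m) →
      ∃ p q : ℤ, x = q * a3 - p * a2 ∧ y = p * b2 - q * b3 := by
    intro x y hdvd
    obtain ⟨c, hc⟩ := hdvd
    obtain ⟨p0, P', hP'0, hP'lt, hPeq⟩ :
        ∃ p0 P', 0 ≤ P' ∧ P' < (a3:ℤ) * b2 - a2 * b3 ∧
          (b3:ℤ) * x + a3 * y = ((a3:ℤ) * b2 - a2 * b3) * p0 + P' :=
      ⟨((b3:ℤ) * x + a3 * y) / ((a3:ℤ) * b2 - a2 * b3),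
       ((b3:ℤ) * x + a3 * y) % ((a3:ℤ) * b2 - a2 * b3),
       Int.emod_nonneg _ hNpos.ne', Int.emod_lt_of_pos _ hNpos,
       (Int.mul_ediv_add_emod _ _).symm⟩
    obtain ⟨q0, Q', hQ'0, hQ'lt, hQeq⟩ :
        ∃ q0 Q', 0 ≤ Q' ∧ Q' < (a3:ℤ) * b2 - a2 * b3 ∧
          (b2:ℤ) * x + a2 * y = ((a3:ℤ) * b2 - a2 * b3) * q0 + Q' :=
      ⟨((b2:ℤ) * x + a2 * y) / ((a3:ℤ) * b2 - a2 * b3),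
       ((b2:ℤ) * x + a2 * y) % ((a3:ℤ) * b2 - a2 * b3),
       Int.emod_nonneg _ hNpos.ne', Int.emod_lt_of_pos _ hNpos,
       (Int.mul_ediv_add_emod _ _).symm⟩
    have hNx : ((a3:ℤ) * b2 - a2 * b3) * (x - (q0 * a3 - p0 * a2)) = a3 * Q' - a2 * P' := by
      linear_combination (a3:ℤ) * hQeq - (a2:ℤ) * hPeq
    have hNy : ((a3:ℤ) * b2 - a2 * b3) * (y - (p0 * b2 - q0 * b3)) = b2 * P' - b3 * Q' := by
      linear_combination (b2:ℤ) * hPeq - (b3:ℤ) * hQeq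
    have hxlt : x - (q0 * a3 - p0 * a2) < a3 := by
      have t1 : (0:ℤ) ≤ (a3:ℤ) * ((a3:ℤ) * b2 - a2 * b3 - 1 - Q') :=
        mul_nonneg (by linarith only [ha3Z1]) (by linarith only [hQ'lt])
      have t2 : (0:ℤ) ≤ (a2:ℤ) * P' := mul_nonneg ha2nn hP'0
      have h9 : ((a3:ℤ) * b2 - a2 * b3) * (x - (q0 * a3 - p0 * a2)) <
          ((a3:ℤ) * b2 - a2 * b3) * a3 := by
        rw [hNx]
        nlinarith only [t1, t2, ha3Z1]
      exact lt_of_mul_lt_mul_left h9 (le_of_lt hNpos)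
    have hxge : -(a2:ℤ) ≤ x - (q0 * a3 - p0 * a2) := by
      have t1 : (0:ℤ) ≤ (a3:ℤ) * Q' := mul_nonneg (by linarith only [ha3Z1]) hQ'0
      have t2 : (0:ℤ) ≤ (a2:ℤ) * ((a3:ℤ) * b2 - a2 * b3 - P') :=
        mul_nonneg ha2nn (by linarith only [hP'lt])
      have h9 : ((a3:ℤ) * b2 - a2 * b3) * (-(a2:ℤ)) ≤
          ((a3:ℤ) * b2 - a2 * b3) * (x - (q0 * a3 - p0 * a2)) := by
        rw [hNx]
        nlinarith only [t1, t2]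
      exact le_of_mul_le_mul_left h9 hNpos
    have hylt : y - (p0 * b2 - q0 * b3) < b2 := by
      have t1 : (0:ℤ) ≤ (b2:ℤ) * ((a3:ℤ) * b2 - a2 * b3 - 1 - P') :=
        mul_nonneg (by linarith only [hb2Z1]) (by linarith only [hP'lt])
      have t2 : (0:ℤ) ≤ (b3:ℤ) * Q' := mul_nonneg hb3nn hQ'0
      have h9 : ((a3:ℤ) * b2 - a2 * b3) * (y - (p0 * b2 - q0 * b3)) <
          ((a3:ℤ) * b2 - a2 * b3) * b2 := by
        rw [hNy]
        nlinarith only [t1, t2, hb2Z1]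
      exact lt_of_mul_lt_mul_left h9 (le_of_lt hNpos)
    have hyge : -(b3:ℤ) ≤ y - (p0 * b2 - q0 * b3) := by
      have t1 : (0:ℤ) ≤ (b2:ℤ) * P' := mul_nonneg (by linarith only [hb2Z1]) hP'0
      have t2 : (0:ℤ) ≤ (b3:ℤ) * ((a3:ℤ) * b2 - a2 * b3 - Q') :=
        mul_nonneg hb3nn (by linarith only [hQ'lt])
      have h9 : ((a3:ℤ) * b2 - a2 * b3) * (-(b3:ℤ)) ≤
          ((a3:ℤ) * b2 - a2 * b3) * (y - (p0 * b2 - q0 * b3)) := by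
        rw [hNy]
        nlinarith only [t1, t2]
      exact le_of_mul_le_mul_left h9 hNpos
    have hdvd' : (n:ℤ) ∣ (x - (q0 * a3 - p0 * a2)) * l + (y - (p0 * b2 - q0 * b3)) * m :=
      ⟨c - q0 * c3 - p0 * c2, by linear_combination hc - q0 * h3 - p0 * h2⟩
    obtain ⟨p1, q1, hp1, hq1⟩ := claim
      ((x - (q0 * a3 - p0 * a2)).natAbs + (y - (p0 * b2 - q0 * b3)).natAbs)
      (x - (q0 * a3 - p0 * a2)) (y - (p0 * b2 - q0 * b3)) le_rfl hdvd' hxge hxlt hyge hylt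
    exact ⟨p0 + p1, q0 + q1, by linarith only [hp1], by linarith only [hq1]⟩
  -- final bookkeeping with d = gcd(l, m, n)
  set d := Nat.gcd l (Nat.gcd m n) with hd
  have hdpos : 0 < d := Nat.gcd_pos_of_pos_left _ hl
  obtain ⟨l', hl'⟩ : d ∣ l := Nat.gcd_dvd_left _ _
  obtain ⟨m', hm'⟩ : d ∣ m := dvd_trans (Nat.gcd_dvd_right _ _) (Nat.gcd_dvd_left m n)
  obtain ⟨n', hn'⟩ : d ∣ n := dvd_trans (Nat.gcd_dvd_right _ _) (Nat.gcd_dvd_right m n)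
  have hn'pos : 0 < n' := by
    rcases Nat.eq_zero_or_pos n' with h7 | h7
    · subst h7; simp at hn'; omega
    · exact h7
  have hcop : Nat.Coprime (Nat.gcd l' m') n' := by
    have h9 : d * Nat.gcd l' (Nat.gcd m' n') = d := by
      conv_rhs => rw [hd, hl', hm', hn']
      rw [Nat.gcd_mul_left, Nat.gcd_mul_left]
    have h10 : Nat.gcd l' (Nat.gcd m' n') = 1 :=
      Nat.eq_of_mul_eq_mul_left hdpos (h9.trans (mul_one d).symm)
    show Nat.gcd (Nat.gcd l' m') n' = 1
    rw [Nat.gcd_assoc]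
    exact h10
  have hltN : a2 * b3 < a3 * b2 := by
    have := hNpos
    have h9 : ((a2 * b3 : ℕ) : ℤ) < ((a3 * b2 : ℕ) : ℤ) := by push_cast; linarith only [this]
    exact_mod_cast h9
  have hNcast : ((a3 * b2 - a2 * b3 : ℕ) : ℤ) = (a3:ℤ) * b2 - a2 * b3 := by
    rw [Nat.cast_sub (le_of_lt hltN)]
    push_cast
    ring
  have hNnpos : 0 < a3 * b2 - a2 * b3 := by omega
  have idLn : (a3 * b2 - a2 * b3) * l = (c3 * b2 + c2 * b3) * n := by
    have h9 : ((a3 * b2 - a2 * b3 : ℕ) : ℤ) * l = ((c3 * b2 + c2 * b3 : ℕ) : ℤ) * n := by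
      rw [hNcast]
      push_cast
      linear_combination idL
    exact_mod_cast h9
  have idMn : (a3 * b2 - a2 * b3) * m = (a3 * c2 + a2 * c3) * n := by
    have h9 : ((a3 * b2 - a2 * b3 : ℕ) : ℤ) * m = ((a3 * c2 + a2 * c3 : ℕ) : ℤ) * n := by
      rw [hNcast]
      push_cast
      linear_combination idM
    exact_mod_cast h9
  -- n' divides the determinant
  have hdvdn' : n' ∣ a3 * b2 - a2 * b3 := by
    have hLl : (a3 * b2 - a2 * b3) * l' = (c3 * b2 + c2 * b3) * n' := by
      apply Nat.eq_of_mul_eq_mul_left hdpos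
      calc d * ((a3 * b2 - a2 * b3) * l') = (a3 * b2 - a2 * b3) * (d * l') := by ring
        _ = (a3 * b2 - a2 * b3) * l := by rw [← hl']
        _ = (c3 * b2 + c2 * b3) * n := idLn
        _ = (c3 * b2 + c2 * b3) * (d * n') := by rw [← hn']
        _ = d * ((c3 * b2 + c2 * b3) * n') := by ring
    have hMm : (a3 * b2 - a2 * b3) * m' = (a3 * c2 + a2 * c3) * n' := by
      apply Nat.eq_of_mul_eq_mul_left hdpos
      calc d * ((a3 * b2 - a2 * b3) * m') = (a3 * b2 - a2 * b3) * (d * m') := by ring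
        _ = (a3 * b2 - a2 * b3) * m := by rw [← hm']
        _ = (a3 * c2 + a2 * c3) * n := idMn
        _ = (a3 * c2 + a2 * c3) * (d * n') := by rw [← hn']
        _ = d * ((a3 * c2 + a2 * c3) * n') := by ring
    have d1 : n' ∣ (a3 * b2 - a2 * b3) * l' := ⟨c3 * b2 + c2 * b3, by rw [hLl, Nat.mul_comm]⟩
    have d2 : n' ∣ (a3 * b2 - a2 * b3) * m' := ⟨a3 * c2 + a2 * c3, by rw [hMm, Nat.mul_comm]⟩
    have d3 := Nat.dvd_gcd d1 d2
    rw [Nat.gcd_mul_left] at d3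
    exact Nat.Coprime.dvd_of_dvd_mul_right hcop.symm d3
  -- e2 and a Bezout identity for gcd(m', n')
  obtain ⟨e2, he2⟩ : ∃ e2, Nat.gcd m' n' = e2 := ⟨_, rfl⟩
  have hg2d : Nat.gcd m n = d * e2 := by rw [hm', hn', Nat.gcd_mul_left, he2]
  have hn'e : n' = e2 * n2 := by
    apply Nat.eq_of_mul_eq_mul_left hdpos
    calc d * n' = n := hn'.symm
      _ = Nat.gcd m n * n2 := hg2n.symm
      _ = d * (e2 * n2) := by rw [hg2d]; ring
  have hbez : (e2:ℤ) = (m':ℤ) * Int.gcdA m' n' + (n':ℤ) * Int.gcdB m' n' := by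
    have h9 := Int.gcd_eq_gcd_ab (m':ℤ) (n':ℤ)
    rw [Int.gcd_natCast_natCast, he2] at h9
    exact_mod_cast h9
  have hlZ : (l:ℤ) = (d:ℤ) * l' := by exact_mod_cast hl'
  have hmZ : (m:ℤ) = (d:ℤ) * m' := by exact_mod_cast hm'
  have hnZ : (n:ℤ) = (d:ℤ) * n' := by exact_mod_cast hn'
  -- the two generators of the congruence lattice lie in the span
  obtain ⟨p, q, hw2a, hw2b⟩ := normalize 0 (n2:ℤ) (by
    obtain ⟨w, hw⟩ := hdvd2
    refine ⟨(w:ℤ), ?_⟩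
    have h9 : ((n2 * m : ℕ) : ℤ) = ((n * w : ℕ) : ℤ) := by exact_mod_cast hw
    push_cast at h9
    linarith only [h9])
  obtain ⟨p', q', hw1a, hw1b⟩ := normalize (e2:ℤ) (-(Int.gcdA m' n' * l'))
    ⟨(l':ℤ) * Int.gcdB m' n', by
      linear_combination (e2:ℤ) * hlZ - (Int.gcdA m' n' * (l':ℤ)) * hmZ -
        ((l':ℤ) * Int.gcdB m' n') * hnZ + ((d:ℤ) * l') * hbez⟩
  -- determinant identity gives N ∣ n'
  have hdet : (e2:ℤ) * n2 = (q' * p - p' * q) * ((a3:ℤ) * b2 - a2 * b3) := by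
    linear_combination (n2:ℤ) * hw1a + ((q':ℤ) * a3 - (p':ℤ) * a2) * hw2b -
      ((p':ℤ) * b2 - (q':ℤ) * b3) * hw2a
  have hn'eZ : (n':ℤ) = (q' * p - p' * q) * ((a3:ℤ) * b2 - a2 * b3) := by
    have h9 : (n':ℤ) = (e2:ℤ) * n2 := by exact_mod_cast hn'e
    rw [h9, hdet]
  have hn'posZ : (0:ℤ) < n' := by exact_mod_cast hn'pos
  have hk1 : 1 ≤ q' * p - p' * q := by
    by_contra h7
    push_neg at h7
    have t1 : (q' * p - p' * q) * ((a3:ℤ) * b2 - a2 * b3) ≤ 0 :=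
      mul_nonpos_of_nonpos_of_nonneg (by linarith only [h7]) (le_of_lt hNpos)
    linarith only [hn'eZ, t1, hn'posZ]
  have hNlen' : ((a3:ℤ) * b2 - a2 * b3) ≤ n' := by
    have t1 : 1 * ((a3:ℤ) * b2 - a2 * b3) ≤ (q' * p - p' * q) * ((a3:ℤ) * b2 - a2 * b3) :=
      mul_le_mul_of_nonneg_right hk1 (le_of_lt hNpos)
    linarith only [hn'eZ, t1]
  have hfin : a3 * b2 - a2 * b3 = n' := by
    have h9 : a3 * b2 - a2 * b3 ≤ n' := by
      have h10 : ((a3 * b2 - a2 * b3 : ℕ) : ℤ) ≤ (n':ℤ) := by rw [hNcast]; exact hNlen'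
      exact_mod_cast h10
    have h10 : n' ≤ a3 * b2 - a2 * b3 := Nat.le_of_dvd hNnpos hdvdn'
    omega
  refine ⟨?_, ?_, ?_⟩
  · rw [hfin]
    exact hn'
  · apply Nat.eq_of_mul_eq_mul_left hn'pos
    calc n' * m = (a3 * b2 - a2 * b3) * m := by rw [hfin]
      _ = (a3 * c2 + a2 * c3) * n := idMn
      _ = (a3 * c2 + a2 * c3) * (d * n') := by rw [← hn']
      _ = n' * (d * (a3 * c2 + a2 * c3)) := by ring
  · apply Nat.eq_of_mul_eq_mul_left hn'pos
    calc n' * l = (a3 * b2 - a2 * b3) * l := by rw [hfin]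
      _ = (c3 * b2 + c2 * b3) * n := idLn
      _ = (c3 * b2 + c2 * b3) * (d * n') := by rw [← hn']
      _ = n' * (d * (c3 * b2 + c2 * b3)) := by ring
end
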